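/- arXiv:2209.10546 — 8 statements merged into one kernel-verified Lean document; each statement's English description precedes it below -/
import Mathlib

section
/- Let n ≥ 1 and let γ be the full n-cycle (1 2 … n) on {1,…,n}. Then for every permutation π of {1,…,n}, c(π) + c(π⁻¹∘γ) ≤ n + 1, where c(·) denotes the number of cycles (orbits, with fixed points counted). -/
section OrbitCount

open Equiv Equiv.Perm Function

variable {α : Type*} [Fintype α] [DecidableEq α]

/-- The number of orbits of a permutation, as the cardinality of the quotient by
the `SameCycle` relation. -/
noncomputable def orbCount (σ : Equiv.Perm α) : ℕ :=
  Nat.card (Quotient (Equiv.Perm.SameCycle.setoid σ))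

/-- A map which is injective except possibly for merging the classes of `p` and `q`
loses at most one from the cardinality. -/
lemma aux_card_le_card_add_one {A B : Type*} [Finite A] [Finite B] (f : A → B) (p q : A)
    (h : ∀ u v : A, f u = f v → u = v ∨ ((u = p ∨ u = q) ∧ (v = p ∨ v = q))) :
    Nat.card A ≤ Nat.card B + 1 := by
  classical
  have hinj : Function.Injective
      (fun u : A => if u = q then (Sum.inr () : B ⊕ Unit) else Sum.inl (f u)) := by
    intro u v huv
    by_cases hu : u = q <;> by_cases hv : v = q
    · exact hu.trans hv.symm
    · simp [hu, hv] at huv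
    · simp [hu, hv] at huv
    · simp only [hu, hv, if_neg, if_false] at huv
      rcases h u v (Sum.inl.inj huv) with h1 | ⟨h2, h3⟩
      · exact h1
      · rcases h2 with rfl | rfl
        · rcases h3 with rfl | h3
          · rfl
          · exact absurd h3 hv
        · exact absurd rfl hu
  calc Nat.card A ≤ Nat.card (B ⊕ Unit) := Nat.card_le_card_of_injective _ hinj
    _ = Nat.card B + 1 := by simp [Nat.card_sum]

/-- A surjective map which identifies two distinct points witnesses a strict
cardinality drop. -/
lemma aux_card_add_one_le_card {A B : Type*} [Finite A] (f : A → B)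
    (hf : Function.Surjective f) {u v : A} (hne : u ≠ v) (heq : f u = f v) :
    Nat.card B + 1 ≤ Nat.card A := by
  classical
  have hB : Finite B := Finite.of_surjective f hf
  set g := Function.surjInv hf with hg
  have hgi : Function.Injective g := Function.injective_surjInv hf
  have hfg : ∀ b, f (g b) = b := fun b => Function.surjInv_eq hf b
  set w : A := if g (f u) = u then v else u with hw
  have hwrange : ∀ b, g b ≠ w := by
    intro b hb
    have hfw : f w = f u := by
      by_cases h1 : g (f u) = u
      · rw [hw, if_pos h1]; exact heq.symm
      · rw [hw, if_neg h1]
    have hb' : b = f u := by rw [← hfg b, hb, hfw]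
    subst hb'
    by_cases h1 : g (f u) = u
    · rw [hw, if_pos h1] at hb; exact hne (h1.symm.trans hb)
    · rw [hw, if_neg h1] at hb; exact h1 hb
  have hinj : Function.Injective (Sum.elim g (fun _ : Unit => w)) := by
    intro x y hxy
    cases x <;> cases y <;> simp only [Sum.elim_inl, Sum.elim_inr] at hxy
    · rw [hgi hxy]
    · exact absurd hxy (hwrange _)
    · exact absurd hxy.symm (hwrange _)
    · exact congrArg _ (Subsingleton.elim _ _)
  calc Nat.card B + 1 = Nat.card (B ⊕ Unit) := by simp [Nat.card_sum]
    _ ≤ Nat.card A := Nat.card_le_card_of_injective _ hinj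

/-- If an equivalence relation `r` relates every point to its image under `σ`,
then it contains the `SameCycle` relation of `σ`. -/
lemma aux_sameCycle_subset {σ : Equiv.Perm α} {r : α → α → Prop} (hr : Equivalence r)
    (hstep : ∀ x, r x (σ x)) : ∀ {x y : α}, σ.SameCycle x y → r x y := by
  have key : ∀ (k : ℤ) (x : α), r x ((σ ^ k) x) := by
    intro k
    induction k using Int.induction_on with
    | zero => intro x; simpa using hr.refl x
    | succ k ih =>
      intro x
      have h1 : (σ ^ ((k : ℤ) + 1)) x = (σ ^ (k : ℤ)) (σ x) := by
        rw [zpow_add_one]; rfl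
      rw [h1]
      exact hr.trans (hstep x) (ih (σ x))
    | pred k ih =>
      intro x
      have h1 : (σ ^ (-(k : ℤ) - 1)) x = (σ ^ (-(k : ℤ))) (σ⁻¹ x) := by
        rw [zpow_sub_one]; rfl
      have h2 : r x (σ⁻¹ x) := by
        have := hstep (σ⁻¹ x)
        rw [show σ (σ⁻¹ x) = x from σ.apply_symm_apply x] at this
        exact hr.symm this
      rw [h1]
      exact hr.trans h2 (ih (σ⁻¹ x))
  rintro x y ⟨k, hk⟩
  exact hk ▸ key k x

/-- The induced map on quotients from an inclusion of setoids. -/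
def qmap (s t : Setoid α) (h : ∀ x y, s.r x y → t.r x y) : Quotient s → Quotient t :=
  Quotient.lift (fun x => Quotient.mk t x) fun x y hxy => Quot.sound (h x y hxy)

lemma qmap_surjective (s t : Setoid α) (h : ∀ x y, s.r x y → t.r x y) :
    Function.Surjective (qmap s t h) := fun q =>
  Quotient.inductionOn q fun x => ⟨Quotient.mk s x, rfl⟩

/-- Merge lemma: multiplying on the right by a transposition decreases the orbit
count by at most one. -/
lemma orbCount_le_mul_swap_add_one (σ : Equiv.Perm α) (a b : α) :
    orbCount σ ≤ orbCount (σ * Equiv.swap a b) + 1 := by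
  set σ' := σ * Equiv.swap a b with hσ'
  set S : α → α → Prop := fun x y => σ.SameCycle x y ∨ (σ.SameCycle x a ∧ σ.SameCycle b y)
    ∨ (σ.SameCycle x b ∧ σ.SameCycle a y) with hS
  have hrefl : ∀ x, S x x := fun x => Or.inl (Equiv.Perm.SameCycle.refl σ x)
  have hsymm : ∀ {x y}, S x y → S y x := by
    rintro x y (h | ⟨h1, h2⟩ | ⟨h1, h2⟩)
    · exact Or.inl h.symm
    · exact Or.inr (Or.inr ⟨h2.symm, h1.symm⟩)
    · exact Or.inr (Or.inl ⟨h2.symm, h1.symm⟩)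
  have htrans : ∀ {x y z}, S x y → S y z → S x z := by
    rintro x y z (h | ⟨h1, h2⟩ | ⟨h1, h2⟩) (h' | ⟨h1', h2'⟩ | ⟨h1', h2'⟩)
    · exact Or.inl (h.trans h')
    · exact Or.inr (Or.inl ⟨h.trans h1', h2'⟩)
    · exact Or.inr (Or.inr ⟨h.trans h1', h2'⟩)
    · exact Or.inr (Or.inl ⟨h1, h2.trans h'⟩)
    · exact Or.inl (h1.trans (((h2.trans h1').symm).trans h2'))
    · exact Or.inl (h1.trans h2')
    · exact Or.inr (Or.inr ⟨h1, h2.trans h'⟩)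
    · exact Or.inl (h1.trans h2')
    · exact Or.inl (h1.trans (((h2.trans h1').symm).trans h2'))
  have hSequiv : Equivalence S := ⟨hrefl, hsymm, htrans⟩
  set T : Setoid α := ⟨S, hSequiv⟩ with hT
  have hstep : ∀ x, S x (σ' x) := by
    intro x
    have happ : σ' x = σ (Equiv.swap a b x) := rfl
    rcases eq_or_ne x a with rfl | hxa
    · rw [happ, Equiv.swap_apply_left]
      exact Or.inr (Or.inl ⟨Equiv.Perm.SameCycle.refl σ x, ⟨1, by simp⟩⟩)
    rcases eq_or_ne x b with rfl | hxb
    · rw [happ, Equiv.swap_apply_right]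
      exact Or.inr (Or.inr ⟨Equiv.Perm.SameCycle.refl σ x, ⟨1, by simp⟩⟩)
    · rw [happ, Equiv.swap_apply_of_ne_of_ne hxa hxb]
      exact Or.inl ⟨1, by simp⟩
  have hSC' : ∀ {x y}, σ'.SameCycle x y → S x y := fun h => aux_sameCycle_subset hSequiv hstep h
  have h1 : Nat.card (Quotient T) ≤ orbCount σ' :=
    Nat.card_le_card_of_surjective _
      (qmap_surjective (Equiv.Perm.SameCycle.setoid σ') T fun x y h => hSC' h)
  have h2 : orbCount σ ≤ Nat.card (Quotient T) + 1 := by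
    apply aux_card_le_card_add_one
      (qmap (Equiv.Perm.SameCycle.setoid σ) T fun x y h => Or.inl h)
      (Quotient.mk _ a) (Quotient.mk _ b)
    intro u v huv
    obtain ⟨x, rfl⟩ := Quotient.exists_rep u
    obtain ⟨y, rfl⟩ := Quotient.exists_rep v
    have hxy : S x y := Quotient.exact huv
    rcases hxy with h | ⟨ha', hb'⟩ | ⟨ha', hb'⟩
    · exact Or.inl (Quotient.sound h)
    · exact Or.inr ⟨Or.inl (Quotient.sound ha'), Or.inr (Quotient.sound hb'.symm)⟩
    · exact Or.inr ⟨Or.inr (Quotient.sound ha'), Or.inl (Quotient.sound hb'.symm)⟩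
  omega

/-- Split lemma: cutting a moved point out of its cycle strictly increases the
orbit count. -/
lemma add_one_le_orbCount_swap_mul (ρ : Equiv.Perm α) (x : α) (hx : ρ x ≠ x) :
    orbCount ρ + 1 ≤ orbCount (Equiv.swap x (ρ x) * ρ) := by
  set ρ' := Equiv.swap x (ρ x) * ρ with hρ'
  have hstep : ∀ y, ρ.SameCycle y (ρ' y) := by
    intro y
    have happ : ρ' y = Equiv.swap x (ρ x) (ρ y) := rfl
    rcases eq_or_ne (ρ y) x with h1 | h1
    · rw [happ, h1, Equiv.swap_apply_left]
      have hy0 : ρ.SameCycle y (ρ y) := ⟨1, by simp⟩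
      have hy : ρ.SameCycle y (ρ (ρ y)) := hy0.trans ⟨1, by simp⟩
      rw [h1] at hy; exact hy
    rcases eq_or_ne (ρ y) (ρ x) with h2 | h2
    · have hyx : y = x := ρ.injective h2
      subst hyx
      rw [happ, Equiv.swap_apply_right]
    · rw [happ, Equiv.swap_apply_of_ne_of_ne h1 h2]
      exact ⟨1, by simp⟩
  have hSC : ∀ {y z}, ρ'.SameCycle y z → ρ.SameCycle y z :=
    fun h => aux_sameCycle_subset (Equiv.Perm.SameCycle.equivalence ρ) hstep h
  have hfix : ρ' x = x := by
    rw [hρ', Equiv.Perm.mul_apply, Equiv.swap_apply_right]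
  have hne : (Quotient.mk (Equiv.Perm.SameCycle.setoid ρ') x)
      ≠ (Quotient.mk (Equiv.Perm.SameCycle.setoid ρ') (ρ x)) := by
    intro h
    obtain ⟨k, hk⟩ : ρ'.SameCycle x (ρ x) := Quotient.exact h
    rw [Equiv.Perm.zpow_apply_eq_self_of_apply_eq_self hfix k] at hk
    exact hx hk.symm
  have heq : qmap (Equiv.Perm.SameCycle.setoid ρ') (Equiv.Perm.SameCycle.setoid ρ)
        (fun _ _ h => hSC h) (Quotient.mk _ x)
      = qmap (Equiv.Perm.SameCycle.setoid ρ') (Equiv.Perm.SameCycle.setoid ρ)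
        (fun _ _ h => hSC h) (Quotient.mk _ (ρ x)) :=
    Quotient.sound (⟨1, by simp⟩ : ρ.SameCycle x (ρ x))
  exact aux_card_add_one_le_card _
    (qmap_surjective (Equiv.Perm.SameCycle.setoid ρ') (Equiv.Perm.SameCycle.setoid ρ)
      (fun _ _ h => hSC h)) hne heq

lemma orbCount_one : orbCount (1 : Equiv.Perm α) = Fintype.card α := by
  have hbij : Function.Bijective
      (Quotient.mk (Equiv.Perm.SameCycle.setoid (1 : Equiv.Perm α))) := by
    constructor
    · intro a b h
      exact Equiv.Perm.sameCycle_one.mp (Quotient.exact h)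
    · exact fun q => Quotient.exists_rep q
  rw [orbCount, ← Nat.card_eq_fintype_card]
  exact (Nat.card_eq_of_bijective _ hbij).symm

/-- The orbit count agrees with the number of nontrivial cycles plus the number of
fixed points. -/
lemma orbCount_eq (σ : Equiv.Perm α) :
    orbCount σ = Multiset.card σ.cycleType
      + (Finset.univ.filter fun x => σ x = x).card := by
  set F := ({c // c ∈ σ.cycleFactorsFinset} ⊕ {x // σ x = x}) with hF
  set f : α → F := fun x =>
    if h : σ x = x then (Sum.inr ⟨x, h⟩ : F)
    else Sum.inl ⟨σ.cycleOf x,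
      Equiv.Perm.cycleOf_mem_cycleFactorsFinset_iff.2 (Equiv.Perm.mem_support.2 h)⟩ with hf
  have wf : ∀ x y : α, σ.SameCycle x y → f x = f y := by
    intro x y hxy
    by_cases hx : σ x = x
    · obtain ⟨k, hk⟩ := hxy
      have hyx : y = x := by
        rw [← hk, Equiv.Perm.zpow_apply_eq_self_of_apply_eq_self hx]
      subst hyx; rfl
    · by_cases hy : σ y = y
      · obtain ⟨k, hk⟩ := hxy.symm
        have hyx : x = y := by
          rw [← hk, Equiv.Perm.zpow_apply_eq_self_of_apply_eq_self hy]
        exact absurd (hyx ▸ hy) hx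
      · rw [hf]
        simp only [dif_neg hx, dif_neg hy]
        exact congrArg _ (Subtype.ext hxy.cycleOf_eq)
  set qf : Quotient (Equiv.Perm.SameCycle.setoid σ) → F := Quotient.lift f wf with hqf
  have hbij : Function.Bijective qf := by
    constructor
    · intro u v huv
      obtain ⟨a, rfl⟩ := Quotient.exists_rep u
      obtain ⟨b, rfl⟩ := Quotient.exists_rep v
      have hab : f a = f b := huv
      apply Quotient.sound
      by_cases ha : σ a = a <;> by_cases hb : σ b = b
      · rw [hf] at hab; simp only [dif_pos ha, dif_pos hb] at hab
        have : a = b := Subtype.ext_iff.mp (Sum.inr.inj hab)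
        exact this ▸ Equiv.Perm.SameCycle.refl σ a
      · rw [hf] at hab; simp only [dif_pos ha, dif_neg hb] at hab
        cases hab
      · rw [hf] at hab; simp only [dif_neg ha, dif_pos hb] at hab
        cases hab
      · rw [hf] at hab; simp only [dif_neg ha, dif_neg hb] at hab
        have hco : σ.cycleOf a = σ.cycleOf b := Subtype.ext_iff.mp (Sum.inl.inj hab)
        have hbmem : b ∈ (σ.cycleOf a).support := by
          rw [hco]
          exact (Equiv.Perm.mem_support_cycleOf_iff' hb).mpr
            (Equiv.Perm.SameCycle.refl σ b)
        exact (Equiv.Perm.mem_support_cycleOf_iff' ha).mp hbmem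
    · rintro (⟨c, hc⟩ | ⟨a, ha⟩)
      · have hcyc : c.IsCycle := (Equiv.Perm.mem_cycleFactorsFinset_iff.1 hc).1
        obtain ⟨a, hca, -⟩ := hcyc
        have hamem : a ∈ c.support := Equiv.Perm.mem_support.2 hca
        have hsa : σ a ≠ a := by
          have := (Equiv.Perm.mem_cycleFactorsFinset_iff.1 hc).2 a hamem
          rw [← this]; exact hca
        refine ⟨Quotient.mk _ a, ?_⟩
        have : qf (Quotient.mk _ a) = f a := rfl
        rw [this, hf]
        simp only [dif_neg hsa]
        exact congrArg _ (Subtype.ext (Equiv.Perm.cycle_is_cycleOf hamem hc).symm)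
      · exact ⟨Quotient.mk _ a, by simp only [hqf, Quotient.lift_mk, hf, dif_pos ha]⟩
  have hcard : orbCount σ = Nat.card F := Nat.card_eq_of_bijective qf hbij
  rw [hcard, hF, Nat.card_sum, Nat.card_eq_fintype_card, Nat.card_eq_fintype_card,
    Fintype.card_coe, Fintype.card_subtype, Equiv.Perm.cycleType_def, Multiset.card_map]
  rfl

/-- Subadditivity of the transposition distance: the key inequality. -/
lemma orbCount_add_orbCount_le :
    ∀ (N : ℕ) (ρ σ : Equiv.Perm α), ρ.support.card ≤ N →
      orbCount σ + orbCount ρ ≤ Fintype.card α + orbCount (σ * ρ) := by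
  intro N
  induction N with
  | zero =>
    intro ρ σ h
    have hρ : ρ = 1 := by
      rwa [Nat.le_zero, Finset.card_eq_zero, Equiv.Perm.support_eq_empty_iff] at h
    subst hρ
    rw [orbCount_one, mul_one]
    omega
  | succ N ih =>
    intro ρ σ h
    by_cases hρ : ρ = 1
    · subst hρ
      rw [orbCount_one, mul_one]
      omega
    · obtain ⟨x, hx⟩ : ∃ x, ρ x ≠ x := by
        by_contra h'
        push_neg at h'
        exact hρ (Equiv.ext fun y => by simp [h' y])
      have hcard : (Equiv.swap x (ρ x) * ρ).support.card ≤ N := by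
        have := Equiv.Perm.card_support_swap_mul (f := ρ) (x := x) hx
        omega
      have hIH := ih (Equiv.swap x (ρ x) * ρ) (σ * Equiv.swap x (ρ x)) hcard
      have hmul : σ * Equiv.swap x (ρ x) * (Equiv.swap x (ρ x) * ρ) = σ * ρ := by
        rw [mul_assoc, ← mul_assoc (Equiv.swap x (ρ x)), Equiv.swap_mul_self, one_mul]
      rw [hmul] at hIH
      have h1 := orbCount_le_mul_swap_add_one σ x (ρ x)
      have h2 := add_one_le_orbCount_swap_mul ρ x hx
      omega

end OrbitCount

/-- The number of cycles (orbits) of a permutation of `Fin n`, where fixed points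
count as cycles of length one. -/
def cycleCount {n : ℕ} (σ : Equiv.Perm (Fin n)) : ℕ :=
  σ.cycleType.card + (Finset.univ.filter fun x => σ x = x).card

lemma cycleCount_eq_orbCount {n : ℕ} (σ : Equiv.Perm (Fin n)) :
    cycleCount σ = orbCount σ := (orbCount_eq σ).symm

lemma orbCount_finRotate {n : ℕ} (hn : 1 ≤ n) : orbCount (finRotate n) = 1 := by
  match n, hn with
  | 1, _ =>
    have h1 : finRotate 1 = 1 := finRotate_one
    rw [h1, orbCount_one]
    simp
  | (m + 2), _ =>
    rw [orbCount_eq, cycleType_finRotate]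
    have hfix : (Finset.univ.filter fun x => finRotate (m + 2) x = x) = ∅ := by
      ext x
      simp only [Finset.mem_filter, Finset.mem_univ, true_and, Finset.notMem_empty,
        iff_false]
      have hx : x ∈ (finRotate (m + 2)).support := by
        rw [support_finRotate]; exact Finset.mem_univ x
      exact Equiv.Perm.mem_support.1 hx
    rw [hfix]
    simp

/-- For `n ≥ 1` and `γ = finRotate n` the full `n`-cycle `1 ↦ 2 ↦ ⋯ ↦ n ↦ 1`,
every permutation `π` of `{1,…,n}` satisfies `c(π) + c(π⁻¹ ∘ γ) ≤ n + 1`. -/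
theorem cycleCount_add_cycleCount_inv_mul_finRotate_le (n : ℕ) (hn : 1 ≤ n)
    (π : Equiv.Perm (Fin n)) :
    cycleCount π + cycleCount (π⁻¹ * finRotate n) ≤ n + 1 := by
  have hM := orbCount_add_orbCount_le (α := Fin n) (π⁻¹ * finRotate n).support.card
    (π⁻¹ * finRotate n) π le_rfl
  rw [mul_inv_cancel_left] at hM
  rw [cycleCount_eq_orbCount, cycleCount_eq_orbCount]
  rw [orbCount_finRotate hn] at hM
  rw [Fintype.card_fin] at hM
  omega
end

section
/- For all integers n ≥ 1 and 1 ≤ k ≤ n, the number of non-crossing partitions of {1,…,n} with exactly k blocks equals the Narayana number N(n,k) = (1/n)·binom(n,k)·binom(n,k−1). -/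
/-- `P` is a partition of `Fin n` (presented as its finite set of blocks):
every block is nonempty and every point lies in a unique block. -/
def IsPartitionOn (n : ℕ) (P : Finset (Finset (Fin n))) : Prop :=
  (∀ B ∈ P, B.Nonempty) ∧ ∀ x : Fin n, ∃! B, B ∈ P ∧ x ∈ B

/-- A family of blocks in a linearly ordered type is non-crossing if there are no
`a < b < c < d` with `a, c` in one block and `b, d` in a different block. -/
def IsNonCrossing {α : Type*} [LinearOrder α] (P : Finset (Finset α)) : Prop :=
  ¬ ∃ (a b c d : α) (B C : Finset α), B ∈ P ∧ C ∈ P ∧ B ≠ C ∧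
      a < b ∧ b < c ∧ c < d ∧ a ∈ B ∧ c ∈ B ∧ b ∈ C ∧ d ∈ C


section NarayanaProof
open Finset
open Fin.NatCast
variable {n : ℕ}

/-- number of elements of `S` in the cyclic window `r, r+1, …, r+m-1`. -/
def cw [NeZero n] (S : Finset (Fin n)) (r : Fin n) (m : ℕ) : ℕ :=
  ((Finset.range m).filter fun j : ℕ => r + (j : Fin n) ∈ S).card

lemma cw_zero [NeZero n] (S : Finset (Fin n)) (r : Fin n) : cw S r 0 = 0 := by
  simp [cw]

lemma cw_add [NeZero n] (S : Finset (Fin n)) (r : Fin n) (m₁ m₂ : ℕ) :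
    cw S r (m₁ + m₂) = cw S r m₁ + cw S (r + (m₁ : Fin n)) m₂ := by
  classical
  unfold cw
  rw [Finset.range_add, Finset.filter_union, Finset.card_union_of_disjoint, Finset.filter_map,
    Finset.card_map]
  · refine congrArg _ (congrArg Finset.card (Finset.filter_congr ?_))
    intro j _
    simp [Function.comp, add_assoc, addLeftEmbedding_apply]
  · refine Finset.disjoint_filter_filter ?_
    rw [Finset.disjoint_left]
    intro a ha hb
    rw [Finset.mem_map] at hb
    obtain ⟨b, hb1, hb2⟩ := hb
    rw [Finset.mem_range] at ha hb1
    rw [addLeftEmbedding_apply] at hb2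
    omega

lemma cw_one [NeZero n] (S : Finset (Fin n)) (r : Fin n) :
    cw S r 1 = if r ∈ S then 1 else 0 := by
  simp only [cw, Finset.range_one, Finset.filter_singleton]
  split <;> simp_all

lemma cw_succ [NeZero n] (S : Finset (Fin n)) (r : Fin n) (m : ℕ) :
    cw S r (m + 1) = cw S r m + if r + (m : Fin n) ∈ S then 1 else 0 := by
  rw [cw_add, cw_one]

lemma cw_n [NeZero n] (S : Finset (Fin n)) (r : Fin n) : cw S r n = S.card := by
  classical
  unfold cw
  refine Finset.card_bij' (fun j _ => r + (j : Fin n)) (fun s _ => ((s - r : Fin n) : ℕ)) ?_ ?_ ?_ ?_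
  · intro j hj; simp only [Finset.mem_filter] at hj; exact hj.2
  · intro s hs; simp [Fin.is_lt, hs]
  · intro j hj
    simp only [Finset.mem_filter, Finset.mem_range] at hj
    show ((r + (j:Fin n) - r : Fin n) : ℕ) = j
    have : r + (j : Fin n) - r = (j : Fin n) := by abel
    rw [this]
    exact Fin.val_cast_of_lt hj.1
  · intro s hs; simp

lemma cw_image_add [NeZero n] (S : Finset (Fin n)) (v r : Fin n) (m : ℕ) :
    cw (S.image (· + v)) r m = cw S (r - v) m := by
  classical
  unfold cw
  refine congrArg Finset.card (Finset.filter_congr ?_)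
  intro j _
  simp only [Finset.mem_image]
  constructor
  · rintro ⟨x, hx, hxe⟩
    have h := eq_sub_of_add_eq hxe
    have : r + (j:Fin n) - v = r - v + (j:Fin n) := by abel
    rwa [h, this] at hx
  · intro h2
    exact ⟨r - v + (j:Fin n), h2, by abel⟩

section CycleA
variable [NeZero n]
def Fz (S : Finset (Fin n)) (t : ℕ) : ℤ := (cw S 0 t : ℤ)

def Dz (A B : Finset (Fin n)) (t : ℕ) : ℤ := Fz A (t+1) - Fz B t

lemma Fz_add (S : Finset (Fin n)) (a b : ℕ) :
    Fz S (a + b) = Fz S a + (cw S (a : Fin n) b : ℤ) := by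
  unfold Fz
  rw [cw_add]
  push_cast
  rw [zero_add]

lemma Fz_succ (S : Finset (Fin n)) (t : ℕ) :
    Fz S (t + 1) = Fz S t + (if ((t : Fin n)) ∈ S then 1 else 0) := by
  rw [Fz_add, cw_one]
  split <;> simp

lemma Dz_period (A B : Finset (Fin n)) (t : ℕ) :
    Dz A B (t + n) = Dz A B t + (A.card : ℤ) - B.card := by
  unfold Dz
  have h1 : Fz A (t + n + 1) = Fz A (t+1) + A.card := by
    have : t + n + 1 = (t+1) + n := by ring
    rw [this, Fz_add, cw_n]
  have h2 : Fz B (t + n) = Fz B t + B.card := by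
    rw [Fz_add, cw_n]
  rw [h1, h2]; ring

/-- `s` is a strict-minimum position for the quasi-periodic walk `Dz A B`. -/
def SRM (A B : Finset (Fin n)) (s : ℕ) : Prop :=
  s < n ∧ ∀ t, s < t → t < s + n → Dz A B s < Dz A B t

lemma SRM_unique (A B : Finset (Fin n)) (hcard : (A.card : ℤ) = B.card + 1)
    {s₁ s₂ : ℕ} (h₁ : SRM A B s₁) (h₂ : SRM A B s₂) : s₁ = s₂ := by
  by_contra hne
  wlog hlt : s₁ < s₂ generalizing s₁ s₂
  · exact this h₂ h₁ (Ne.symm hne) (by omega)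
  have ha : Dz A B s₁ < Dz A B s₂ := h₁.2 s₂ hlt (by have := h₂.1; have := h₁.1; omega)
  have hb : Dz A B s₂ < Dz A B (s₁ + n) := h₂.2 (s₁ + n) (by have := h₂.1; omega) (by omega)
  rw [Dz_period, hcard] at hb
  omega

lemma SRM_exists (A B : Finset (Fin n)) (hcard : (A.card : ℤ) = B.card + 1) :
    ∃ s, SRM A B s := by
  have hn : 0 < n := Nat.pos_of_ne_zero (NeZero.ne n)
  have hne : ((Finset.range n).image (Dz A B)).Nonempty := by
    rw [Finset.image_nonempty, Finset.nonempty_range_iff]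
    omega
  set m := ((Finset.range n).image (Dz A B)).min' hne with hm
  have hfil : ((Finset.range n).filter fun t => Dz A B t = m).Nonempty := by
    obtain ⟨t, ht, hte⟩ := Finset.mem_image.mp (((Finset.range n).image (Dz A B)).min'_mem hne)
    exact ⟨t, Finset.mem_filter.mpr ⟨ht, hte⟩⟩
  set s := ((Finset.range n).filter fun t => Dz A B t = m).max' hfil with hsdef
  have hs_mem := ((Finset.range n).filter fun t => Dz A B t = m).max'_mem hfil
  rw [Finset.mem_filter, Finset.mem_range] at hs_mem
  obtain ⟨hs_lt, hs_val⟩ := hs_mem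
  refine ⟨s, hs_lt, ?_⟩
  intro t hst htn
  have hmin : ∀ u < n, m ≤ Dz A B u := by
    intro u hu
    exact Finset.min'_le _ _ (Finset.mem_image.mpr ⟨u, Finset.mem_range.mpr hu, rfl⟩)
  by_cases hcase : t < n
  · -- t ∈ (s, n): D t ≥ m and D t ≠ m by maximality of s
    have h1 : m ≤ Dz A B t := hmin t hcase
    have h2 : Dz A B t ≠ m := by
      intro heq
      have : t ≤ s := Finset.le_max' _ t (Finset.mem_filter.mpr ⟨Finset.mem_range.mpr hcase, heq⟩)
      omega
    rw [hs_val]; omega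
  · -- t ≥ n: D t = D (t - n) + 1 ≥ m + 1
    have ht' : t - n < n := by omega
    have hD : Dz A B t = Dz A B (t - n) + 1 := by
      have ht2 : t = (t - n) + n := by omega
      calc Dz A B t = Dz A B ((t-n) + n) := by rw [← ht2]
        _ = Dz A B (t-n) + 1 := by rw [Dz_period, hcard]; ring
    rw [hD]
    have := hmin (t - n) (by omega)
    rw [hs_val]; omega


/-- validity of an opener/closer pair -/
def IsValidPair (n k : ℕ) [NeZero n] (O Cl : Finset (Fin n)) : Prop :=
  O.card = k ∧ Cl.card = k ∧ ∀ x : Fin n, cw Cl 0 x < cw O 0 (x + 1)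

lemma natCast_pred_eq_neg_one (hn : 0 < n) : ((n - 1 : ℕ) : Fin n) = -1 := by
  have h : ((n - 1 : ℕ) : Fin n) + 1 = 0 := by
    have : ((n - 1 : ℕ) : Fin n) + ((1 : ℕ) : Fin n) = ((n - 1 + 1 : ℕ) : Fin n) := by
      rw [Nat.cast_add]
    rw [Nat.cast_one] at this
    rw [this, Nat.sub_add_cancel hn, Fin.natCast_self]
  exact eq_neg_of_add_eq_zero_left h

lemma val_neg_one (hn : 0 < n) : ((-1 : Fin n) : ℕ) = n - 1 := by
  rw [← natCast_pred_eq_neg_one hn]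
  exact Fin.val_cast_of_lt (by omega)

lemma cw_insert_neg_one (T : Finset (Fin n)) (m : ℕ) (hm : m < n) :
    cw (insert (-1) T) 0 m = cw T 0 m := by
  unfold cw
  refine congrArg Finset.card (Finset.filter_congr ?_)
  intro j hj
  rw [Finset.mem_range] at hj
  have hjn : j < n := by omega
  have hne : (0 : Fin n) + (j : Fin n) ≠ -1 := by
    rw [zero_add]
    intro h
    have := congrArg Fin.val h
    rw [Fin.val_cast_of_lt hjn, val_neg_one (by omega)] at this
    omega
  rw [zero_add] at hne ⊢
  simp only [Finset.mem_insert]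
  exact or_iff_right hne

lemma valid_neg_one_mem {k : ℕ} (hk : 1 ≤ k) (O Cl : Finset (Fin n))
    (h : IsValidPair n k O Cl) : (-1 : Fin n) ∈ Cl := by
  have hn : 0 < n := Nat.pos_of_ne_zero (NeZero.ne n)
  obtain ⟨hO, hCl, hdom⟩ := h
  have hx := hdom (-1)
  rw [val_neg_one hn] at hx
  have h1 : n - 1 + 1 = n := by omega
  rw [h1, cw_n] at hx
  have h2 : cw Cl 0 n = Cl.card := cw_n Cl 0
  have h3 : cw Cl 0 n = cw Cl 0 (n-1) + if (0 : Fin n) + ((n-1 : ℕ) : Fin n) ∈ Cl then 1 else 0 := by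
    rw [← cw_one, ← cw_add, h1]
  rw [zero_add, natCast_pred_eq_neg_one hn] at h3
  by_contra hmem
  rw [if_neg hmem] at h3
  omega

lemma key_iff {k : ℕ} (hk : 1 ≤ k) (hkn : k ≤ n) (A B : Finset (Fin n))
    (hA : A.card = k) (hB : B.card = k - 1) (s : ℕ) (hs : s < n) :
    SRM A B s ↔ IsValidPair n k (A.image (· + (-((s+1 : ℕ) : Fin n))))
      (insert (-1) (B.image (· + (-((s+1 : ℕ) : Fin n))))) := by
  have hn : 0 < n := Nat.pos_of_ne_zero (NeZero.ne n)
  set r : Fin n := ((s+1 : ℕ) : Fin n) with hr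
  set O := A.image (· + (-r)) with hOdef
  set Cl' := B.image (· + (-r)) with hCl'def
  have hcardz : (A.card : ℤ) = (B.card : ℤ) + 1 := by rw [hA, hB]; push_cast; omega
  have hO_card : O.card = k := by
    rw [hOdef, Finset.card_image_of_injective _ (add_left_injective (-r)), hA]
  have hCl'_card : Cl'.card = k - 1 := by
    rw [hCl'def, Finset.card_image_of_injective _ (add_left_injective (-r)), hB]
  have hr_sub_one : r - 1 = ((s : ℕ) : Fin n) := by
    rw [hr]
    have : ((s + 1 : ℕ) : Fin n) = ((s:ℕ) : Fin n) + 1 := by push_cast; ring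
    rw [this]; abel
  have hmem_iff : ((-1 : Fin n) ∈ Cl') ↔ ((s : ℕ) : Fin n) ∈ B := by
    rw [hCl'def]
    simp only [Finset.mem_image]
    constructor
    · rintro ⟨b, hb, hbe⟩
      have : b = r - 1 := by
        have := eq_sub_of_add_eq hbe
        rw [this]; abel
      rwa [this, hr_sub_one] at hb
    · intro hb
      exact ⟨((s:ℕ) : Fin n), hb, by rw [← hr_sub_one]; abel⟩
  have hCl_card_iff : (insert (-1 : Fin n) Cl').card = k ↔ ((s:ℕ) : Fin n) ∉ B := by
    constructor
    · intro hcard hsB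
      have h1 : insert (-1 : Fin n) Cl' = Cl' := Finset.insert_eq_self.mpr (hmem_iff.mpr hsB)
      rw [h1, hCl'_card] at hcard
      omega
    · intro hsB
      rw [Finset.card_insert_of_notMem (fun hm => hsB (hmem_iff.mp hm)), hCl'_card]
      omega
  have hcwO : ∀ m, cw O 0 m = cw A r m := by
    intro m; rw [hOdef, cw_image_add, zero_sub, neg_neg]
  have hcwCl' : ∀ m, cw Cl' 0 m = cw B r m := by
    intro m; rw [hCl'def, cw_image_add, zero_sub, neg_neg]
  have hwin : ∀ (S : Finset (Fin n)) (m : ℕ), (cw S r m : ℤ) = Fz S (s+1+m) - Fz S (s+1) := by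
    intro S m
    rw [Fz_add S (s+1) m, ← hr]
    ring
  -- main dominance rewriting, assuming ↑s ∉ B
  have hdom_iff : (((s:ℕ) : Fin n) ∉ B) →
      ((∀ x : Fin n, cw (insert (-1) Cl') 0 x < cw O 0 ((x:ℕ) + 1)) ↔
        (∀ x : ℕ, x < n → Dz A B s < Dz A B (s+1+x))) := by
    intro hsB
    have hDs : Dz A B s = Fz A (s+1) - Fz B (s+1) := by
      unfold Dz
      rw [Fz_succ B s, if_neg hsB]
      ring
    have hpt : ∀ x : ℕ, x < n →
        ((cw (insert (-1) Cl') 0 x < cw O 0 (x + 1)) ↔ Dz A B s < Dz A B (s+1+x)) := by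
      intro x hx
      rw [cw_insert_neg_one _ _ hx, hcwCl', hcwO]
      rw [show (cw B r x < cw A r (x+1)) ↔ ((cw B r x : ℤ) < (cw A r (x+1) : ℤ)) by exact_mod_cast Iff.rfl]
      rw [hwin, hwin, hDs]
      unfold Dz
      constructor <;> intro h
      · have : s + 1 + (x + 1) = (s + 1 + x) + 1 := by ring
        rw [this] at h
        omega
      · have : s + 1 + (x + 1) = (s + 1 + x) + 1 := by ring
        rw [this]
        omega
    constructor
    · intro h x hx
      exact (hpt x hx).mp (h ⟨x, hx⟩)
    · intro h x
      have := (hpt (x : ℕ) x.isLt).mpr (h (x:ℕ) x.isLt)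
      exact this
  constructor
  · rintro ⟨-, hsrm⟩
    -- step 1 : ↑s ∉ B
    have hsB : ((s:ℕ) : Fin n) ∉ B := by
      intro hsB
      by_cases hn1 : n = 1
      · -- then B = ∅
        have hBe : B = ∅ := Finset.card_eq_zero.mp (by rw [hB]; omega)
        rw [hBe] at hsB
        exact absurd hsB (Finset.notMem_empty _)
      · have h1 : Dz A B s < Dz A B (s+1) := hsrm (s+1) (by omega) (by omega)
        have h2 : Dz A B (s+1) = Dz A B s + (if ((s+1 : ℕ) : Fin n) ∈ A then 1 else 0) - 1 := by
          unfold Dz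
          rw [Fz_succ A (s+1), Fz_succ B s, if_pos hsB]
          ring
        rw [h2] at h1
        split at h1 <;> omega
    refine ⟨hO_card, hCl_card_iff.mpr hsB, ?_⟩
    rw [hdom_iff hsB]
    intro x hx
    by_cases hxe : x = n - 1
    · have : s + 1 + x = s + n := by omega
      rw [this, Dz_period, hcardz]
      omega
    · exact hsrm (s+1+x) (by omega) (by omega)
  · rintro ⟨-, hClk, hdom⟩
    have hsB : ((s:ℕ) : Fin n) ∉ B := hCl_card_iff.mp hClk
    rw [hdom_iff hsB] at hdom
    refine ⟨hs, ?_⟩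
    intro t hst htn
    have hx : t - (s+1) < n := by omega
    have := hdom (t - (s+1)) (by omega)
    have ht : s + 1 + (t - (s+1)) = t := by omega
    rwa [ht] at this

-- new material
open Classical in
noncomputable def theS (A B : Finset (Fin n)) : ℕ :=
  if h : ∃ s, SRM A B s then h.choose else 0

lemma theS_SRM (A B : Finset (Fin n)) (hcard : (A.card : ℤ) = B.card + 1) :
    SRM A B (theS A B) := by
  classical
  have h := SRM_exists A B hcard
  rw [theS]
  rw [dif_pos h]
  exact h.choose_spec

lemma theS_eq (A B : Finset (Fin n)) (hcard : (A.card : ℤ) = B.card + 1)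
    {s : ℕ} (hs : SRM A B s) : theS A B = s :=
  SRM_unique A B hcard (theS_SRM A B hcard) hs

lemma image_add_add (S : Finset (Fin n)) (v w : Fin n) :
    (S.image (· + v)).image (· + w) = S.image (· + (v + w)) := by
  rw [Finset.image_image]
  apply Finset.image_congr
  intro x _
  simp [Function.comp, add_assoc]

lemma image_add_neg_cancel (S : Finset (Fin n)) (v : Fin n) :
    (S.image (· + v)).image (· + (-v)) = S := by
  rw [image_add_add, add_neg_cancel]
  simp

lemma image_neg_add_cancel (S : Finset (Fin n)) (v : Fin n) :
    (S.image (· + (-v))).image (· + v) = S := by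
  rw [image_add_add, neg_add_cancel]
  simp

lemma cast_shift (r₀ : Fin n) : (((((r₀ : ℕ) + (n-1)) % n) + 1 : ℕ) : Fin n) = r₀ := by
  have hn : 0 < n := Nat.pos_of_ne_zero (NeZero.ne n)
  have hv : (r₀ : ℕ) < n := r₀.isLt
  apply Fin.ext
  rw [Fin.val_natCast]
  rcases Nat.eq_zero_or_pos (r₀ : ℕ) with h | h
  · rw [h, zero_add, Nat.mod_eq_of_lt (by omega : n - 1 < n), Nat.sub_add_cancel hn,
      Nat.mod_self]
  · have h1 : (r₀ : ℕ) + (n-1) = n + ((r₀:ℕ) - 1) := by omega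
    rw [h1, Nat.add_mod_left, Nat.mod_eq_of_lt (by omega : (r₀:ℕ) - 1 < n),
      Nat.sub_add_cancel h, Nat.mod_eq_of_lt hv]

open Classical in
noncomputable def VP (n k : ℕ) [NeZero n] : Finset (Finset (Fin n) × Finset (Fin n)) :=
  Finset.univ.filter fun p => IsValidPair n k p.1 p.2

lemma mem_VP {k : ℕ} (p : Finset (Fin n) × Finset (Fin n)) :
    p ∈ VP n k ↔ IsValidPair n k p.1 p.2 := by
  classical
  simp [VP]

lemma part2 {k : ℕ} (hk : 1 ≤ k) (hkn : k ≤ n) :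
    n * (VP n k).card = n.choose k * n.choose (k-1) := by
  classical
  have hn : 0 < n := Nat.pos_of_ne_zero (NeZero.ne n)
  have h1 : n * (VP n k).card = ((Finset.univ : Finset (Fin n)) ×ˢ VP n k).card := by
    rw [Finset.card_product, Finset.card_univ, Fintype.card_fin]
  have h2 : ((Finset.univ.powersetCard k : Finset (Finset (Fin n))) ×ˢ
      (Finset.univ.powersetCard (k-1) : Finset (Finset (Fin n)))).card
      = n.choose k * n.choose (k-1) := by
    rw [Finset.card_product, Finset.card_powersetCard, Finset.card_powersetCard,
      Finset.card_univ, Fintype.card_fin]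
  rw [h1, ← h2]
  refine Finset.card_bij'
    (fun p _ => (p.2.1.image (· + p.1), (p.2.2.erase (-1)).image (· + p.1)))
    (fun q _ =>
      ((((theS q.1 q.2 + 1 : ℕ)) : Fin n),
        (q.1.image (· + (-((theS q.1 q.2 + 1 : ℕ) : Fin n))),
         insert (-1) (q.2.image (· + (-((theS q.1 q.2 + 1 : ℕ) : Fin n)))))))
    ?_ ?_ ?_ ?_
  · -- maps into powersetCard product
    rintro ⟨r₀, O, Cl⟩ hp
    rw [Finset.mem_product] at hp
    have hval := (mem_VP _).mp hp.2
    obtain ⟨hO, hCl, -⟩ := hval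
    rw [Finset.mem_product]
    constructor
    · rw [Finset.mem_powersetCard_univ,
        Finset.card_image_of_injective _ (add_left_injective r₀), hO]
    · rw [Finset.mem_powersetCard_univ,
        Finset.card_image_of_injective _ (add_left_injective r₀),
        Finset.card_erase_of_mem (valid_neg_one_mem hk O Cl ((mem_VP _).mp hp.2)), hCl]
  · -- reverse maps into univ ×ˢ VP
    rintro ⟨A, B⟩ hq
    rw [Finset.mem_product, Finset.mem_powersetCard_univ, Finset.mem_powersetCard_univ] at hq
    obtain ⟨hA, hB⟩ := hq
    have hcard : (A.card : ℤ) = B.card + 1 := by rw [hA, hB]; push_cast; omega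
    have hsrm := theS_SRM A B hcard
    rw [Finset.mem_product]
    refine ⟨Finset.mem_univ _, ?_⟩
    rw [mem_VP]
    exact (key_iff hk hkn A B hA hB (theS A B) hsrm.1).mp hsrm
  · -- left inverse
    rintro ⟨r₀, O, Cl⟩ hp
    rw [Finset.mem_product] at hp
    have hval := (mem_VP _).mp hp.2
    have hneg1 : (-1 : Fin n) ∈ Cl := valid_neg_one_mem hk O Cl hval
    set A := O.image (· + r₀) with hAdef
    set B := (Cl.erase (-1)).image (· + r₀) with hBdef
    have hA : A.card = k := by
      rw [hAdef, Finset.card_image_of_injective _ (add_left_injective r₀), hval.1]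
    have hB : B.card = k - 1 := by
      rw [hBdef, Finset.card_image_of_injective _ (add_left_injective r₀),
        Finset.card_erase_of_mem hneg1, hval.2.1]
    have hcard : (A.card : ℤ) = B.card + 1 := by rw [hA, hB]; push_cast; omega
    set s₀ := ((r₀ : ℕ) + (n-1)) % n with hs₀def
    have hs₀lt : s₀ < n := Nat.mod_lt _ hn
    have hcast : (((s₀ + 1 : ℕ)) : Fin n) = r₀ := cast_shift r₀
    have hsrm : SRM A B s₀ := by
      rw [key_iff hk hkn A B hA hB s₀ hs₀lt, hcast]
      have e1 : A.image (· + (-r₀)) = O := by rw [hAdef, image_add_neg_cancel]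
      have e2 : B.image (· + (-r₀)) = Cl.erase (-1) := by rw [hBdef, image_add_neg_cancel]
      rw [e1, e2, Finset.insert_erase hneg1]
      exact hval
    have hts : theS A B = s₀ := theS_eq A B hcard hsrm
    show ((((theS A B + 1 : ℕ)) : Fin n),
        (A.image (· + (-((theS A B + 1 : ℕ) : Fin n))),
         insert (-1) (B.image (· + (-((theS A B + 1 : ℕ) : Fin n)))))) = (r₀, O, Cl)
    rw [hts, hcast]
    have e1 : A.image (· + (-r₀)) = O := by rw [hAdef, image_add_neg_cancel]
    have e2 : B.image (· + (-r₀)) = Cl.erase (-1) := by rw [hBdef, image_add_neg_cancel]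
    rw [e1, e2, Finset.insert_erase hneg1]
  · -- right inverse
    rintro ⟨A, B⟩ hq
    rw [Finset.mem_product, Finset.mem_powersetCard_univ, Finset.mem_powersetCard_univ] at hq
    obtain ⟨hA, hB⟩ := hq
    have hcard : (A.card : ℤ) = B.card + 1 := by rw [hA, hB]; push_cast; omega
    have hsrm := theS_SRM A B hcard
    have hval := (key_iff hk hkn A B hA hB (theS A B) hsrm.1).mp hsrm
    set r : Fin n := ((theS A B + 1 : ℕ) : Fin n) with hrdef
    have hnotmem : (-1 : Fin n) ∉ B.image (· + (-r)) := by
      intro hmem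
      have h1 : insert (-1 : Fin n) (B.image (· + (-r))) = B.image (· + (-r)) :=
        Finset.insert_eq_self.mpr hmem
      have h2 := hval.2.1
      rw [h1, Finset.card_image_of_injective _ (add_left_injective (-r)), hB] at h2
      omega
    show ((A.image (· + (-r))).image (· + r),
        ((insert (-1) (B.image (· + (-r)))).erase (-1)).image (· + r)) = (A, B)
    rw [Finset.erase_insert hnotmem, image_neg_add_cancel, image_neg_add_cancel]
end CycleA

section WalkA
variable [NeZero n]
-- ===== walk functions of a pair =====
def fW (O Cl : Finset (Fin n)) (t : ℕ) : ℤ := Fz O (t+1) - Fz Cl t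
def gW (O Cl : Finset (Fin n)) (t : ℕ) : ℤ := Fz O (t+1) - Fz Cl (t+1)

variable (O Cl : Finset (Fin n))

lemma gW_eq (t : ℕ) : gW O Cl t = fW O Cl t - (if ((t : Fin n)) ∈ Cl then 1 else 0) := by
  unfold gW fW
  rw [Fz_succ Cl t]
  ring

lemma fW_succ (t : ℕ) :
    fW O Cl (t+1) = gW O Cl t + (if (((t+1 : ℕ) : Fin n)) ∈ O then 1 else 0) := by
  unfold gW fW
  rw [Fz_succ O (t+1)]
  ring

lemma gW_le_fW (t : ℕ) : gW O Cl t ≤ fW O Cl t := by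
  rw [gW_eq]; split <;> omega


section Valid
variable {k : ℕ}

lemma fW_pos (hval : IsValidPair n k O Cl) (t : ℕ) (ht : t < n) : 1 ≤ fW O Cl t := by
  have h := hval.2.2 ⟨t, ht⟩
  unfold fW Fz
  simp only [Fin.val_mk] at h ⊢
  omega

lemma zero_mem_O (hval : IsValidPair n k O Cl) : (0 : Fin n) ∈ O ∧ fW O Cl 0 = 1 := by
  have hn : 0 < n := Nat.pos_of_ne_zero (NeZero.ne n)
  have h1 := fW_pos O Cl hval 0 hn
  have h2 : fW O Cl 0 = if ((0:ℕ) : Fin n) ∈ O then 1 else 0 := by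
    have e : Fz O 1 = Fz O 0 + (if ((0:ℕ) : Fin n) ∈ O then 1 else 0) := Fz_succ O 0
    unfold fW
    rw [zero_add, e]
    have e0 : Fz O 0 = 0 := by unfold Fz cw; simp
    have e1 : Fz Cl 0 = 0 := by unfold Fz cw; simp
    rw [e0, e1]; ring
  rw [Nat.cast_zero] at h2
  have hO : (0 : Fin n) ∈ O := by
    by_contra hO
    rw [if_neg hO] at h2
    omega
  exact ⟨hO, by rw [h2, if_pos hO]⟩

lemma last_mem_Cl (hval : IsValidPair n k O Cl) :
    (-1 : Fin n) ∈ Cl ∧ fW O Cl (n-1) = 1 ∧ gW O Cl (n-1) = 0 := by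
  have hn : 0 < n := Nat.pos_of_ne_zero (NeZero.ne n)
  have hFn : Fz O n = (k : ℤ) := by
    unfold Fz
    rw [cw_n O (0 : Fin n), hval.1]
  have hGn : Fz Cl n = (k : ℤ) := by
    unfold Fz
    rw [cw_n Cl (0 : Fin n), hval.2.1]
  have h1 : n - 1 + 1 = n := by omega
  have hg : gW O Cl (n-1) = 0 := by
    unfold gW
    rw [h1, hFn, hGn]; ring
  have hf : fW O Cl (n-1) = if (-1 : Fin n) ∈ Cl then 1 else 0 := by
    have e := gW_eq O Cl (n-1)
    rw [natCast_pred_eq_neg_one hn] at e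
    rw [hg] at e
    omega
  have hpos := fW_pos O Cl hval (n-1) (by omega)
  rw [hf] at hpos
  have hc : (-1 : Fin n) ∈ Cl := by
    by_contra hc
    rw [if_neg hc] at hpos
    omega
  exact ⟨hc, by rw [hf, if_pos hc], hg⟩

end Valid

end WalkA

section NRelPart
variable [NeZero n] (O Cl : Finset (Fin n))

def NSm (x y : Fin n) : Prop :=
  fW O Cl x = fW O Cl y ∧ ∀ z : Fin n, x ≤ z → z < y → fW O Cl x ≤ gW O Cl z

def NRel (x y : Fin n) : Prop :=
  x = y ∨ (x < y ∧ NSm O Cl x y) ∨ (y < x ∧ NSm O Cl y x)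

lemma rel_refl (x : Fin n) : NRel O Cl x x := Or.inl rfl

lemma rel_symm {x y : Fin n} (h : NRel O Cl x y) : NRel O Cl y x := by
  rcases h with h | h | h
  · exact Or.inl h.symm
  · exact Or.inr (Or.inr h)
  · exact Or.inr (Or.inl h)

lemma rel_of_sm {x y : Fin n} (hxy : x < y) (h : NSm O Cl x y) : NRel O Cl x y :=
  Or.inr (Or.inl ⟨hxy, h⟩)

lemma rel_trans {x y z : Fin n} (h1 : NRel O Cl x y) (h2 : NRel O Cl y z) :
    NRel O Cl x z := by
  rcases h1 with rfl | ⟨hxy, hf1, hi1⟩ | ⟨hyx, hf1, hi1⟩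
  · exact h2
  · rcases h2 with rfl | ⟨hyz, hf2, hi2⟩ | ⟨hzy, hf2, hi2⟩
    · exact Or.inr (Or.inl ⟨hxy, hf1, hi1⟩)
    · refine Or.inr (Or.inl ⟨lt_trans hxy hyz, hf1.trans hf2, ?_⟩)
      intro w hw1 hw2
      rcases lt_or_ge w y with h | h
      · exact hi1 w hw1 h
      · rw [hf1, hf2.symm] at *
        exact hi2 w h hw2
    · rcases lt_trichotomy x z with h | rfl | h
      · refine Or.inr (Or.inl ⟨h, hf1.trans hf2.symm, ?_⟩)
        intro w hw1 hw2
        exact hi1 w hw1 (lt_trans hw2 hzy)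
      · exact Or.inl rfl
      · refine Or.inr (Or.inr ⟨h, hf2.trans hf1.symm, ?_⟩)
        intro w hw1 hw2
        rw [hf2.trans hf1.symm, hf1, ← hf2]
        exact hi2 w hw1 (lt_trans hw2 hxy)
  · rcases h2 with rfl | ⟨hyz, hf2, hi2⟩ | ⟨hzy, hf2, hi2⟩
    · exact Or.inr (Or.inr ⟨hyx, hf1, hi1⟩)
    · rcases lt_trichotomy x z with h | rfl | h
      · refine Or.inr (Or.inl ⟨h, hf1.symm.trans hf2, ?_⟩)
        intro w hw1 hw2
        rw [← hf1, hf2] at *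
        exact hi2 w (le_of_lt (lt_of_lt_of_le hyx hw1)) hw2
      · exact Or.inl rfl
      · refine Or.inr (Or.inr ⟨h, hf2.symm.trans hf1, ?_⟩)
        intro w hw1 hw2
        rw [← hf2]
        exact hi1 w (le_of_lt (lt_of_lt_of_le hyz hw1)) hw2
    · refine Or.inr (Or.inr ⟨lt_trans hzy hyx, hf2.trans hf1, ?_⟩)
      intro w hw1 hw2
      rcases lt_or_ge w y with h | h
      · rw [hf2.trans hf1, ← hf1, ← hf2]
        exact hi2 w hw1 h
      · rw [hf2.trans hf1, ← hf1]
        exact hi1 w h hw2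
end NRelPart

section BlkPart
variable [NeZero n] (O Cl : Finset (Fin n))

open Classical in
noncomputable def blk (x : Fin n) : Finset (Fin n) :=
  Finset.univ.filter (NRel O Cl x)

open Classical in
noncomputable def PofV : Finset (Finset (Fin n)) :=
  Finset.univ.image (blk O Cl)

lemma mem_blk {x y : Fin n} : y ∈ blk O Cl x ↔ NRel O Cl x y := by
  classical
  simp [blk]

lemma self_mem_blk (x : Fin n) : x ∈ blk O Cl x :=
  (mem_blk O Cl).mpr (rel_refl O Cl x)

lemma blk_eq_of_nrel {x y : Fin n} (h : NRel O Cl x y) : blk O Cl x = blk O Cl y := by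
  apply Finset.ext
  intro w
  rw [mem_blk, mem_blk]
  exact ⟨fun hw => rel_trans O Cl (rel_symm O Cl h) hw, fun hw => rel_trans O Cl h hw⟩

lemma blk_mem_PofV (x : Fin n) : blk O Cl x ∈ PofV O Cl :=
  Finset.mem_image_of_mem _ (Finset.mem_univ x)

lemma mem_PofV {B : Finset (Fin n)} (hB : B ∈ PofV O Cl) : ∃ x, B = blk O Cl x := by
  obtain ⟨x, -, hx⟩ := Finset.mem_image.mp hB
  exact ⟨x, hx.symm⟩

lemma blk_eq_of_mem {B : Finset (Fin n)} {x : Fin n} (hB : B ∈ PofV O Cl) (hx : x ∈ B) :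
    B = blk O Cl x := by
  obtain ⟨w, rfl⟩ := mem_PofV O Cl hB
  exact blk_eq_of_nrel O Cl ((mem_blk O Cl).mp hx)

lemma PofV_isPartition : IsPartitionOn n (PofV O Cl) := by
  constructor
  · intro B hB
    obtain ⟨x, rfl⟩ := mem_PofV O Cl hB
    exact ⟨x, self_mem_blk O Cl x⟩
  · intro x
    refine ⟨blk O Cl x, ⟨blk_mem_PofV O Cl x, self_mem_blk O Cl x⟩, ?_⟩
    rintro B ⟨hB, hxB⟩
    exact blk_eq_of_mem O Cl hB hxB

lemma PofV_noncrossing : IsNonCrossing (PofV O Cl) := by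
  rintro ⟨a, b, c, d, B, C, hB, hC, hBC, hab, hbc, hcd, haB, hcB, hbC, hdC⟩
  have hBa : B = blk O Cl a := blk_eq_of_mem O Cl hB haB
  have hCb : C = blk O Cl b := blk_eq_of_mem O Cl hC hbC
  have hac : NRel O Cl a c := (mem_blk O Cl).mp (hBa ▸ hcB)
  have hbd : NRel O Cl b d := (mem_blk O Cl).mp (hCb ▸ hdC)
  have hsac : NSm O Cl a c := by
    rcases hac with rfl | h | h
    · exact absurd (lt_trans hab hbc) (lt_irrefl _)
    · exact h.2
    · exact absurd (lt_trans (lt_trans hab hbc) h.1) (lt_irrefl _)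
  have hsbd : NSm O Cl b d := by
    rcases hbd with rfl | h | h
    · exact absurd (lt_trans hbc hcd) (lt_irrefl _)
    · exact h.2
    · exact absurd (lt_trans (lt_trans hbc hcd) h.1) (lt_irrefl _)
  by_cases hfab : fW O Cl a = fW O Cl b
  · -- then a ~ b, contradicting B ≠ C
    have : NRel O Cl a b := by
      refine rel_of_sm O Cl hab ⟨hfab, ?_⟩
      intro z hz1 hz2
      exact hsac.2 z hz1 (lt_trans hz2 hbc)
    exact hBC (by rw [hBa, hCb, blk_eq_of_nrel O Cl this])
  · have h1 : fW O Cl a ≤ gW O Cl b := hsac.2 b (le_of_lt hab) hbc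
    have h2 : gW O Cl b ≤ fW O Cl b := gW_le_fW O Cl b
    have h3 : fW O Cl b ≤ gW O Cl c := hsbd.2 c (le_of_lt hbc) hcd
    have h4 : gW O Cl c ≤ fW O Cl c := gW_le_fW O Cl c
    rw [← hsac.1] at h4
    omega
end BlkPart

section Kpart
variable [NeZero n] (O Cl : Finset (Fin n))

/-- K1: an opener has no earlier element of its class. -/
lemma no_rel_lt_opener {o y : Fin n} (ho : o ∈ O) (hy : y < o) : ¬ NRel O Cl y o := by
  intro h
  have hsm : NSm O Cl y o := by
    rcases h with rfl | h | h
    · exact absurd hy (lt_irrefl _)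
    · exact h.2
    · exact absurd (lt_trans hy h.1) (lt_irrefl _)
  have hov : 1 ≤ (o : ℕ) := by
    have := hy
    rw [Fin.lt_def] at this
    omega
  set z : Fin n := ⟨(o:ℕ) - 1, by omega⟩ with hz
  have h1 : fW O Cl y ≤ gW O Cl z := by
    refine hsm.2 z ?_ ?_
    · rw [Fin.le_def]
      have := hy; rw [Fin.lt_def] at this
      simp only [hz]
      omega
    · rw [Fin.lt_def]
      simp only [hz]
      omega
  have h2 : fW O Cl ((o:ℕ) - 1 + 1) =
      gW O Cl ((o:ℕ) - 1) + (if ((((o:ℕ) - 1 + 1 : ℕ)) : Fin n) ∈ O then 1 else 0) :=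
    fW_succ O Cl _
  have h3 : (o:ℕ) - 1 + 1 = (o:ℕ) := by omega
  rw [h3, Fin.cast_val_eq_self, if_pos ho] at h2
  have h4 : (z : ℕ) = (o:ℕ) - 1 := rfl
  rw [hsm.1] at h1
  rw [h4] at h1
  omega

/-- K3: a closer has no later element of its class. -/
lemma no_rel_gt_closer {c y : Fin n} (hc : c ∈ Cl) (hy : c < y) : ¬ NRel O Cl c y := by
  intro h
  have hsm : NSm O Cl c y := by
    rcases h with rfl | h | h
    · exact absurd hy (lt_irrefl _)
    · exact h.2
    · exact absurd (lt_trans hy h.1) (lt_irrefl _)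
  have h1 : fW O Cl c ≤ gW O Cl c := hsm.2 c (le_refl c) hy
  have h2 : gW O Cl (c:ℕ) = fW O Cl (c:ℕ) - (if (((c:ℕ) : ℕ) : Fin n) ∈ Cl then 1 else 0) :=
    gW_eq O Cl (c:ℕ)
  rw [Fin.cast_val_eq_self, if_pos hc] at h2
  omega

variable {k : ℕ}

/-- K2: a non-opener has an earlier element of its class. -/
lemma exists_rel_lt (hval : IsValidPair n k O Cl) {x : Fin n} (hx : x ∉ O) :
    ∃ y, y < x ∧ NRel O Cl y x := by
  have hn : 0 < n := Nat.pos_of_ne_zero (NeZero.ne n)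
  have hx0 : (x : ℕ) ≠ 0 := by
    intro h
    have : x = 0 := Fin.ext (by simpa using h)
    rw [this] at hx
    exact hx (zero_mem_O O Cl hval).1
  have hfx : 1 ≤ fW O Cl x := fW_pos O Cl hval x x.isLt
  set J := (Finset.range (x:ℕ)).filter (fun j => fW O Cl j ≤ fW O Cl (x:ℕ)) with hJ
  have hJne : J.Nonempty := by
    refine ⟨0, Finset.mem_filter.mpr ⟨Finset.mem_range.mpr (by omega), ?_⟩⟩
    rw [(zero_mem_O O Cl hval).2]
    exact hfx
  set y' := J.max' hJne with hy'
  have hy'mem := J.max'_mem hJne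
  rw [Finset.mem_filter, Finset.mem_range] at hy'mem
  obtain ⟨hy'lt, hy'f⟩ := hy'mem
  rw [← hy'] at hy'lt hy'f
  have hgt : ∀ j, y' < j → j < (x:ℕ) → fW O Cl (x:ℕ) + 1 ≤ fW O Cl j := by
    intro j h1 h2
    by_contra hcon
    have : j ∈ J := Finset.mem_filter.mpr ⟨Finset.mem_range.mpr h2, by omega⟩
    have := Finset.le_max' J j this
    omega
  -- step analysis at y'
  have hstep : fW O Cl (y'+1) = gW O Cl y' + (if (((y'+1 : ℕ)) : Fin n) ∈ O then 1 else 0) :=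
    fW_succ O Cl y'
  have hgle : gW O Cl y' ≤ fW O Cl y' := gW_le_fW O Cl y'
  have hkey : fW O Cl y' = fW O Cl (x:ℕ) ∧ fW O Cl (x:ℕ) ≤ gW O Cl y' := by
    by_cases hca : y' + 1 = (x:ℕ)
    · rw [hca, Fin.cast_val_eq_self, if_neg hx] at hstep
      constructor <;> omega
    · have h5 : fW O Cl (x:ℕ) + 1 ≤ fW O Cl (y'+1) := hgt (y'+1) (by omega) (by omega)
      have h6 : fW O Cl (y'+1) ≤ gW O Cl y' + 1 := by
        rw [hstep]; split <;> omega
      constructor <;> omega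
  refine ⟨⟨y', by omega⟩, by rw [Fin.lt_def]; exact hy'lt, ?_⟩
  refine rel_of_sm O Cl (by rw [Fin.lt_def]; exact hy'lt) ⟨hkey.1, ?_⟩
  intro z hz1 hz2
  rw [Fin.le_def] at hz1
  rw [Fin.lt_def] at hz2
  simp only [Fin.val_mk] at hz1
  rcases Nat.eq_or_lt_of_le hz1 with h | h
  · have : (z : ℕ) = y' := h.symm
    rw [this, hkey.1]
    exact hkey.2
  · have h7 : fW O Cl (x:ℕ) + 1 ≤ fW O Cl (z:ℕ) := hgt (z:ℕ) h hz2
    have h8 : fW O Cl (z:ℕ) - 1 ≤ gW O Cl (z:ℕ) := by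
      have := gW_eq O Cl (z:ℕ)
      split at this <;> omega
    rw [hkey.1]
    omega

/-- K4: a non-closer has a later element of its class. -/
lemma exists_rel_gt (hval : IsValidPair n k O Cl) {x : Fin n} (hx : x ∉ Cl) :
    ∃ y, x < y ∧ NRel O Cl x y := by
  have hn : 0 < n := Nat.pos_of_ne_zero (NeZero.ne n)
  have hxlast : (x : ℕ) ≠ n - 1 := by
    intro h
    have : x = -1 := by
      rw [← natCast_pred_eq_neg_one hn, ← h, Fin.cast_val_eq_self]
    rw [this] at hx
    exact hx (last_mem_Cl O Cl hval).1
  have hfx : 1 ≤ fW O Cl x := fW_pos O Cl hval x x.isLt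
  set J := (Finset.range n).filter (fun j => (x:ℕ) < j ∧ fW O Cl j ≤ fW O Cl (x:ℕ)) with hJ
  have hxn : (x:ℕ) < n - 1 := by have := x.isLt; omega
  have hJne : J.Nonempty := by
    refine ⟨n-1, Finset.mem_filter.mpr ⟨Finset.mem_range.mpr (by omega), hxn, ?_⟩⟩
    rw [(last_mem_Cl O Cl hval).2.1]
    exact hfx
  set y' := J.min' hJne with hy'
  have hy'mem := J.min'_mem hJne
  rw [Finset.mem_filter, Finset.mem_range] at hy'mem
  obtain ⟨hy'n, hy'gt, hy'f⟩ := hy'mem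
  rw [← hy'] at hy'n hy'gt hy'f
  have hlt : ∀ j, (x:ℕ) < j → j < y' → fW O Cl (x:ℕ) + 1 ≤ fW O Cl j := by
    intro j h1 h2
    by_contra hcon
    have : j ∈ J := Finset.mem_filter.mpr ⟨Finset.mem_range.mpr (by omega), h1, by omega⟩
    have := Finset.min'_le J j this
    omega
  have hgx : gW O Cl (x:ℕ) = fW O Cl (x:ℕ) := by
    have := gW_eq O Cl (x:ℕ)
    rw [Fin.cast_val_eq_self, if_neg hx] at this
    omega
  -- step into y'
  have hy'pos : 1 ≤ y' := by omega
  have hstep : fW O Cl (y'-1+1) = gW O Cl (y'-1) +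
      (if (((y'-1+1 : ℕ)) : Fin n) ∈ O then 1 else 0) := fW_succ O Cl (y'-1)
  have h9 : y' - 1 + 1 = y' := by omega
  rw [h9] at hstep
  have hkey : fW O Cl y' = fW O Cl (x:ℕ) := by
    have hglow : fW O Cl (x:ℕ) ≤ gW O Cl (y'-1) := by
      rcases Nat.eq_or_lt_of_le (by omega : (x:ℕ) ≤ y' - 1) with h | h
      · rw [← h, hgx]
      · have h10 : fW O Cl (x:ℕ) + 1 ≤ fW O Cl (y'-1) := hlt (y'-1) h (by omega)
        have := gW_eq O Cl (y'-1)
        split at this <;> omega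
    have : fW O Cl (x:ℕ) ≤ fW O Cl y' := by
      rw [hstep]; split <;> omega
    omega
  refine ⟨⟨y', hy'n⟩, by rw [Fin.lt_def]; exact hy'gt, ?_⟩
  refine rel_of_sm O Cl (by rw [Fin.lt_def]; exact hy'gt) ⟨hkey.symm, ?_⟩
  intro z hz1 hz2
  rw [Fin.le_def] at hz1
  rw [Fin.lt_def] at hz2
  simp only [Fin.val_mk] at hz2
  rcases Nat.eq_or_lt_of_le hz1 with h | h
  · rw [← h, hgx]
  · have h7 : fW O Cl (x:ℕ) + 1 ≤ fW O Cl (z:ℕ) := hlt (z:ℕ) h hz2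
    have h8 : fW O Cl (z:ℕ) - 1 ≤ gW O Cl (z:ℕ) := by
      have := gW_eq O Cl (z:ℕ)
      split at this <;> omega
    omega
end Kpart

section BminPart
variable [NeZero n]

def bmin (B : Finset (Fin n)) : Fin n := if h : B.Nonempty then B.min' h else 0
def bmax (B : Finset (Fin n)) : Fin n := if h : B.Nonempty then B.max' h else 0

lemma bmin_mem {B : Finset (Fin n)} (h : B.Nonempty) : bmin B ∈ B := by
  rw [bmin, dif_pos h]; exact B.min'_mem h

lemma bmax_mem {B : Finset (Fin n)} (h : B.Nonempty) : bmax B ∈ B := by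
  rw [bmax, dif_pos h]; exact B.max'_mem h

lemma bmin_le {B : Finset (Fin n)} {y : Fin n} (hy : y ∈ B) : bmin B ≤ y := by
  rw [bmin, dif_pos ⟨y, hy⟩]; exact B.min'_le y hy

lemma le_bmax {B : Finset (Fin n)} {y : Fin n} (hy : y ∈ B) : y ≤ bmax B := by
  rw [bmax, dif_pos ⟨y, hy⟩]; exact B.le_max' y hy

variable (O Cl : Finset (Fin n)) {k : ℕ}

lemma PofV_openers (hval : IsValidPair n k O Cl) : (PofV O Cl).image bmin = O := by
  apply Finset.ext
  intro m
  rw [Finset.mem_image]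
  constructor
  · rintro ⟨B, hB, rfl⟩
    obtain ⟨x, rfl⟩ := mem_PofV O Cl hB
    have hne : (blk O Cl x).Nonempty := ⟨x, self_mem_blk O Cl x⟩
    by_contra hO
    obtain ⟨y, hy1, hy2⟩ := exists_rel_lt O Cl hval hO
    have : y ∈ blk O Cl x := by
      rw [mem_blk]
      exact rel_trans O Cl ((mem_blk O Cl).mp (bmin_mem hne)) (rel_symm O Cl hy2)
    have := bmin_le this
    exact absurd (lt_of_le_of_lt this hy1) (lt_irrefl _)
  · intro ho
    refine ⟨blk O Cl m, blk_mem_PofV O Cl m, ?_⟩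
    have hne : (blk O Cl m).Nonempty := ⟨m, self_mem_blk O Cl m⟩
    have h1 : bmin (blk O Cl m) ≤ m := bmin_le (self_mem_blk O Cl m)
    have h2 : NRel O Cl m (bmin (blk O Cl m)) := (mem_blk O Cl).mp (bmin_mem hne)
    rcases lt_or_eq_of_le h1 with h | h
    · exact absurd (rel_symm O Cl h2) (no_rel_lt_opener O Cl ho h)
    · exact h

lemma PofV_closers (hval : IsValidPair n k O Cl) : (PofV O Cl).image bmax = Cl := by
  apply Finset.ext
  intro m
  rw [Finset.mem_image]
  constructor
  · rintro ⟨B, hB, rfl⟩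
    obtain ⟨x, rfl⟩ := mem_PofV O Cl hB
    have hne : (blk O Cl x).Nonempty := ⟨x, self_mem_blk O Cl x⟩
    by_contra hC
    obtain ⟨y, hy1, hy2⟩ := exists_rel_gt O Cl hval hC
    have : y ∈ blk O Cl x := by
      rw [mem_blk]
      exact rel_trans O Cl ((mem_blk O Cl).mp (bmax_mem hne)) hy2
    have := le_bmax this
    exact absurd (lt_of_le_of_lt this hy1) (lt_irrefl _)
  · intro hc
    refine ⟨blk O Cl m, blk_mem_PofV O Cl m, ?_⟩
    have hne : (blk O Cl m).Nonempty := ⟨m, self_mem_blk O Cl m⟩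
    have h1 : m ≤ bmax (blk O Cl m) := le_bmax (self_mem_blk O Cl m)
    have h2 : NRel O Cl m (bmax (blk O Cl m)) := (mem_blk O Cl).mp (bmax_mem hne)
    rcases lt_or_eq_of_le h1 with h | h
    · exact absurd h2 (no_rel_gt_closer O Cl hc h)
    · exact h.symm

lemma bmin_injOn (P : Finset (Finset (Fin n))) (hP : IsPartitionOn n P) :
    Set.InjOn bmin (P : Set (Finset (Fin n))) := by
  intro B1 h1 B2 h2 he
  have hne1 : B1.Nonempty := hP.1 B1 h1
  have hm1 : bmin B1 ∈ B1 := bmin_mem hne1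
  have hm2 : bmin B1 ∈ B2 := he ▸ bmin_mem (hP.1 B2 h2)
  obtain ⟨W, -, huniq⟩ := hP.2 (bmin B1)
  rw [huniq B1 ⟨h1, hm1⟩, huniq B2 ⟨h2, hm2⟩]

lemma PofV_card (hval : IsValidPair n k O Cl) : (PofV O Cl).card = k := by
  have h1 : ((PofV O Cl).image bmin).card = (PofV O Cl).card :=
    Finset.card_image_of_injOn (bmin_injOn _ (PofV_isPartition O Cl))
  rw [PofV_openers O Cl hval] at h1
  rw [← h1, hval.1]

end BminPart

section PartSide
variable [NeZero n]

lemma cw_zero_filter (S : Finset (Fin n)) (m : ℕ) (hm : m ≤ n) :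
    cw S 0 m = (S.filter fun s : Fin n => (s:ℕ) < m).card := by
  classical
  unfold cw
  refine Finset.card_bij' (fun j _ => ((j : ℕ) : Fin n)) (fun s _ => (s : ℕ)) ?_ ?_ ?_ ?_
  · intro j hj
    rw [Finset.mem_filter, Finset.mem_range] at hj
    rw [Finset.mem_filter]
    have hjn : j < n := by omega
    rw [Fin.val_cast_of_lt hjn]
    refine ⟨?_, hj.1⟩
    rw [zero_add] at hj
    exact hj.2
  · intro s hs
    rw [Finset.mem_filter] at hs
    rw [Finset.mem_filter, Finset.mem_range, zero_add, Fin.cast_val_eq_self]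
    exact ⟨hs.2, hs.1⟩
  · intro j hj
    rw [Finset.mem_filter, Finset.mem_range] at hj
    exact Fin.val_cast_of_lt (by omega)
  · intro s hs
    exact Fin.cast_val_eq_self s

variable {P : Finset (Finset (Fin n))}

noncomputable def blockOf (hP : IsPartitionOn n P) (x : Fin n) : Finset (Fin n) :=
  P.choose (fun B => x ∈ B) (hP.2 x)

lemma blockOf_mem (hP : IsPartitionOn n P) (x : Fin n) : blockOf hP x ∈ P :=
  Finset.choose_mem _ _ _

lemma mem_blockOf (hP : IsPartitionOn n P) (x : Fin n) : x ∈ blockOf hP x :=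
  Finset.choose_property (fun B => x ∈ B) P (hP.2 x)

lemma blockOf_eq (hP : IsPartitionOn n P) {B : Finset (Fin n)} {x : Fin n}
    (hB : B ∈ P) (hx : x ∈ B) : B = blockOf hP x := by
  obtain ⟨W, -, huniq⟩ := hP.2 x
  rw [huniq B ⟨hB, hx⟩, huniq (blockOf hP x) ⟨blockOf_mem hP x, mem_blockOf hP x⟩]

lemma block_eq_of_common (hP : IsPartitionOn n P) {B D : Finset (Fin n)} {x : Fin n}
    (hB : B ∈ P) (hD : D ∈ P) (hxB : x ∈ B) (hxD : x ∈ D) : B = D := by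
  rw [blockOf_eq hP hB hxB, blockOf_eq hP hD hxD]

lemma bmax_injOn (hP : IsPartitionOn n P) :
    Set.InjOn bmax (P : Set (Finset (Fin n))) := by
  intro B1 h1 B2 h2 he
  exact block_eq_of_common hP h1 h2 (bmax_mem (hP.1 B1 h1)) (he ▸ bmax_mem (hP.1 B2 h2))

lemma count_min (hP : IsPartitionOn n P) (m : ℕ) (hm : m ≤ n) :
    cw (P.image bmin) 0 m = (P.filter fun B => (bmin B : ℕ) < m).card := by
  classical
  rw [cw_zero_filter _ m hm, Finset.filter_image]
  exact Finset.card_image_of_injOn ((bmin_injOn P hP).mono (Finset.filter_subset _ _))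

lemma count_max (hP : IsPartitionOn n P) (m : ℕ) (hm : m ≤ n) :
    cw (P.image bmax) 0 m = (P.filter fun B => (bmax B : ℕ) < m).card := by
  classical
  rw [cw_zero_filter _ m hm, Finset.filter_image]
  exact Finset.card_image_of_injOn ((bmax_injOn hP).mono (Finset.filter_subset _ _))

lemma bmin_le_bmax (hP : IsPartitionOn n P) {B : Finset (Fin n)} (hB : B ∈ P) :
    bmin B ≤ bmax B :=
  bmin_le (bmax_mem (hP.1 B hB))

lemma f_count (hP : IsPartitionOn n P) (x : Fin n) :
    fW (P.image bmin) (P.image bmax) (x : ℕ) =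
      ((P.filter fun B => bmin B ≤ x ∧ x ≤ bmax B).card : ℤ) := by
  classical
  unfold fW Fz
  rw [count_min hP ((x:ℕ)+1) (by have := x.isLt; omega), count_max hP (x:ℕ) (by omega)]
  have hsplit : P.filter (fun B => (bmin B : ℕ) < (x:ℕ)+1) =
      (P.filter fun B => (bmax B : ℕ) < (x:ℕ)) ∪ (P.filter fun B => bmin B ≤ x ∧ x ≤ bmax B) := by
    apply Finset.ext
    intro B
    simp only [Finset.mem_filter, Finset.mem_union]
    constructor
    · rintro ⟨hB, hlt⟩
      rcases lt_or_ge (bmax B) x with h | h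
      · exact Or.inl ⟨hB, by rwa [← Fin.lt_def]⟩
      · exact Or.inr ⟨hB, by rw [Fin.le_def]; omega, h⟩
    · rintro (⟨hB, h⟩ | ⟨hB, h1, h2⟩)
      · have := bmin_le_bmax hP hB
        rw [Fin.le_def] at this
        refine ⟨hB, by omega⟩
      · rw [Fin.le_def] at h1
        exact ⟨hB, by omega⟩
  have hdisj : Disjoint (P.filter fun B => (bmax B : ℕ) < (x:ℕ))
      (P.filter fun B => bmin B ≤ x ∧ x ≤ bmax B) := by
    rw [Finset.disjoint_left]
    intro B h1 h2
    rw [Finset.mem_filter] at h1 h2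
    have := h2.2.2
    rw [Fin.le_def] at this
    omega
  rw [hsplit, Finset.card_union_of_disjoint hdisj]
  push_cast
  ring

lemma g_count (hP : IsPartitionOn n P) (x : Fin n) :
    gW (P.image bmin) (P.image bmax) (x : ℕ) =
      ((P.filter fun B => bmin B ≤ x ∧ x < bmax B).card : ℤ) := by
  classical
  unfold gW Fz
  rw [count_min hP ((x:ℕ)+1) (by have := x.isLt; omega),
    count_max hP ((x:ℕ)+1) (by have := x.isLt; omega)]
  have hsplit : P.filter (fun B => (bmin B : ℕ) < (x:ℕ)+1) =
      (P.filter fun B => (bmax B : ℕ) < (x:ℕ)+1) ∪ (P.filter fun B => bmin B ≤ x ∧ x < bmax B) := by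
    apply Finset.ext
    intro B
    simp only [Finset.mem_filter, Finset.mem_union]
    constructor
    · rintro ⟨hB, hlt⟩
      rcases lt_or_ge x (bmax B) with h | h
      · exact Or.inr ⟨hB, by rw [Fin.le_def]; omega, h⟩
      · rw [Fin.le_def] at h
        exact Or.inl ⟨hB, by omega⟩
    · rintro (⟨hB, h⟩ | ⟨hB, h1, h2⟩)
      · have := bmin_le_bmax hP hB
        rw [Fin.le_def] at this
        refine ⟨hB, by omega⟩
      · rw [Fin.le_def] at h1
        exact ⟨hB, by omega⟩
  have hdisj : Disjoint (P.filter fun B => (bmax B : ℕ) < (x:ℕ)+1)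
      (P.filter fun B => bmin B ≤ x ∧ x < bmax B) := by
    rw [Finset.disjoint_left]
    intro B h1 h2
    rw [Finset.mem_filter] at h1 h2
    have := h2.2.2
    rw [Fin.lt_def] at this
    have h3 := h1.2
    omega
  rw [hsplit, Finset.card_union_of_disjoint hdisj]
  push_cast
  ring
end PartSide

section Geometry
variable [NeZero n] {P : Finset (Finset (Fin n))}

/-- L2 : the interval of any other block containing a point of `B` encloses `B`'s interval. -/
lemma nested (hP : IsPartitionOn n P) (hNC : IsNonCrossing P) {B D : Finset (Fin n)} {x : Fin n}
    (hB : B ∈ P) (hD : D ∈ P) (hDB : D ≠ B) (hx : x ∈ B)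
    (h1 : bmin D ≤ x) (h2 : x ≤ bmax D) : bmin D ≤ bmin B ∧ bmax B ≤ bmax D := by
  have hDne : D.Nonempty := hP.1 D hD
  have hBne : B.Nonempty := hP.1 B hB
  have hminD : bmin D ∈ D := bmin_mem hDne
  have hmaxD : bmax D ∈ D := bmax_mem hDne
  have hminD_lt : bmin D < x := by
    rcases lt_or_eq_of_le h1 with h | h
    · exact h
    · exact absurd (block_eq_of_common hP hD hB (h ▸ hminD) hx) hDB
  have hlt_maxD : x < bmax D := by
    rcases lt_or_eq_of_le h2 with h | h
    · exact h
    · exact absurd (block_eq_of_common hP hD hB (h.symm ▸ hmaxD) hx) hDB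
  constructor
  · by_contra hc
    push_neg at hc
    exact hNC ⟨bmin B, bmin D, x, bmax D, B, D, hB, hD, Ne.symm hDB, hc, hminD_lt, hlt_maxD,
      bmin_mem hBne, hx, hminD, hmaxD⟩
  · by_contra hc
    push_neg at hc
    exact hNC ⟨bmin D, x, bmax D, bmax B, D, B, hD, hB, hDB, hminD_lt, hlt_maxD, hc,
      hminD, hmaxD, hx, bmax_mem hBne⟩

/-- blocks whose interval contains a point of `W` are exactly those whose interval encloses
`W`'s interval. -/
lemma interval_filter_eq (hP : IsPartitionOn n P) (hNC : IsNonCrossing P)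
    {W : Finset (Fin n)} {x : Fin n} (hW : W ∈ P) (hx : x ∈ W) :
    P.filter (fun B => bmin B ≤ x ∧ x ≤ bmax B) =
      P.filter (fun B => bmin B ≤ bmin W ∧ bmax W ≤ bmax B) := by
  classical
  apply Finset.ext
  intro B
  simp only [Finset.mem_filter]
  constructor
  · rintro ⟨hB, hb1, hb2⟩
    by_cases hBW : B = W
    · subst hBW
      exact ⟨hB, le_refl _, le_refl _⟩
    · exact ⟨hB, (nested hP hNC hW hB hBW hx hb1 hb2).1, (nested hP hNC hW hB hBW hx hb1 hb2).2⟩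
  · rintro ⟨hB, hb1, hb2⟩
    exact ⟨hB, le_trans hb1 (bmin_le hx), le_trans (le_bmax hx) hb2⟩

/-- forward direction : elements in the same block are related. -/
lemma same_block_rel (hP : IsPartitionOn n P) (hNC : IsNonCrossing P)
    {W : Finset (Fin n)} {x y : Fin n} (hW : W ∈ P) (hx : x ∈ W) (hy : y ∈ W) :
    NRel (P.image bmin) (P.image bmax) x y := by
  classical
  rcases lt_trichotomy x y with h | h | h
  · -- x < y
    refine rel_of_sm _ _ h ⟨?_, ?_⟩
    · rw [f_count hP x, f_count hP y, interval_filter_eq hP hNC hW hx,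
        interval_filter_eq hP hNC hW hy]
    · intro z hz1 hz2
      rw [f_count hP x, g_count hP z, interval_filter_eq hP hNC hW hx]
      have hsub : P.filter (fun B => bmin B ≤ bmin W ∧ bmax W ≤ bmax B) ⊆
          P.filter (fun B => bmin B ≤ z ∧ z < bmax B) := by
        intro B hBm
        rw [Finset.mem_filter] at hBm ⊢
        refine ⟨hBm.1, le_trans hBm.2.1 (le_trans (bmin_le hx) hz1),
          lt_of_lt_of_le (lt_of_lt_of_le hz2 (le_bmax hy)) hBm.2.2⟩
      exact_mod_cast Int.ofNat_le.mpr (Finset.card_le_card hsub)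
  · exact h ▸ rel_refl _ _ x
  · refine rel_symm _ _ (rel_of_sm _ _ h ⟨?_, ?_⟩)
    · rw [f_count hP x, f_count hP y, interval_filter_eq hP hNC hW hx,
        interval_filter_eq hP hNC hW hy]
    · intro z hz1 hz2
      rw [f_count hP y, g_count hP z, interval_filter_eq hP hNC hW hy]
      have hsub : P.filter (fun B => bmin B ≤ bmin W ∧ bmax W ≤ bmax B) ⊆
          P.filter (fun B => bmin B ≤ z ∧ z < bmax B) := by
        intro B hBm
        rw [Finset.mem_filter] at hBm ⊢
        refine ⟨hBm.1, le_trans hBm.2.1 (le_trans (bmin_le hy) hz1),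
          lt_of_lt_of_le (lt_of_lt_of_le hz2 (le_bmax hx)) hBm.2.2⟩
      exact_mod_cast Int.ofNat_le.mpr (Finset.card_le_card hsub)
end Geometry

section Backward
variable [NeZero n] {P : Finset (Finset (Fin n))}

lemma sm_same_block (hP : IsPartitionOn n P) (hNC : IsNonCrossing P)
    {x y : Fin n} (hxy : x < y) (hsm : NSm (P.image bmin) (P.image bmax) x y) :
    blockOf hP x = blockOf hP y := by
  classical
  set W := blockOf hP x with hWdef
  have hW : W ∈ P := blockOf_mem hP x
  have hxW : x ∈ W := mem_blockOf hP x
  by_contra hne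
  have hyW : y ∉ W := fun hyW => hne (blockOf_eq hP hW hyW)
  rcases le_or_gt y (bmax W) with hcase | hcase
  · -- y inside W's interval but in a different block W'
    set W' := blockOf hP y with hW'def
    have hW'mem : W' ∈ P := blockOf_mem hP y
    have hyW' : y ∈ W' := mem_blockOf hP y
    have hWW' : W' ≠ W := fun h => hyW (h ▸ hyW')
    have hminW' : x < bmin W' := by
      by_contra hc
      push_neg at hc
      -- then x is inside W''s interval and y inside W's interval: both nestings, contradiction
      have h1 := nested hP hNC hW hW'mem hWW' hxW hc
        (le_trans (le_of_lt hxy) (le_bmax hyW'))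
      have h2 := nested hP hNC hW'mem hW (Ne.symm hWW') hyW'
        (le_trans (bmin_le hxW) (le_of_lt hxy)) hcase
      have : bmin W = bmin W' := le_antisymm h2.1 h1.1
      exact hWW' (block_eq_of_common hP hW'mem hW
        (bmin_mem (hP.1 W' hW'mem)) (this ▸ bmin_mem (hP.1 W hW)))
    -- counting: f y ≥ f x + 1
    have hsubset : insert W' (P.filter (fun B => bmin B ≤ x ∧ x ≤ bmax B)) ⊆
        P.filter (fun B => bmin B ≤ y ∧ y ≤ bmax B) := by
      intro B hB
      rw [Finset.mem_insert] at hB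
      rw [Finset.mem_filter]
      rcases hB with rfl | hB
      · exact ⟨hW'mem, bmin_le hyW', le_bmax hyW'⟩
      · rw [interval_filter_eq hP hNC hW hxW, Finset.mem_filter] at hB
        exact ⟨hB.1, le_trans hB.2.1 (le_trans (bmin_le hxW) (le_of_lt hxy)),
          le_trans hcase hB.2.2⟩
    have hnot : W' ∉ P.filter (fun B => bmin B ≤ x ∧ x ≤ bmax B) := by
      rw [Finset.mem_filter]
      rintro ⟨-, h1, -⟩
      exact absurd (lt_of_lt_of_le hminW' h1) (lt_irrefl _)
    have hcard := Finset.card_le_card hsubset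
    rw [Finset.card_insert_of_notMem hnot] at hcard
    have hfx := f_count hP x
    have hfy := f_count hP y
    have := hsm.1
    rw [hfx, hfy] at this
    omega
  · -- bmax W < y : use the dip at z = bmax W
    have hzx : x ≤ bmax W := le_bmax hxW
    have hg := hsm.2 (bmax W) hzx hcase
    have hbmW : bmax W ∈ W := bmax_mem (hP.1 W hW)
    have hfm : fW (P.image bmin) (P.image bmax) ((bmax W : Fin n) : ℕ) =
        fW (P.image bmin) (P.image bmax) (x : ℕ) := by
      rcases eq_or_ne (bmax W) x with h | h
      · rw [h]
      · -- same block ⟹ Sm, use forward lemma's f-equality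
        rw [f_count hP (bmax W), f_count hP x, interval_filter_eq hP hNC hW hbmW,
          interval_filter_eq hP hNC hW hxW]
    -- g (bmax W) ≤ f (bmax W) - 1
    have hsub2 : P.filter (fun B => bmin B ≤ bmax W ∧ bmax W < bmax B) ⊆
        (P.filter (fun B => bmin B ≤ bmax W ∧ bmax W ≤ bmax B)).erase W := by
      intro B hB
      rw [Finset.mem_filter] at hB
      rw [Finset.mem_erase, Finset.mem_filter]
      refine ⟨?_, hB.1, hB.2.1, le_of_lt hB.2.2⟩
      intro h
      rw [h] at hB
      exact absurd hB.2.2 (lt_irrefl _)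
    have hWin : W ∈ P.filter (fun B => bmin B ≤ bmax W ∧ bmax W ≤ bmax B) := by
      rw [Finset.mem_filter]
      exact ⟨hW, bmin_le hbmW, le_refl _⟩
    have hcard2 := Finset.card_le_card hsub2
    rw [Finset.card_erase_of_mem hWin] at hcard2
    have hg2 := g_count hP (bmax W)
    have hf2 := f_count hP (bmax W)
    rw [hg2] at hg
    rw [hfm.symm, hf2] at hg
    have hpos : 0 < (P.filter (fun B => bmin B ≤ bmax W ∧ bmax W ≤ bmax B)).card :=
      Finset.card_pos.mpr ⟨W, hWin⟩
    omega

lemma rel_same_block (hP : IsPartitionOn n P) (hNC : IsNonCrossing P)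
    {x y : Fin n} (h : NRel (P.image bmin) (P.image bmax) x y) :
    blockOf hP x = blockOf hP y := by
  rcases h with rfl | ⟨hlt, hsm⟩ | ⟨hlt, hsm⟩
  · rfl
  · exact sm_same_block hP hNC hlt hsm
  · exact (sm_same_block hP hNC hlt hsm).symm

/-- L-A : the opener/closer pair of a noncrossing partition is valid. -/
lemma partition_valid (hP : IsPartitionOn n P) (hNC : IsNonCrossing P) :
    IsValidPair n P.card (P.image bmin) (P.image bmax) := by
  classical
  refine ⟨Finset.card_image_of_injOn (bmin_injOn P hP),
    Finset.card_image_of_injOn (bmax_injOn hP), ?_⟩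
  intro x
  have h1 : 1 ≤ fW (P.image bmin) (P.image bmax) (x : ℕ) := by
    rw [f_count hP x]
    have : blockOf hP x ∈ P.filter (fun B => bmin B ≤ x ∧ x ≤ bmax B) := by
      rw [Finset.mem_filter]
      exact ⟨blockOf_mem hP x, bmin_le (mem_blockOf hP x), le_bmax (mem_blockOf hP x)⟩
    have := Finset.card_pos.mpr ⟨_, this⟩
    omega
  unfold fW Fz at h1
  omega

/-- L-B : reconstruction recovers the partition. -/
lemma PofV_openclose (hP : IsPartitionOn n P) (hNC : IsNonCrossing P) :
    PofV (P.image bmin) (P.image bmax) = P := by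
  classical
  have hblk : ∀ x : Fin n, blk (P.image bmin) (P.image bmax) x = blockOf hP x := by
    intro x
    apply Finset.ext
    intro y
    rw [mem_blk]
    constructor
    · intro h
      have := rel_same_block hP hNC h
      rw [this]
      exact mem_blockOf hP y
    · intro h
      have : blockOf hP y = blockOf hP x := (blockOf_eq hP (blockOf_mem hP x) h).symm
      exact same_block_rel hP hNC (blockOf_mem hP x) (mem_blockOf hP x) h
  apply Finset.ext
  intro B
  constructor
  · intro hB
    obtain ⟨x, rfl⟩ := mem_PofV _ _ hB
    rw [hblk x]
    exact blockOf_mem hP x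
  · intro hB
    obtain ⟨x, hx⟩ := hP.1 B hB
    rw [blockOf_eq hP hB hx, ← hblk x]
    exact blk_mem_PofV _ _ x
end Backward

section Final
variable [NeZero n]

open Classical in
lemma part1 {k : ℕ} :
    (Finset.univ.filter fun P : Finset (Finset (Fin n)) =>
      IsPartitionOn n P ∧ IsNonCrossing P ∧ P.card = k).card = (VP n k).card := by
  classical
  refine Finset.card_bij'
    (fun P _ => (P.image bmin, P.image bmax))
    (fun q _ => PofV q.1 q.2) ?_ ?_ ?_ ?_
  · rintro P hP
    rw [Finset.mem_filter] at hP
    obtain ⟨-, h1, h2, h3⟩ := hP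
    rw [mem_VP]
    have := partition_valid h1 h2
    rwa [h3] at this
  · rintro ⟨O, Cl⟩ hq
    rw [mem_VP] at hq
    rw [Finset.mem_filter]
    exact ⟨Finset.mem_univ _, PofV_isPartition O Cl, PofV_noncrossing O Cl,
      PofV_card O Cl hq⟩
  · rintro P hP
    rw [Finset.mem_filter] at hP
    exact PofV_openclose hP.2.1 hP.2.2.1
  · rintro ⟨O, Cl⟩ hq
    rw [mem_VP] at hq
    show (((PofV O Cl).image bmin), ((PofV O Cl).image bmax)) = (O, Cl)
    rw [PofV_openers O Cl hq, PofV_closers O Cl hq]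

end Final

/-- **Non-crossing partitions with `k` blocks are counted by Narayana numbers.**
For `1 ≤ k ≤ n`, the number of non-crossing partitions of `{1,…,n}` with
exactly `k` blocks equals `N(n,k) = (1/n)·binom(n,k)·binom(n,k−1)`, stated in
the denominator-cleared form `n · #{…} = binom(n,k)·binom(n,k−1)`. -/
theorem card_noncrossing_partitions_narayana (n k : ℕ) (hn : 1 ≤ n)
    (hk1 : 1 ≤ k) (hkn : k ≤ n) :
    n * Nat.card {P : Finset (Finset (Fin n)) //
        IsPartitionOn n P ∧ IsNonCrossing P ∧ P.card = k} =
      n.choose k * n.choose (k - 1) := by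
  classical
  haveI : NeZero n := ⟨by omega⟩
  rw [Nat.card_eq_fintype_card, Fintype.card_subtype]
  rw [part1, part2 hk1 hkn]

end NarayanaProof
end

section
/- Let R be a commutative ring. For every sequence (m_n)_{n≥1} in R there exists a unique sequence (κ_n)_{n≥1} in R (the free cumulants) such that for all n ≥ 1, m_n = Σ_{π ∈ NC(n)} ∏_{V ∈ π} κ_{|V|}, where the sum runs over all non-crossing partitions π of {1,…,n} and |V| denotes the cardinality of the block V. -/
open scoped Classical in
/-- The finite set `NC(n)` of all non-crossing partitions of `{1,…,n}`. -/
noncomputable def NCFinset (n : ℕ) : Finset (Finset (Finset (Fin n))) :=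
  Finset.univ.filter fun P => IsPartitionOn n P ∧ IsNonCrossing P

/-!
The one-block partition `{univ}` lies in `NC(n)`, and every other partition in `NC(n)` has
only blocks of size `< n`. Hence the moment–cumulant formula reads
`m_n = κ_n + (a polynomial in κ_1, …, κ_{n-1})`, which determines `κ_n` recursively.
-/

open Finset

lemma mem_NCFinset {n : ℕ} {P : Finset (Finset (Fin n))} :
    P ∈ NCFinset n ↔ IsPartitionOn n P ∧ IsNonCrossing P := by
  classical
  simp [NCFinset]

lemma isNonCrossing_singleton {α : Type*} [LinearOrder α] (B : Finset α) :
    IsNonCrossing ({B} : Finset (Finset α)) := by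
  rintro ⟨-, -, -, -, C, D, hC, hD, hCD, -⟩
  exact hCD ((mem_singleton.mp hC).trans (mem_singleton.mp hD).symm)

lemma isPartitionOn_singleton_univ {n : ℕ} (hn : 1 ≤ n) :
    IsPartitionOn n {univ} := by
  have : Nonempty (Fin n) := ⟨⟨0, hn⟩⟩
  refine ⟨fun B hB => mem_singleton.mp hB ▸ univ_nonempty, fun x => ?_⟩
  exact ⟨univ, ⟨mem_singleton_self _, mem_univ x⟩, fun C hC => mem_singleton.mp hC.1⟩

lemma singleton_univ_mem_NCFinset {n : ℕ} (hn : 1 ≤ n) : {univ} ∈ NCFinset n :=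
  mem_NCFinset.mpr ⟨isPartitionOn_singleton_univ hn, isNonCrossing_singleton _⟩

namespace IsPartitionOn

variable {n : ℕ} {P : Finset (Finset (Fin n))} {B : Finset (Fin n)}

lemma card_pos (hP : IsPartitionOn n P) (hB : B ∈ P) : 0 < B.card :=
  Finset.card_pos.mpr (hP.1 B hB)

lemma eq_singleton_univ (hP : IsPartitionOn n P) (hB : univ ∈ P) : P = {univ} := by
  refine eq_singleton_iff_unique_mem.mpr ⟨hB, fun C hC => ?_⟩
  obtain ⟨x, hx⟩ := hP.1 C hC
  exact (hP.2 x).unique ⟨hC, hx⟩ ⟨hB, mem_univ x⟩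

lemma card_lt (hP : IsPartitionOn n P) (hne : P ≠ {univ}) (hB : B ∈ P) : B.card < n := by
  refine (card_le_univ B).trans_eq (Fintype.card_fin n) |>.lt_of_ne fun h => hne ?_
  exact hP.eq_singleton_univ (eq_univ_of_card B (by simpa using h) ▸ hB)

end IsPartitionOn

section MomentCumulant

variable {R : Type*} [CommRing R]

lemma sum_NCFinset_eq_add_sum_erase (f : ℕ → R) {n : ℕ} (hn : 1 ≤ n) :
    ∑ P ∈ NCFinset n, ∏ B ∈ P, f B.card
      = f n + ∑ P ∈ (NCFinset n).erase {univ}, ∏ B ∈ P, f B.card := by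
  rw [← add_sum_erase _ _ (singleton_univ_mem_NCFinset hn), prod_singleton, card_univ,
    Fintype.card_fin]

lemma sum_erase_NCFinset_congr {f g : ℕ → R} {n : ℕ}
    (hfg : ∀ k, 1 ≤ k → k < n → f k = g k) :
    ∑ P ∈ (NCFinset n).erase {univ}, ∏ B ∈ P, f B.card
      = ∑ P ∈ (NCFinset n).erase {univ}, ∏ B ∈ P, g B.card := by
  refine sum_congr rfl fun P hP => prod_congr rfl fun B hB => ?_
  have hPart := (mem_NCFinset.mp (mem_of_mem_erase hP)).1
  exact hfg _ (hPart.card_pos hB) (hPart.card_lt (ne_of_mem_erase hP) hB)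

noncomputable def freeCumulant (m : ℕ → R) : ℕ → R
  | n => m n - ∑ P ∈ (NCFinset n).erase {univ}, ∏ B ∈ P,
      if _ : B.card < n then freeCumulant m B.card else 0
  termination_by n => n

lemma freeCumulant_eq (m : ℕ → R) (n : ℕ) :
    freeCumulant m n
      = m n - ∑ P ∈ (NCFinset n).erase {univ}, ∏ B ∈ P, freeCumulant m B.card := by
  rw [freeCumulant, sum_erase_NCFinset_congr
    (f := fun k => if _ : k < n then freeCumulant m k else 0) fun _ _ hk => dif_pos hk]

lemma moment_eq_sum_freeCumulant (m : ℕ → R) {n : ℕ} (hn : 1 ≤ n) :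
    m n = ∑ P ∈ NCFinset n, ∏ B ∈ P, freeCumulant m B.card := by
  rw [sum_NCFinset_eq_add_sum_erase (freeCumulant m) hn, freeCumulant_eq]
  ring

lemma eq_freeCumulant {m κ : ℕ → R}
    (hκ : ∀ n, 1 ≤ n → m n = ∑ P ∈ NCFinset n, ∏ B ∈ P, κ B.card) :
    ∀ n, 1 ≤ n → κ n = freeCumulant m n := by
  intro n
  induction n using Nat.strong_induction_on with
  | _ n ih =>
    intro hn
    have h := (hκ n hn).symm.trans (moment_eq_sum_freeCumulant m hn)
    rwa [sum_NCFinset_eq_add_sum_erase κ hn, sum_NCFinset_eq_add_sum_erase _ hn,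
      sum_erase_NCFinset_congr fun k hk hkn => ih k hkn hk, add_left_inj] at h

end MomentCumulant

/-- **Existence and uniqueness of free cumulants.** Over a commutative ring `R`,
for every sequence `(m_n)_{n ≥ 1}` there is a sequence `(κ_n)_{n ≥ 1}`, unique in
degrees `n ≥ 1`, satisfying the free moment–cumulant formula
`m_n = Σ_{π ∈ NC(n)} Π_{V ∈ π} κ_{|V|}` for all `n ≥ 1`. -/
theorem free_cumulants_exist_unique (R : Type*) [CommRing R] (m : ℕ → R) :
    ∃ κ : ℕ → R,
      (∀ n, 1 ≤ n → m n = ∑ P ∈ NCFinset n, ∏ B ∈ P, κ B.card) ∧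
      ∀ κ' : ℕ → R,
        (∀ n, 1 ≤ n → m n = ∑ P ∈ NCFinset n, ∏ B ∈ P, κ' B.card) →
        ∀ n, 1 ≤ n → κ' n = κ n :=
  ⟨freeCumulant m, fun _ hn => moment_eq_sum_freeCumulant m hn, fun _ hκ' => eq_freeCumulant hκ'⟩
end

section
/- Let R be a commutative ring and let sequences (m_n)_{n≥1} and (κ_n)_{n≥1} in R satisfy the free moment–cumulant relation m_n = Σ_{π ∈ NC(n)} ∏_{V ∈ π} κ_{|V|} for all n ≥ 1. Define the formal power series M(z) = 1 + Σ_{n≥1} m_n zⁿ and C(z) = 1 + Σ_{n≥1} κ_n zⁿ in R[[z]]. Then M(z) = C(z·M(z)), where the right-hand side is the substitution of the power series z·M(z) (which has zero constant term) into C. -/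
/-- The formal power series `1 + Σ_{n ≥ 1} a_n zⁿ` attached to a sequence
`(a_n)_{n ≥ 1}`. -/
noncomputable def genSeries (R : Type*) [CommRing R] (a : ℕ → R) : PowerSeries R :=
  PowerSeries.mk fun n => if n = 0 then 1 else a n

namespace MCaux

open Finset

variable {α : Type*} [LinearOrder α]

open scoped Classical in
noncomputable def blockOf (P : Finset (Finset α)) (x : α) : Finset α :=
  (P.filter (fun B => x ∈ B)).biUnion id

def NCOn (S : Finset α) (P : Finset (Finset α)) : Prop :=
  (∀ B ∈ P, B.Nonempty) ∧ (∀ B ∈ P, B ⊆ S) ∧ (∀ x ∈ S, ∃ B ∈ P, x ∈ B) ∧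
  (∀ B ∈ P, ∀ C ∈ P, ∀ x, x ∈ B → x ∈ C → B = C) ∧ IsNonCrossing P

open scoped Classical in
noncomputable def ncp (S : Finset α) : Finset (Finset (Finset α)) :=
  (S.powerset.powerset).filter (fun P => NCOn S P)

lemma mem_ncp {S : Finset α} {P : Finset (Finset α)} : P ∈ ncp S ↔ NCOn S P := by
  classical
  simp only [ncp, mem_filter, mem_powerset]
  refine ⟨fun h => h.2, fun h => ⟨?_, h⟩⟩
  intro B hB
  exact mem_powerset.2 (h.2.1 B hB)

lemma mem_blockOf {P : Finset (Finset α)} {x y : α} :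
    y ∈ blockOf P x ↔ ∃ B ∈ P, x ∈ B ∧ y ∈ B := by
  classical
  simp [blockOf]
  tauto

lemma blockOf_eq {S : Finset α} {P : Finset (Finset α)} (hP : NCOn S P)
    {B : Finset α} {x : α} (hB : B ∈ P) (hx : x ∈ B) : blockOf P x = B := by
  ext y
  rw [mem_blockOf]
  constructor
  · rintro ⟨C, hC, hxC, hyC⟩
    rwa [hP.2.2.2.1 C hC B hB x hxC hx] at hyC
  · intro hy; exact ⟨B, hB, hx, hy⟩

lemma blockOf_mem {S : Finset α} {P : Finset (Finset α)} (hP : NCOn S P)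
    {x : α} (hx : x ∈ S) : blockOf P x ∈ P ∧ x ∈ blockOf P x := by
  obtain ⟨B, hB, hxB⟩ := hP.2.2.1 x hx
  rw [blockOf_eq hP hB hxB]; exact ⟨hB, hxB⟩

lemma blockOf_subset {S : Finset α} {P : Finset (Finset α)} (hP : NCOn S P)
    (x : α) : blockOf P x ⊆ S := by
  intro y hy
  obtain ⟨C, hC, _, hyC⟩ := mem_blockOf.1 hy
  exact hP.2.1 C hC hyC

@[simp] lemma blockOf_empty (x : α) : blockOf (∅ : Finset (Finset α)) x = ∅ := by
  classical
  simp [blockOf]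

lemma IsNonCrossing.mono {P Q : Finset (Finset α)} (h : IsNonCrossing P) (hQP : Q ⊆ P) :
    IsNonCrossing Q := by
  rintro ⟨a, b, c, d, B, C, hB, hC, rest⟩
  exact h ⟨a, b, c, d, B, C, hQP hB, hQP hC, rest⟩

lemma ncp_empty : ncp (∅ : Finset α) = {∅} := by
  ext P
  rw [mem_ncp, mem_singleton]
  constructor
  · intro h
    refine eq_empty_of_forall_notMem fun B hB => ?_
    obtain ⟨x, hx⟩ := h.1 B hB
    exact absurd (h.2.1 B hB hx) (notMem_empty x)
  · rintro rfl
    refine ⟨fun B hB => absurd hB (notMem_empty _), fun B hB => absurd hB (notMem_empty _),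
      fun x hx => absurd hx (notMem_empty _), fun B hB => absurd hB (notMem_empty _), ?_⟩
    rintro ⟨a, b, c, d, B, C, hB, _⟩
    exact absurd hB (notMem_empty _)

lemma sup_id_mem (s : Finset ℕ) (h : s.Nonempty) : s.sup id ∈ s := by
  have := s.max'_mem h
  rwa [Finset.max'_eq_sup', Finset.sup'_eq_sup] at this



lemma ncp_sum_transfer {β : Type*} [LinearOrder β] {R : Type*} [CommRing R]
    (f : α → β) (hf : StrictMono f) (S : Finset α) (F : ℕ → R) :
    ∑ P ∈ ncp S, ∏ B ∈ P, F B.card = ∑ Q ∈ ncp (S.image f), ∏ B ∈ Q, F B.card := by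
  classical
  refine Finset.sum_bij (fun P _ => P.image (fun B => B.image f)) ?_ ?_ ?_ ?_
  · -- maps into target
    intro P hP
    rw [mem_ncp] at hP ⊢
    refine ⟨?_, ?_, ?_, ?_, ?_⟩
    · intro B hB
      obtain ⟨B₀, hB₀, rfl⟩ := mem_image.1 hB
      exact (hP.1 B₀ hB₀).image f
    · intro B hB
      obtain ⟨B₀, hB₀, rfl⟩ := mem_image.1 hB
      exact image_subset_image (hP.2.1 B₀ hB₀)
    · intro y hy
      obtain ⟨x, hx, rfl⟩ := mem_image.1 hy
      obtain ⟨B, hB, hxB⟩ := hP.2.2.1 x hx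
      exact ⟨B.image f, mem_image_of_mem _ hB, mem_image_of_mem f hxB⟩
    · intro B hB C hC y hyB hyC
      obtain ⟨B₀, hB₀, rfl⟩ := mem_image.1 hB
      obtain ⟨C₀, hC₀, rfl⟩ := mem_image.1 hC
      obtain ⟨b₀, hb₀, hb₀y⟩ := mem_image.1 hyB
      obtain ⟨c₀, hc₀, hc₀y⟩ := mem_image.1 hyC
      have : b₀ = c₀ := hf.injective (hb₀y.trans hc₀y.symm)
      subst this
      rw [hP.2.2.2.1 B₀ hB₀ C₀ hC₀ b₀ hb₀ hc₀]
    · rintro ⟨a, b, c, d, B, C, hB, hC, hBC, h1, h2, h3, ha, hc, hb, hd⟩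
      obtain ⟨B₀, hB₀, rfl⟩ := mem_image.1 hB
      obtain ⟨C₀, hC₀, rfl⟩ := mem_image.1 hC
      obtain ⟨a₀, ha₀, rfl⟩ := mem_image.1 ha
      obtain ⟨c₀, hc₀, rfl⟩ := mem_image.1 hc
      obtain ⟨b₀, hb₀, rfl⟩ := mem_image.1 hb
      obtain ⟨d₀, hd₀, rfl⟩ := mem_image.1 hd
      have hBC₀ : B₀ ≠ C₀ := fun h => hBC (by rw [h])
      exact hP.2.2.2.2 ⟨a₀, b₀, c₀, d₀, B₀, C₀, hB₀, hC₀, hBC₀,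
        hf.lt_iff_lt.1 h1, hf.lt_iff_lt.1 h2, hf.lt_iff_lt.1 h3, ha₀, hc₀, hb₀, hd₀⟩
  · -- injective
    intro P₁ h₁ P₂ h₂ heq
    have himg : Function.Injective (fun B : Finset α => B.image f) :=
      fun B C h => Finset.image_injective hf.injective h
    exact Finset.image_injective himg heq
  · -- surjective
    intro Q hQ
    rw [mem_ncp] at hQ
    refine ⟨Q.image (fun B => S.filter (fun a => f a ∈ B)), ?_, ?_⟩
    · rw [mem_ncp]
      refine ⟨?_, ?_, ?_, ?_, ?_⟩
      · intro B hB
        obtain ⟨B₀, hB₀, rfl⟩ := mem_image.1 hB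
        obtain ⟨y, hy⟩ := hQ.1 B₀ hB₀
        obtain ⟨x, hx, rfl⟩ := mem_image.1 (hQ.2.1 B₀ hB₀ hy)
        exact ⟨x, mem_filter.2 ⟨hx, hy⟩⟩
      · intro B hB
        obtain ⟨B₀, hB₀, rfl⟩ := mem_image.1 hB
        exact filter_subset _ _
      · intro x hx
        obtain ⟨B, hB, hfB⟩ := hQ.2.2.1 (f x) (mem_image_of_mem f hx)
        exact ⟨S.filter (fun a => f a ∈ B), mem_image_of_mem _ hB, mem_filter.2 ⟨hx, hfB⟩⟩
      · intro B hB C hC x hxB hxC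
        obtain ⟨B₀, hB₀, rfl⟩ := mem_image.1 hB
        obtain ⟨C₀, hC₀, rfl⟩ := mem_image.1 hC
        rw [hQ.2.2.2.1 B₀ hB₀ C₀ hC₀ (f x) (mem_filter.1 hxB).2 (mem_filter.1 hxC).2]
      · rintro ⟨a, b, c, d, B, C, hB, hC, hBC, h1, h2, h3, ha, hc, hb, hd⟩
        obtain ⟨B₀, hB₀, rfl⟩ := mem_image.1 hB
        obtain ⟨C₀, hC₀, rfl⟩ := mem_image.1 hC
        have hBC₀ : B₀ ≠ C₀ := fun h => hBC (by rw [h])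
        exact hQ.2.2.2.2 ⟨f a, f b, f c, f d, B₀, C₀, hB₀, hC₀, hBC₀,
          hf h1, hf h2, hf h3, (mem_filter.1 ha).2, (mem_filter.1 hc).2,
          (mem_filter.1 hb).2, (mem_filter.1 hd).2⟩
    · have key : ∀ B ∈ Q, (S.filter (fun a => f a ∈ B)).image f = B := by
        intro B hB
        ext y
        simp only [mem_image, mem_filter]
        constructor
        · rintro ⟨x, ⟨_, hfx⟩, rfl⟩; exact hfx
        · intro hy
          obtain ⟨x, hx, rfl⟩ := mem_image.1 (hQ.2.1 B hB hy)
          exact ⟨x, ⟨hx, hy⟩, rfl⟩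
      show (Q.image (fun B => S.filter (fun a => f a ∈ B))).image (fun B => B.image f) = Q
      rw [Finset.image_image]
      calc Q.image ((fun B => B.image f) ∘ (fun B => S.filter (fun a => f a ∈ B)))
          = Q.image id := Finset.image_congr (fun B hB => key B hB)
        _ = Q := Finset.image_id
  · -- weights
    intro P hP
    rw [mem_ncp] at hP
    rw [Finset.prod_image]
    · refine Finset.prod_congr rfl fun B hB => ?_
      rw [Finset.card_image_of_injective _ hf.injective]
    · intro B hB C hC h
      have := Finset.image_injective hf.injective h
      exact this



-- ### ℕ-specific decomposition machinery

noncomputable def psi (w : ℕ) (p : Finset (Finset ℕ) × Finset (Finset ℕ)) : Finset (Finset ℕ) :=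
  insert (insert w (blockOf p.1 0)) (p.1.erase (blockOf p.1 0) ∪ p.2)

noncomputable def phi (w n : ℕ) (P : Finset (Finset ℕ)) :
    Finset (Finset ℕ) × Finset (Finset ℕ) :=
  ((insert ((blockOf P 0).erase w) (P.erase (blockOf P 0))).filter
      (fun B => B.Nonempty ∧ B ⊆ range w),
   P.filter (fun B => B ⊆ Ico (w + 1) n))

section Decomp

variable {w n : ℕ} {P1 P2 P : Finset (Finset ℕ)}

lemma psi_spec (hw : w < n) (h1 : NCOn (range w) P1) (h2 : NCOn (Ico (w + 1) n) P2) :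
    NCOn (range n) (psi w (P1, P2)) ∧ blockOf (psi w (P1, P2)) 0 = insert w (blockOf P1 0) := by
  have hUsub : blockOf P1 0 ⊆ range w := blockOf_subset h1 0
  set U := blockOf P1 0 with hUdef
  set V := insert w U with hVdef
  have hUelt : ∀ x ∈ U, x < w := fun x hx => mem_range.1 (hUsub hx)
  have hwU : w ∉ U := fun h => absurd (hUelt w h) (lt_irrefl w)
  have hP1elt : ∀ B ∈ P1, ∀ x ∈ B, x < w := fun B hB x hx => mem_range.1 (h1.2.1 B hB hx)
  have hP2elt : ∀ B ∈ P2, ∀ x ∈ B, w < x ∧ x < n := fun B hB x hx => by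
    have := mem_Ico.1 (h2.2.1 B hB hx); omega
  have hUP1 : 0 < w → U ∈ P1 ∧ 0 ∈ U := fun h0w => blockOf_mem h1 (mem_range.2 h0w)
  have h0V : (0 : ℕ) ∈ V := by
    rcases Nat.eq_zero_or_pos w with h | h
    · subst h; exact mem_insert_self 0 U
    · exact mem_insert_of_mem (hUP1 h).2
  have hVle : ∀ x ∈ V, x ≤ w := by
    intro x hx
    rcases mem_insert.1 hx with rfl | h
    · exact le_refl x
    · exact le_of_lt (hUelt x h)
  have hpsi : psi w (P1, P2) = insert V (P1.erase U ∪ P2) := rfl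
  have hNC : NCOn (range n) (psi w (P1, P2)) := by
    refine ⟨?_, ?_, ?_, ?_, ?_⟩
    · -- nonempty
      intro B hB
      rw [hpsi, mem_insert, mem_union] at hB
      rcases hB with rfl | hB | hB
      · exact ⟨w, mem_insert_self w U⟩
      · exact h1.1 B (mem_of_mem_erase hB)
      · exact h2.1 B hB
    · -- subset
      intro B hB
      rw [hpsi, mem_insert, mem_union] at hB
      rcases hB with rfl | hB | hB
      · intro x hx
        rcases mem_insert.1 hx with rfl | hx
        · exact mem_range.2 hw
        · exact mem_range.2 (lt_trans (hUelt x hx) hw)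
      · intro x hx
        exact mem_range.2 (lt_trans (hP1elt B (mem_of_mem_erase hB) x hx) hw)
      · intro x hx
        exact mem_range.2 (hP2elt B hB x hx).2
    · -- cover
      intro x hx
      have hxn := mem_range.1 hx
      rcases lt_trichotomy x w with hlt | rfl | hgt
      · obtain ⟨B, hB, hxB⟩ := h1.2.2.1 x (mem_range.2 hlt)
        by_cases hBU : B = U
        · exact ⟨V, by rw [hpsi]; exact mem_insert_self _ _,
            mem_insert_of_mem (by rw [← hBU]; exact hxB)⟩
        · exact ⟨B, by rw [hpsi, mem_insert, mem_union, mem_erase]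
                       exact Or.inr (Or.inl ⟨hBU, hB⟩), hxB⟩
      · exact ⟨V, by rw [hpsi]; exact mem_insert_self _ _, mem_insert_self x U⟩
      · obtain ⟨B, hB, hxB⟩ := h2.2.2.1 x (mem_Ico.2 ⟨by omega, hxn⟩)
        exact ⟨B, by rw [hpsi, mem_insert, mem_union]; exact Or.inr (Or.inr hB), hxB⟩
    · -- uniqueness
      intro B hB C hC x hxB hxC
      rw [hpsi, mem_insert, mem_union, mem_erase] at hB hC
      rcases hB with rfl | ⟨hBU, hBP1⟩ | hBP2 <;> rcases hC with rfl | ⟨hCU, hCP1⟩ | hCP2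
      · rfl
      · -- B = V, C ∈ P1 \ {U}
        have hxw : x < w := hP1elt C hCP1 x hxC
        have hxU : x ∈ U := by
          rcases mem_insert.1 hxB with rfl | h
          · omega
          · exact h
        obtain ⟨hUm, _⟩ := hUP1 (by omega)
        exact absurd (h1.2.2.2.1 U hUm C hCP1 x hxU hxC).symm hCU
      · -- B = V, C ∈ P2
        have h1' := hP2elt C hCP2 x hxC
        have h2' := hVle x hxB
        omega
      · -- symmetric of case 2
        have hxw : x < w := hP1elt B hBP1 x hxB
        have hxU : x ∈ U := by
          rcases mem_insert.1 hxC with rfl | h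
          · omega
          · exact h
        obtain ⟨hUm, _⟩ := hUP1 (by omega)
        exact absurd (h1.2.2.2.1 U hUm B hBP1 x hxU hxB).symm hBU
      · exact h1.2.2.2.1 B hBP1 C hCP1 x hxB hxC
      · have h1' := hP1elt B hBP1 x hxB
        have h2' := hP2elt C hCP2 x hxC
        omega
      · have h1' := hP2elt B hBP2 x hxB
        have h2' := hVle x hxC
        omega
      · have h1' := hP2elt B hBP2 x hxB
        have h2' := hP1elt C hCP1 x hxC
        omega
      · exact h2.2.2.2.1 B hBP2 C hCP2 x hxB hxC
    · -- non-crossing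
      rintro ⟨a, b, c, d, B, C, hB, hC, hBC, hab, hbc, hcd, haB, hcB, hbC, hdC⟩
      rw [hpsi, mem_insert, mem_union, mem_erase] at hB hC
      rcases hB with rfl | ⟨hBU, hBP1⟩ | hBP2 <;> rcases hC with rfl | ⟨hCU, hCP1⟩ | hCP2
      · exact hBC rfl
      · -- B = V, C ∈ P1 \ {U}
        have hdw : d < w := hP1elt C hCP1 d hdC
        have hcU : c ∈ U := by
          rcases mem_insert.1 hcB with rfl | h
          · omega
          · exact h
        have haU : a ∈ U := by
          rcases mem_insert.1 haB with rfl | h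
          · omega
          · exact h
        obtain ⟨hUm, _⟩ := hUP1 (by omega)
        exact h1.2.2.2.2 ⟨a, b, c, d, U, C, hUm, hCP1, fun h => hCU h.symm,
          hab, hbc, hcd, haU, hcU, hbC, hdC⟩
      · -- B = V, C ∈ P2
        have h1' := (hP2elt C hCP2 b hbC).1
        have h2' := hVle c hcB
        omega
      · -- B ∈ P1 \ {U}, C = V
        have hcw : c < w := hP1elt B hBP1 c hcB
        have hbU : b ∈ U := by
          rcases mem_insert.1 hbC with rfl | h
          · omega
          · exact h
        obtain ⟨hUm, h0U⟩ := hUP1 (by omega)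
        have ha0 : 0 < a := by
          rcases Nat.eq_zero_or_pos a with rfl | h
          · exact absurd (h1.2.2.2.1 B hBP1 U hUm 0 haB h0U) hBU
          · exact h
        exact h1.2.2.2.2 ⟨0, a, b, c, U, B, hUm, hBP1, fun h => hBU h.symm,
          ha0, hab, hbc, h0U, hbU, haB, hcB⟩
      · exact h1.2.2.2.2 ⟨a, b, c, d, B, C, hBP1, hCP1, hBC, hab, hbc, hcd, haB, hcB, hbC, hdC⟩
      · have h1' := hP1elt B hBP1 c hcB
        have h2' := (hP2elt C hCP2 b hbC).1
        omega
      · have h1' := (hP2elt B hBP2 a haB).1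
        have h2' := hVle b hbC
        omega
      · have h1' := (hP2elt B hBP2 a haB).1
        have h2' := hP1elt C hCP1 b hbC
        omega
      · exact h2.2.2.2.2 ⟨a, b, c, d, B, C, hBP2, hCP2, hBC, hab, hbc, hcd, haB, hcB, hbC, hdC⟩
  refine ⟨hNC, ?_⟩
  exact blockOf_eq hNC (by rw [hpsi]; exact mem_insert_self _ _) h0V


lemma insert_sup_id (hU : ∀ x ∈ blockOf P1 0, x < w) :
    (insert w (blockOf P1 0)).sup id = w := by
  refine le_antisymm (Finset.sup_le ?_) ?_
  · intro x hx
    rcases mem_insert.1 hx with rfl | h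
    · exact le_refl x
    · exact le_of_lt (hU x h)
  · exact Finset.le_sup (f := id) (mem_insert_self w _)

lemma phi_spec (hw : w < n) (hP : NCOn (range n) P)
    (hsup : (blockOf P 0).sup id = w) :
    NCOn (range w) (phi w n P).1 ∧ NCOn (Ico (w + 1) n) (phi w n P).2 := by
  have hn : 0 < n := by omega
  obtain ⟨hV0P, h0V0⟩ := blockOf_mem hP (mem_range.2 hn)
  set V0 := blockOf P 0 with hV0def
  have hwV0 : w ∈ V0 := by rw [← hsup]; exact sup_id_mem _ ⟨0, h0V0⟩
  have hle : ∀ x ∈ V0, x ≤ w := fun x hx => by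
    rw [← hsup]; exact Finset.le_sup (f := id) hx
  have hPelt : ∀ B ∈ P, ∀ x ∈ B, x < n := fun B hB x hx => mem_range.1 (hP.2.1 B hB hx)
  have huniq := hP.2.2.2.1
  have herasesub : V0.erase w ⊆ range w := fun y hy =>
    mem_range.2 (lt_of_le_of_ne (hle y (mem_of_mem_erase hy)) (mem_erase.1 hy).1)
  have hsplit : ∀ B ∈ P, B ≠ V0 → B ⊆ range w ∨ B ⊆ Ico (w + 1) n := by
    intro B hB hBV
    have hnew : ∀ y ∈ B, y ≠ w := fun y hy h =>
      hBV (huniq B hB V0 hV0P y hy (by rw [h]; exact hwV0))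
    have hne0 : ∀ y ∈ B, y ≠ 0 := fun y hy h =>
      hBV (huniq B hB V0 hV0P y hy (by rw [h]; exact h0V0))
    by_cases hex : ∃ y ∈ B, y < w
    · left
      obtain ⟨y1, hy1B, hy1⟩ := hex
      intro z hz
      rw [mem_range]
      by_contra hzw
      push_neg at hzw
      have hzw' : w < z := lt_of_le_of_ne hzw (Ne.symm (hnew z hz))
      exact hP.2.2.2.2 ⟨0, y1, w, z, V0, B, hV0P, hB, fun h => hBV h.symm,
        Nat.pos_of_ne_zero (hne0 y1 hy1B), hy1, hzw', h0V0, hwV0, hy1B, hz⟩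
    · right
      push_neg at hex
      intro z hz
      have h1' := hex z hz
      have h2' := hnew z hz
      exact mem_Ico.2 ⟨by omega, hPelt B hB z hz⟩
  constructor
  · -- first component
    show NCOn (range w) ((insert (V0.erase w) (P.erase V0)).filter
      (fun B => B.Nonempty ∧ B ⊆ range w))
    refine ⟨?_, ?_, ?_, ?_, ?_⟩
    · intro B hB; exact (mem_filter.1 hB).2.1
    · intro B hB; exact (mem_filter.1 hB).2.2
    · intro x hx
      have hxw := mem_range.1 hx
      obtain ⟨B, hB, hxB⟩ := hP.2.2.1 x (mem_range.2 (lt_trans hxw hw))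
      by_cases hBV : B = V0
      · refine ⟨V0.erase w, mem_filter.2 ⟨mem_insert_self _ _,
          ⟨x, mem_erase.2 ⟨by omega, by rw [← hBV]; exact hxB⟩⟩, herasesub⟩,
          mem_erase.2 ⟨by omega, by rw [← hBV]; exact hxB⟩⟩
      · rcases hsplit B hB hBV with h | h
        · exact ⟨B, mem_filter.2 ⟨mem_insert_of_mem (mem_erase.2 ⟨hBV, hB⟩),
            hP.1 B hB, h⟩, hxB⟩
        · exact absurd (mem_Ico.1 (h hxB)).1 (by omega)
    · intro B hB C hC x hxB hxC
      obtain ⟨hBm, _, _⟩ := mem_filter.1 hB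
      obtain ⟨hCm, _, _⟩ := mem_filter.1 hC
      rcases mem_insert.1 hBm with rfl | hBm <;> rcases mem_insert.1 hCm with rfl | hCm
      · rfl
      · exact absurd (huniq C (mem_of_mem_erase hCm) V0 hV0P x hxC
          (mem_of_mem_erase hxB)) (mem_erase.1 hCm).1
      · exact absurd (huniq B (mem_of_mem_erase hBm) V0 hV0P x hxB (mem_of_mem_erase hxC))
          (mem_erase.1 hBm).1
      · exact huniq B (mem_of_mem_erase hBm) C (mem_of_mem_erase hCm) x hxB hxC
    · rintro ⟨a, b, c, d, B, C, hB, hC, hBC, hab, hbc, hcd, haB, hcB, hbC, hdC⟩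
      obtain ⟨hBm, _, _⟩ := mem_filter.1 hB
      obtain ⟨hCm, _, _⟩ := mem_filter.1 hC
      rcases mem_insert.1 hBm with rfl | hBm <;> rcases mem_insert.1 hCm with rfl | hCm
      · exact hBC rfl
      · exact hP.2.2.2.2 ⟨a, b, c, d, V0, C, hV0P, mem_of_mem_erase hCm,
          fun h => (mem_erase.1 hCm).1 h.symm, hab, hbc, hcd,
          mem_of_mem_erase haB, mem_of_mem_erase hcB, hbC, hdC⟩
      · exact hP.2.2.2.2 ⟨a, b, c, d, B, V0, mem_of_mem_erase hBm, hV0P,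
          (mem_erase.1 hBm).1, hab, hbc, hcd, haB, hcB,
          mem_of_mem_erase hbC, mem_of_mem_erase hdC⟩
      · exact hP.2.2.2.2 ⟨a, b, c, d, B, C, mem_of_mem_erase hBm, mem_of_mem_erase hCm,
          hBC, hab, hbc, hcd, haB, hcB, hbC, hdC⟩
  · -- second component
    show NCOn (Ico (w + 1) n) (P.filter (fun B => B ⊆ Ico (w + 1) n))
    refine ⟨?_, ?_, ?_, ?_, ?_⟩
    · intro B hB; exact hP.1 B (mem_of_mem_filter B hB)
    · intro B hB; exact (mem_filter.1 hB).2
    · intro x hx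
      obtain ⟨hx1, hx2⟩ := mem_Ico.1 hx
      obtain ⟨B, hB, hxB⟩ := hP.2.2.1 x (mem_range.2 hx2)
      have hBV : B ≠ V0 := fun h => by
        have := hle x (by rw [← h]; exact hxB); omega
      rcases hsplit B hB hBV with h | h
      · exact absurd (mem_range.1 (h hxB)) (by omega)
      · exact ⟨B, mem_filter.2 ⟨hB, h⟩, hxB⟩
    · intro B hB C hC x hxB hxC
      exact huniq B (mem_of_mem_filter B hB) C (mem_of_mem_filter C hC) x hxB hxC
    · exact IsNonCrossing.mono hP.2.2.2.2 (filter_subset _ _)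


lemma phi_blockOf (hw : w < n) (hP : NCOn (range n) P)
    (hsup : (blockOf P 0).sup id = w) :
    blockOf (phi w n P).1 0 = (blockOf P 0).erase w := by
  have hn : 0 < n := by omega
  obtain ⟨hV0P, h0V0⟩ := blockOf_mem hP (mem_range.2 hn)
  set V0 := blockOf P 0 with hV0def
  have hle : ∀ x ∈ V0, x ≤ w := fun x hx => by
    rw [← hsup]; exact Finset.le_sup (f := id) hx
  have herasesub : V0.erase w ⊆ range w := fun y hy =>
    mem_range.2 (lt_of_le_of_ne (hle y (mem_of_mem_erase hy)) (mem_erase.1 hy).1)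
  by_cases hw0 : 0 < w
  · have h0mem : 0 ∈ V0.erase w := mem_erase.2 ⟨by omega, h0V0⟩
    have hmem : V0.erase w ∈ (phi w n P).1 :=
      mem_filter.2 ⟨mem_insert_self _ _, ⟨0, h0mem⟩, herasesub⟩
    exact blockOf_eq (phi_spec hw hP hsup).1 hmem h0mem
  · have hweq : w = 0 := by omega
    have hV0e : V0.erase w = ∅ := by
      refine eq_empty_of_forall_notMem fun y hy => ?_
      have h1' := hle y (mem_of_mem_erase hy)
      have h2' := (mem_erase.1 hy).1
      omega
    have hP1e : (phi w n P).1 = ∅ := by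
      refine eq_empty_of_forall_notMem fun B hB => ?_
      obtain ⟨_, ⟨x, hx⟩, hsub⟩ := mem_filter.1 hB
      have := mem_range.1 (hsub hx)
      omega
    rw [hP1e, blockOf_empty, hV0e]

lemma psi_phi (hw : w < n) (hP : NCOn (range n) P)
    (hsup : (blockOf P 0).sup id = w) : psi w (phi w n P) = P := by
  have hn : 0 < n := by omega
  obtain ⟨hV0P, h0V0⟩ := blockOf_mem hP (mem_range.2 hn)
  set V0 := blockOf P 0 with hV0def
  have hwV0 : w ∈ V0 := by rw [← hsup]; exact sup_id_mem _ ⟨0, h0V0⟩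
  have hle : ∀ x ∈ V0, x ≤ w := fun x hx => by
    rw [← hsup]; exact Finset.le_sup (f := id) hx
  have huniq := hP.2.2.2.1
  have hsplit : ∀ B ∈ P, B ≠ V0 → B ⊆ range w ∨ B ⊆ Ico (w + 1) n := by
    intro B hB hBV
    have hnew : ∀ y ∈ B, y ≠ w := fun y hy h =>
      hBV (huniq B hB V0 hV0P y hy (by rw [h]; exact hwV0))
    have hne0 : ∀ y ∈ B, y ≠ 0 := fun y hy h =>
      hBV (huniq B hB V0 hV0P y hy (by rw [h]; exact h0V0))
    by_cases hex : ∃ y ∈ B, y < w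
    · left
      obtain ⟨y1, hy1B, hy1⟩ := hex
      intro z hz
      rw [mem_range]
      by_contra hzw
      push_neg at hzw
      have hzw' : w < z := lt_of_le_of_ne hzw (Ne.symm (hnew z hz))
      exact hP.2.2.2.2 ⟨0, y1, w, z, V0, B, hV0P, hB, fun h => hBV h.symm,
        Nat.pos_of_ne_zero (hne0 y1 hy1B), hy1, hzw', h0V0, hwV0, hy1B, hz⟩
    · right
      push_neg at hex
      intro z hz
      have h1' := hex z hz
      have h2' := hnew z hz
      exact mem_Ico.2 ⟨by omega, mem_range.1 (hP.2.1 B hB hz)⟩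
  have hblock1 := phi_blockOf hw hP hsup
  have hpsiphi : psi w (phi w n P)
      = insert (insert w (V0.erase w)) ((phi w n P).1.erase (V0.erase w) ∪ (phi w n P).2) := by
    rw [psi, hblock1]
  rw [hpsiphi, Finset.insert_erase hwV0]
  ext B
  constructor
  · intro hB
    rcases mem_insert.1 hB with rfl | hB
    · exact hV0P
    · rcases mem_union.1 hB with hB | hB
      · have hB1 := mem_of_mem_erase hB
        obtain ⟨hBm, _, _⟩ := mem_filter.1 hB1
        rcases mem_insert.1 hBm with rfl | hBm
        · exact absurd rfl (mem_erase.1 hB).1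
        · exact mem_of_mem_erase hBm
      · exact mem_of_mem_filter B hB
  · intro hBP
    by_cases hBV : B = V0
    · rw [hBV]; exact mem_insert_self _ _
    · apply mem_insert_of_mem
      rcases hsplit B hBP hBV with h | h
      · apply mem_union_left
        refine mem_erase.2 ⟨?_, ?_⟩
        · intro heq
          obtain ⟨x, hx⟩ := hP.1 B hBP
          have hxV0 : x ∈ V0 := mem_of_mem_erase (by rw [← heq]; exact hx)
          exact hBV (huniq B hBP V0 hV0P x hx hxV0)
        · exact mem_filter.2 ⟨mem_insert_of_mem (mem_erase.2 ⟨hBV, hBP⟩), hP.1 B hBP, h⟩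
      · exact mem_union_right _ (mem_filter.2 ⟨hBP, h⟩)

lemma phi_psi (hw : w < n) (h1 : NCOn (range w) P1) (h2 : NCOn (Ico (w + 1) n) P2) :
    phi w n (psi w (P1, P2)) = (P1, P2) := by
  obtain ⟨hNC, hblock⟩ := psi_spec hw h1 h2
  have hUsub : blockOf P1 0 ⊆ range w := blockOf_subset h1 0
  set U := blockOf P1 0 with hUdef
  set V := insert w U with hVdef
  have hUelt : ∀ x ∈ U, x < w := fun x hx => mem_range.1 (hUsub hx)
  have hwU : w ∉ U := fun h => absurd (hUelt w h) (lt_irrefl w)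
  have hP1elt : ∀ B ∈ P1, ∀ x ∈ B, x < w := fun B hB x hx => mem_range.1 (h1.2.1 B hB hx)
  have hP2elt : ∀ B ∈ P2, ∀ x ∈ B, w < x ∧ x < n := fun B hB x hx => by
    have := mem_Ico.1 (h2.2.1 B hB hx); omega
  have hUP1 : 0 < w → U ∈ P1 ∧ 0 ∈ U := fun h0w => blockOf_mem h1 (mem_range.2 h0w)
  have hVnot : V ∉ P1.erase U ∪ P2 := by
    intro h
    rcases mem_union.1 h with h | h
    · exact absurd (hP1elt V (mem_of_mem_erase h) w (mem_insert_self w U)) (lt_irrefl w)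
    · exact absurd (hP2elt V h w (mem_insert_self w U)).1 (lt_irrefl w)
  have hpsi : psi w (P1, P2) = insert V (P1.erase U ∪ P2) := rfl
  have herase : (psi w (P1, P2)).erase V = P1.erase U ∪ P2 := by
    rw [hpsi]; exact Finset.erase_insert hVnot
  have hfst : (phi w n (psi w (P1, P2))).1 = P1 := by
    show (insert ((blockOf (psi w (P1, P2)) 0).erase w)
        ((psi w (P1, P2)).erase (blockOf (psi w (P1, P2)) 0))).filter
        (fun B => B.Nonempty ∧ B ⊆ range w) = P1
    rw [hblock]
    show (insert (V.erase w) ((psi w (P1, P2)).erase V)).filter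
        (fun B => B.Nonempty ∧ B ⊆ range w) = P1
    rw [herase, hVdef, Finset.erase_insert hwU]
    ext B
    constructor
    · intro hB
      obtain ⟨hBm, hBne, hBsub⟩ := mem_filter.1 hB
      rcases mem_insert.1 hBm with rfl | hBm
      · obtain ⟨x, hx⟩ := hBne
        exact (hUP1 (by have := hUelt x hx; omega)).1
      · rcases mem_union.1 hBm with hBm | hBm
        · exact mem_of_mem_erase hBm
        · obtain ⟨x, hx⟩ := hBne
          have := (hP2elt B hBm x hx).1
          have := mem_range.1 (hBsub hx)
          omega
    · intro hB
      refine mem_filter.2 ⟨?_, h1.1 B hB, h1.2.1 B hB⟩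
      by_cases hBU : B = U
      · rw [hBU]; exact mem_insert_self _ _
      · exact mem_insert_of_mem (mem_union_left _ (mem_erase.2 ⟨hBU, hB⟩))
  have hsnd : (phi w n (psi w (P1, P2))).2 = P2 := by
    show (psi w (P1, P2)).filter (fun B => B ⊆ Ico (w + 1) n) = P2
    ext B
    constructor
    · intro hB
      obtain ⟨hBm, hBsub⟩ := mem_filter.1 hB
      rw [hpsi] at hBm
      rcases mem_insert.1 hBm with rfl | hBm
      · have := (mem_Ico.1 (hBsub (mem_insert_self w U))).1
        omega
      · rcases mem_union.1 hBm with hBm | hBm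
        · obtain ⟨x, hx⟩ := h1.1 B (mem_of_mem_erase hBm)
          have := hP1elt B (mem_of_mem_erase hBm) x hx
          have := (mem_Ico.1 (hBsub hx)).1
          omega
        · exact hBm
    · intro hB
      refine mem_filter.2 ⟨?_, h2.2.1 B hB⟩
      rw [hpsi]
      exact mem_insert_of_mem (mem_union_right _ hB)
  exact Prod.ext hfst hsnd

end Decomp

section Weights

variable {R : Type*} [CommRing R]

noncomputable def wt (F : ℕ → R) (t : ℕ) (P : Finset (Finset ℕ)) : R :=
  F ((blockOf P 0).card + t) * ∏ B ∈ P.erase (blockOf P 0), F B.card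

noncomputable def g (F : ℕ → R) (t n : ℕ) : R := ∑ P ∈ ncp (range n), wt F t P

lemma psi_wt (F : ℕ → R) (t : ℕ) {w n : ℕ} {P1 P2 : Finset (Finset ℕ)}
    (hw : w < n) (h1 : NCOn (range w) P1) (h2 : NCOn (Ico (w + 1) n) P2) :
    wt F t (psi w (P1, P2)) = wt F (t + 1) P1 * ∏ B ∈ P2, F B.card := by
  obtain ⟨hNC, hblock⟩ := psi_spec hw h1 h2
  have hUsub : blockOf P1 0 ⊆ range w := blockOf_subset h1 0
  set U := blockOf P1 0 with hUdef
  set V := insert w U with hVdef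
  have hUelt : ∀ x ∈ U, x < w := fun x hx => mem_range.1 (hUsub hx)
  have hwU : w ∉ U := fun h => absurd (hUelt w h) (lt_irrefl w)
  have hP1elt : ∀ B ∈ P1, ∀ x ∈ B, x < w := fun B hB x hx => mem_range.1 (h1.2.1 B hB hx)
  have hP2elt : ∀ B ∈ P2, ∀ x ∈ B, w < x ∧ x < n := fun B hB x hx => by
    have := mem_Ico.1 (h2.2.1 B hB hx); omega
  have hVnot : V ∉ P1.erase U ∪ P2 := by
    intro h
    rcases mem_union.1 h with h | h
    · exact absurd (hP1elt V (mem_of_mem_erase h) w (mem_insert_self w U)) (lt_irrefl w)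
    · exact absurd (hP2elt V h w (mem_insert_self w U)).1 (lt_irrefl w)
  have hdisj : Disjoint (P1.erase U) P2 := by
    rw [Finset.disjoint_left]
    intro B hB1 hB2
    obtain ⟨x, hx⟩ := h2.1 B hB2
    have := hP1elt B (mem_of_mem_erase hB1) x hx
    have := (hP2elt B hB2 x hx).1
    omega
  have herase : (psi w (P1, P2)).erase V = P1.erase U ∪ P2 :=
    Finset.erase_insert hVnot
  rw [wt, hblock]
  show F (V.card + t) * ∏ B ∈ (psi w (P1, P2)).erase V, F B.card = _
  rw [herase, Finset.prod_union hdisj, hVdef, Finset.card_insert_of_notMem hwU]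
  rw [wt]
  rw [show U.card + 1 + t = U.card + (t + 1) by omega]
  ring

lemma wt_zero (F : ℕ → R) (hF0 : F 0 = 1) {n : ℕ} {P : Finset (Finset ℕ)}
    (hP : NCOn (range n) P) : wt F 0 P = ∏ B ∈ P, F B.card := by
  by_cases hn : 0 < n
  · obtain ⟨hV0P, _⟩ := blockOf_mem hP (mem_range.2 hn)
    rw [wt, Nat.add_zero]
    exact Finset.mul_prod_erase P (fun B => F B.card) hV0P
  · have hn0 : n = 0 := by omega
    have hPe : P = ∅ := by
      refine eq_empty_of_forall_notMem fun B hB => ?_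
      obtain ⟨x, hx⟩ := hP.1 B hB
      have := mem_range.1 (hP.2.1 B hB hx)
      omega
    subst hPe
    simp [wt, hF0]

lemma g_zero (F : ℕ → R) (t : ℕ) : g F t 0 = F t := by
  rw [g, range_zero, ncp_empty, Finset.sum_singleton]
  simp [wt]

lemma g_eq_sum (F : ℕ → R) (hF0 : F 0 = 1) (n : ℕ) :
    g F 0 n = ∑ P ∈ ncp (range n), ∏ B ∈ P, F B.card := by
  rw [g]
  exact Finset.sum_congr rfl fun P hP => wt_zero F hF0 (mem_ncp.1 hP)

lemma image_range_add (m c : ℕ) : (range m).image (· + c) = Ico c (c + m) := by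
  ext x
  simp only [Finset.mem_image, Finset.mem_range, Finset.mem_Ico]
  constructor
  · rintro ⟨a, ha, rfl⟩; omega
  · rintro ⟨hx1, hx2⟩; exact ⟨x - c, by omega, by omega⟩

lemma grec (F : ℕ → R) (hF0 : F 0 = 1) {n : ℕ} (hn : 1 ≤ n) (t : ℕ) :
    g F t n = ∑ w ∈ range n, g F (t + 1) w * g F 0 (n - 1 - w) := by
  classical
  have hmaps : ∀ P ∈ ncp (range n), (blockOf P 0).sup id ∈ range n := by
    intro P hP
    rw [mem_ncp] at hP
    obtain ⟨_, h0V0⟩ := blockOf_mem hP (mem_range.2 hn)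
    exact blockOf_subset hP 0 (sup_id_mem _ ⟨0, h0V0⟩)
  rw [g, ← Finset.sum_fiberwise_of_maps_to hmaps]
  refine Finset.sum_congr rfl fun w hw' => ?_
  have hw : w < n := mem_range.1 hw'
  have step1 : ∑ P ∈ (ncp (range n)).filter (fun P => (blockOf P 0).sup id = w), wt F t P
      = ∑ p ∈ ncp (range w) ×ˢ ncp (Ico (w + 1) n), wt F (t + 1) p.1 * ∏ B ∈ p.2, F B.card := by
    refine Finset.sum_nbij' (phi w n) (psi w) ?_ ?_ ?_ ?_ ?_
    · intro P hP
      obtain ⟨hP1, hsup⟩ := mem_filter.1 hP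
      have hP' := mem_ncp.1 hP1
      obtain ⟨hf, hs⟩ := phi_spec hw hP' hsup
      exact Finset.mem_product.2 ⟨mem_ncp.2 hf, mem_ncp.2 hs⟩
    · rintro ⟨P1, P2⟩ hp
      obtain ⟨hp1, hp2⟩ := Finset.mem_product.1 hp
      rw [mem_ncp] at hp1 hp2
      obtain ⟨hNC, hblock⟩ := psi_spec hw hp1 hp2
      refine mem_filter.2 ⟨mem_ncp.2 hNC, ?_⟩
      rw [hblock]
      exact insert_sup_id (fun x hx => mem_range.1 (blockOf_subset hp1 0 hx))
    · intro P hP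
      obtain ⟨hP1, hsup⟩ := mem_filter.1 hP
      exact psi_phi hw (mem_ncp.1 hP1) hsup
    · rintro ⟨P1, P2⟩ hp
      obtain ⟨hp1, hp2⟩ := Finset.mem_product.1 hp
      exact phi_psi hw (mem_ncp.1 hp1) (mem_ncp.1 hp2)
    · intro P hP
      obtain ⟨hP1, hsup⟩ := mem_filter.1 hP
      have hP' := mem_ncp.1 hP1
      have := psi_wt F t hw ((phi_spec hw hP' hsup).1) ((phi_spec hw hP' hsup).2)
      rw [show ((phi w n P).1, (phi w n P).2) = phi w n P from rfl, psi_phi hw hP' hsup] at this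
      exact this
  rw [step1, Finset.sum_product]
  have goal2 : ∑ x ∈ ncp (range w), ∑ y ∈ ncp (Ico (w + 1) n),
      wt F (t + 1) x * ∏ B ∈ y, F B.card = g F (t + 1) w * g F 0 (n - 1 - w) := by
    rw [← Finset.sum_mul_sum]
    congr 1
    have himg : (range (n - 1 - w)).image (· + (w + 1)) = Ico (w + 1) n := by
      rw [image_range_add]
      congr 1
      omega
    have htrans := ncp_sum_transfer (· + (w + 1))
      (fun a b hab => by simpa using Nat.add_lt_add_right hab (w + 1)) (range (n - 1 - w)) F
    rw [himg] at htrans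
    rw [← htrans, ← g_eq_sum F hF0]
  exact goal2

end Weights

section Bridge

variable {R : Type*} [CommRing R]

lemma NCFinset_eq (n : ℕ) : NCFinset n = ncp (univ : Finset (Fin n)) := by
  classical
  ext P
  simp only [NCFinset, Finset.mem_filter, Finset.mem_univ, true_and, mem_ncp]
  constructor
  · rintro ⟨⟨hne, huniq⟩, hNC⟩
    refine ⟨hne, fun B _ => subset_univ B, fun x _ => ?_, ?_, hNC⟩
    · obtain ⟨B, ⟨hB, hxB⟩, _⟩ := huniq x
      exact ⟨B, hB, hxB⟩
    · intro B hB C hC x hxB hxC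
      obtain ⟨D, _, hD⟩ := huniq x
      rw [hD B ⟨hB, hxB⟩, hD C ⟨hC, hxC⟩]
  · rintro ⟨hne, _, hcov, huniq, hNC⟩
    refine ⟨⟨hne, fun x => ?_⟩, hNC⟩
    obtain ⟨B, hB, hxB⟩ := hcov x (mem_univ x)
    exact ⟨B, ⟨hB, hxB⟩, fun C hC => huniq C hC.1 B hB x hC.2 hxB⟩

lemma image_val_univ (n : ℕ) : (univ : Finset (Fin n)).image Fin.val = range n := by
  ext x
  simp only [Finset.mem_image, Finset.mem_univ, true_and, Finset.mem_range]
  constructor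
  · rintro ⟨a, rfl⟩; exact a.isLt
  · intro hx; exact ⟨⟨x, hx⟩, rfl⟩

lemma sum_NCFinset (κ : ℕ → R) (n : ℕ) :
    ∑ P ∈ NCFinset n, ∏ B ∈ P, κ B.card
      = g (fun j => if j = 0 then (1 : R) else κ j) 0 n := by
  classical
  set F := fun j => if j = 0 then (1 : R) else κ j with hF
  have h1 : ∑ P ∈ NCFinset n, ∏ B ∈ P, κ B.card
      = ∑ P ∈ ncp (univ : Finset (Fin n)), ∏ B ∈ P, F B.card := by
    rw [NCFinset_eq n]
    refine Finset.sum_congr rfl fun P hP => Finset.prod_congr rfl fun B hB => ?_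
    have hne := (mem_ncp.1 hP).1 B hB
    have hcard : B.card ≠ 0 := Nat.pos_iff_ne_zero.1 (Finset.card_pos.2 hne)
    simp only [hF]
    rw [if_neg hcard]
  rw [h1]
  have htrans := ncp_sum_transfer Fin.val Fin.val_strictMono (univ : Finset (Fin n)) F
  rw [image_val_univ] at htrans
  rw [htrans, ← g_eq_sum F (by simp [hF])]

open PowerSeries in
lemma coeff_XM_pow (M : PowerSeries R) (k j : ℕ) :
    coeff k ((X * M) ^ j) = if j ≤ k then coeff (k - j) (M ^ j) else 0 := by
  rw [mul_pow, mul_comm (X ^ j) (M ^ j), PowerSeries.coeff_mul_X_pow']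

open PowerSeries in
lemma g_eq_series (F : ℕ → R) (hF0 : F 0 = 1) (M : PowerSeries R)
    (hM : ∀ b, coeff b M = g F 0 b) :
    ∀ k t, g F t k = ∑ j ∈ range (k + 1), F (j + t) * coeff k ((X * M) ^ j) := by
  intro k
  induction k using Nat.strong_induction_on with
  | _ k IH =>
    intro t
    rcases k with _ | k'
    · rw [g_zero, Finset.sum_range_one]
      simp [PowerSeries.coeff_one]
    · rw [grec F hF0 (show 1 ≤ k' + 1 by omega) t]
      simp only [Nat.add_sub_cancel]
      rw [← Finset.Nat.sum_antidiagonal_eq_sum_range_succ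
        (fun a b => g F (t + 1) a * g F 0 b) k']
      have hterm : ∀ p ∈ Finset.HasAntidiagonal.antidiagonal k', g F (t + 1) p.1 * g F 0 p.2
          = ∑ i ∈ range (k' + 2),
              F (i + (t + 1)) * coeff p.1 ((X * M) ^ i) * coeff p.2 M := by
        intro p hp
        have hab := Finset.HasAntidiagonal.mem_antidiagonal.1 hp
        rw [IH p.1 (by omega) (t + 1), ← hM p.2, Finset.sum_mul]
        refine Finset.sum_subset (Finset.range_subset_range.2 (by omega)) ?_
        intro i hi hni
        have hip : p.1 < i := by
          simp only [Finset.mem_range] at hi hni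
          omega
        rw [coeff_XM_pow, if_neg (by omega)]
        ring
      rw [Finset.sum_congr rfl hterm, Finset.sum_comm]
      have hinner : ∀ i ∈ range (k' + 2),
          (∑ p ∈ Finset.HasAntidiagonal.antidiagonal k',
            F (i + (t + 1)) * coeff p.1 ((X * M) ^ i) * coeff p.2 M)
          = F (i + (t + 1)) * coeff (k' + 1) ((X * M) ^ (i + 1)) := by
        intro i _
        have h1 : coeff (k' + 1) ((X * M) ^ (i + 1))
            = coeff k' ((X * M) ^ i * M) := by
          rw [show (X * M) ^ (i + 1) = X * ((X * M) ^ i * M) by ring]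
          exact PowerSeries.coeff_succ_X_mul k' _
        rw [h1, PowerSeries.coeff_mul, Finset.mul_sum]
        exact Finset.sum_congr rfl fun p _ => by ring
      rw [Finset.sum_congr rfl hinner]
      rw [Finset.sum_range_succ'
        (fun j => F (j + t) * coeff (k' + 1) ((X * M) ^ j)) (k' + 1)]
      rw [Finset.sum_range_succ
        (fun i => F (i + (t + 1)) * coeff (k' + 1) ((X * M) ^ (i + 1))) (k' + 1)]
      have hz1 : coeff (k' + 1) ((X * M) ^ (k' + 1 + 1)) = 0 := by
        rw [coeff_XM_pow, if_neg (by omega)]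
      have hz2 : coeff (k' + 1) ((X * M) ^ 0) = 0 := by
        rw [pow_zero, PowerSeries.coeff_one, if_neg (by omega)]
      rw [hz1, hz2, mul_zero, add_zero, mul_zero, add_zero]
      exact Finset.sum_congr rfl fun i _ => by rw [show i + (t + 1) = i + 1 + t by omega]

lemma coeff_genSeries_m (m κ : ℕ → R)
    (h : ∀ n, 1 ≤ n → m n = ∑ P ∈ NCFinset n, ∏ B ∈ P, κ B.card) :
    ∀ b, PowerSeries.coeff b (genSeries R m)
      = g (fun j => if j = 0 then (1 : R) else κ j) 0 b := by
  intro b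
  rw [genSeries, PowerSeries.coeff_mk]
  rcases Nat.eq_zero_or_pos b with rfl | hb
  · rw [if_pos rfl, g_zero]
    simp
  · rw [if_neg (by omega), h b hb, sum_NCFinset κ b]

end Bridge

end MCaux

/-- **The moment–cumulant functional equation `M(z) = C(z·M(z))`.** If the
sequences `(m_n)` and `(κ_n)` satisfy the free moment–cumulant relation
`m_n = Σ_{π ∈ NC(n)} Π_{V ∈ π} κ_{|V|}` for all `n ≥ 1`, and
`M(z) = 1 + Σ_{n≥1} m_n zⁿ`, `C(z) = 1 + Σ_{n≥1} κ_n zⁿ`, then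
`M(z) = C(z·M(z))`, stated coefficient-wise: the `k`-th coefficient of `M`
equals the `k`-th coefficient of `Σ_{j ≤ k} C_j · (z·M(z))ʲ` (the substitution
of the constant-term-zero series `z·M(z)` into `C`, in which terms with `j > k`
do not contribute to the `k`-th coefficient). -/
theorem moment_cumulant_functional_equation (R : Type*) [CommRing R] (m κ : ℕ → R)
    (h : ∀ n, 1 ≤ n → m n = ∑ P ∈ NCFinset n, ∏ B ∈ P, κ B.card) :
    ∀ k : ℕ,
      PowerSeries.coeff k (genSeries R m) =
        ∑ j ∈ Finset.range (k + 1),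
          PowerSeries.coeff j (genSeries R κ) *
            PowerSeries.coeff k ((PowerSeries.X * genSeries R m) ^ j) := by
  intro k
  have hM := MCaux.coeff_genSeries_m m κ h
  rw [hM k, MCaux.g_eq_series (fun j => if j = 0 then (1 : R) else κ j) (by simp)
    (genSeries R m) hM k 0]
  refine Finset.sum_congr rfl fun j _ => ?_
  congr 1
  simp [genSeries, PowerSeries.coeff_mk]
end

section
/- For every integer n ≥ 0, ∫_{−2}^{2} xⁿ · (1/(2π))·√(4 − x²) dx equals the Catalan number catalan(n/2) when n is even, and equals 0 when n is odd. In particular the semicircular distribution is a probability measure whose moments are the Catalan numbers. -/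
open MeasureTheory intervalIntegral Real

private lemma sc_cont : Continuous fun x : ℝ => Real.sqrt (4 - x ^ 2) := by
  fun_prop

private noncomputable def scJ (m : ℕ) : ℝ := ∫ x in (-2 : ℝ)..2, x ^ m * Real.sqrt (4 - x ^ 2)

private lemma scJ_intable (m : ℕ) :
    IntervalIntegrable (fun x : ℝ => x ^ m * Real.sqrt (4 - x ^ 2)) volume (-2) 2 :=
  ((continuous_pow m).mul sc_cont).intervalIntegrable _ _

private lemma scJ_zero : scJ 0 = 2 * π := by
  have h : ∀ x : ℝ, Real.sqrt (4 - x ^ 2) = 2 * Real.sqrt (1 - (x / 2) ^ 2) := by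
    intro x
    rw [show (4 : ℝ) - x ^ 2 = 4 * (1 - (x / 2) ^ 2) by ring, show (4:ℝ) = 2^2 by norm_num,
      Real.sqrt_mul (by positivity), Real.sqrt_sq (by norm_num)]
  simp only [scJ, pow_zero, one_mul]
  rw [intervalIntegral.integral_congr (fun x _ => h x), intervalIntegral.integral_const_mul]
  have := intervalIntegral.integral_comp_div (a := (-2:ℝ)) (b := 2)
    (fun u : ℝ => Real.sqrt (1 - u ^ 2)) (c := (2:ℝ)) (by norm_num)
  norm_num at this
  rw [this, integral_sqrt_one_sub_sq]
  ring

private lemma scJ_hasDeriv (m : ℕ) {x : ℝ} (hx : x ∈ Set.Ioo (-2 : ℝ) 2) :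
    HasDerivAt (fun x : ℝ => x ^ (2 * m + 1) * ((4 - x ^ 2) * Real.sqrt (4 - x ^ 2)))
      (Real.sqrt (4 - x ^ 2) * (((2 * m : ℝ) + 1) * x ^ (2 * m) * (4 - x ^ 2)
        - 3 * x ^ (2 * m + 2))) x := by
  have hpos : (0 : ℝ) < 4 - x ^ 2 := by
    nlinarith [hx.1, hx.2]
  have hinner : HasDerivAt (fun x : ℝ => 4 - x ^ 2) (-(2 * x)) x := by
    simpa using ((hasDerivAt_pow 2 x).const_sub 4)
  have hsqrt : HasDerivAt (fun x : ℝ => Real.sqrt (4 - x ^ 2))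
      (1 / (2 * Real.sqrt (4 - x ^ 2)) * (-(2 * x))) x :=
    (Real.hasDerivAt_sqrt hpos.ne').comp x hinner
  have hp : HasDerivAt (fun x : ℝ => x ^ (2 * m + 1)) ((2 * m + 1 : ℕ) * x ^ (2 * m)) x := by
    simpa using hasDerivAt_pow (2 * m + 1) x
  have := hp.mul ((hinner.mul hsqrt))
  refine HasDerivAt.congr_deriv this ?_
  have hs : Real.sqrt (4 - x ^ 2) ^ 2 = 4 - x ^ 2 := Real.sq_sqrt hpos.le
  have hsne : Real.sqrt (4 - x ^ 2) ≠ 0 := by positivity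
  have h4 : (4 - x ^ 2) * (1 / (2 * Real.sqrt (4 - x ^ 2)) * -(2 * x))
      = -x * Real.sqrt (4 - x ^ 2) := by
    rw [show -x * Real.sqrt (4 - x ^ 2) = -x * ((4 - x ^ 2) / Real.sqrt (4 - x ^ 2)) by
      rw [Real.div_sqrt]]
    field_simp
  rw [h4]
  simp only [Pi.mul_apply]
  push_cast
  ring

private lemma scJ_rec (m : ℕ) :
    ((2 * m : ℝ) + 4) * scJ (2 * m + 2) = ((8 * m : ℝ) + 4) * scJ (2 * m) := by
  set F : ℝ → ℝ := fun x => x ^ (2 * m + 1) * ((4 - x ^ 2) * Real.sqrt (4 - x ^ 2)) with hF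
  set F' : ℝ → ℝ := fun x => Real.sqrt (4 - x ^ 2) * (((2 * m : ℝ) + 1) * x ^ (2 * m) * (4 - x ^ 2)
    - 3 * x ^ (2 * m + 2)) with hF'
  have hFcont : ContinuousOn F (Set.Icc (-2) 2) := by
    apply Continuous.continuousOn; fun_prop
  have hF'cont : Continuous F' := by fun_prop
  have key : (∫ x in (-2 : ℝ)..2, F' x) = F 2 - F (-2) :=
    intervalIntegral.integral_eq_sub_of_hasDerivAt_of_le (by norm_num) hFcont
      (fun x hx => scJ_hasDeriv m hx) (hF'cont.intervalIntegrable _ _)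
  have hF2 : F 2 - F (-2) = 0 := by norm_num [hF]
  have hsplit : ∀ x : ℝ, F' x = ((8 * m : ℝ) + 4) * (x ^ (2 * m) * Real.sqrt (4 - x ^ 2))
      - ((2 * m : ℝ) + 4) * (x ^ (2 * m + 2) * Real.sqrt (4 - x ^ 2)) := by
    intro x; simp only [hF']; ring
  have : (∫ x in (-2 : ℝ)..2, F' x)
      = ((8 * m : ℝ) + 4) * scJ (2 * m) - ((2 * m : ℝ) + 4) * scJ (2 * m + 2) := by
    rw [intervalIntegral.integral_congr (fun x _ => hsplit x),
      intervalIntegral.integral_sub (((scJ_intable (2*m)).const_mul _))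
        ((scJ_intable (2*m+2)).const_mul _),
      intervalIntegral.integral_const_mul, intervalIntegral.integral_const_mul]
    rfl
  rw [key, hF2] at this
  linarith

private lemma catalan_rec (m : ℕ) :
    ((2 * m : ℝ) + 4) * (catalan (m + 1) : ℝ) = ((8 * m : ℝ) + 4) * (catalan m : ℝ) := by
  have h1 := succ_mul_catalan_eq_centralBinom (m + 1)
  have h2 := succ_mul_catalan_eq_centralBinom m
  have h3 := Nat.succ_mul_centralBinom_succ m
  have hnat : (m + 2) * catalan (m + 1) = 2 * (2 * m + 1) * catalan m := by
    have : (m + 1) * ((m + 2) * catalan (m + 1)) = (m + 1) * (2 * (2 * m + 1) * catalan m) := by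
      calc (m + 1) * ((m + 2) * catalan (m + 1)) = (m + 1) * ((m + 1 + 1) * catalan (m + 1)) := by
            ring_nf
        _ = (m + 1) * Nat.centralBinom (m + 1) := by rw [h1]
        _ = 2 * (2 * m + 1) * Nat.centralBinom m := h3
        _ = 2 * (2 * m + 1) * ((m + 1) * catalan m) := by rw [h2]
        _ = (m + 1) * (2 * (2 * m + 1) * catalan m) := by ring
    exact Nat.eq_of_mul_eq_mul_left (Nat.succ_pos m) this
  have := congrArg (fun k : ℕ => (k : ℝ)) hnat
  push_cast at this
  linarith

private lemma scJ_even (m : ℕ) : scJ (2 * m) = 2 * π * (catalan m : ℝ) := by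
  induction m with
  | zero => simpa using scJ_zero
  | succ k ih =>
    have h1 := scJ_rec k
    have h2 := catalan_rec k
    have hne : ((2 * k : ℝ) + 4) ≠ 0 := by positivity
    rw [show 2 * (k + 1) = 2 * k + 2 from by ring]
    rw [ih] at h1
    have key : ((2 * k : ℝ) + 4) * scJ (2 * k + 2)
        = ((2 * k : ℝ) + 4) * (2 * Real.pi * (catalan (k + 1) : ℝ)) := by
      rw [h1]; linear_combination (-(2 * Real.pi)) * h2
    exact mul_left_cancel₀ hne key

private lemma scJ_odd (m : ℕ) (hm : Odd m) : scJ m = 0 := by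
  have h := intervalIntegral.integral_comp_neg (a := (-2:ℝ)) (b := 2)
    (fun x : ℝ => x ^ m * Real.sqrt (4 - x ^ 2))
  have hodd : ∀ x : ℝ, (-x) ^ m * Real.sqrt (4 - (-x) ^ 2)
      = -(x ^ m * Real.sqrt (4 - x ^ 2)) := by
    intro x
    rw [hm.neg_pow, neg_sq]; ring
  rw [intervalIntegral.integral_congr (fun x _ => hodd x), intervalIntegral.integral_neg] at h
  norm_num at h
  have : scJ m = - scJ m := by
    simpa [scJ] using h.symm
  linarith

/-- **Moments of the semicircular distribution are Catalan numbers.** For every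
`n ≥ 0`, `∫_{−2}^{2} xⁿ·(1/(2π))·√(4−x²) dx` equals `catalan (n/2)` if `n` is
even and `0` if `n` is odd. In particular (`n = 0`) the semicircular
distribution is a probability measure whose moments are the Catalan numbers. -/
theorem semicircular_moments (n : ℕ) :
    ∫ x in (-2 : ℝ)..(2 : ℝ), x ^ n * (1 / (2 * Real.pi) * Real.sqrt (4 - x ^ 2)) =
      if Even n then (catalan (n / 2) : ℝ) else 0 := by
  have hrw : ∀ x : ℝ, x ^ n * (1 / (2 * Real.pi) * Real.sqrt (4 - x ^ 2))
      = 1 / (2 * Real.pi) * (x ^ n * Real.sqrt (4 - x ^ 2)) := fun x => by ring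
  rw [intervalIntegral.integral_congr (fun x _ => hrw x), intervalIntegral.integral_const_mul]
  have hJ : (∫ x in (-2:ℝ)..2, x ^ n * Real.sqrt (4 - x ^ 2)) = scJ n := rfl
  rw [hJ]
  rcases Nat.even_or_odd n with he | ho
  · obtain ⟨m, hm⟩ := he
    rw [if_pos ⟨m, hm⟩]
    have : n = 2 * m := by omega
    subst this
    rw [scJ_even m]
    have : (2 * m) / 2 = m := by omega
    rw [this]
    field_simp
  · rw [if_neg (Nat.not_even_iff_odd.mpr ho), scJ_odd n ho, mul_zero]
end

section
/- For every integer n ≥ 0, ∫_{0}^{2} xⁿ · (1/π)·√(4 − x²) dx = 2ⁿ · Γ((n+1)/2) / (√π · Γ(n/2 + 2)). In particular, the even moments are Catalan numbers: ∫_{0}^{2} x^{2m} · (1/π)·√(4 − x²) dx = catalan(m) for every m ≥ 0. -/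
open MeasureTheory intervalIntegral Real

section helpers
lemma qc_cont (n : ℕ) : Continuous fun x : ℝ => x ^ n * Real.sqrt (4 - x ^ 2) := by fun_prop

lemma qc_intable (n : ℕ) : IntervalIntegrable (fun x : ℝ => x ^ n * Real.sqrt (4 - x ^ 2))
    volume 0 2 := (qc_cont n).intervalIntegrable _ _

lemma I_eq (n : ℕ) : (∫ x in (0:ℝ)..2, x ^ n * (1 / π * Real.sqrt (4 - x ^ 2)))
    = (1 / π) * ∫ x in (0:ℝ)..2, x ^ n * Real.sqrt (4 - x ^ 2) := by
  rw [← intervalIntegral.integral_const_mul]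
  simp_rw [mul_left_comm]

lemma cat_rec (m : ℕ) : (m + 2) * catalan (m + 1) = 2 * (2 * m + 1) * catalan m := by
  have a := succ_mul_catalan_eq_centralBinom (m + 1)
  have b := Nat.succ_mul_centralBinom_succ m
  have c := succ_mul_catalan_eq_centralBinom m
  refine Nat.eq_of_mul_eq_mul_left (show 0 < m + 1 by omega) ?_
  calc (m + 1) * ((m + 2) * catalan (m + 1))
      = (m + 1) * ((m + 1 + 1) * catalan (m + 1)) := rfl
    _ = (m + 1) * Nat.centralBinom (m + 1) := by rw [a]
    _ = 2 * (2 * m + 1) * Nat.centralBinom m := b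
    _ = 2 * (2 * m + 1) * ((m + 1) * catalan m) := by rw [c]
    _ = (m + 1) * (2 * (2 * m + 1) * catalan m) := by ring
lemma J0 : ∫ x in (0:ℝ)..2, x ^ 0 * Real.sqrt (4 - x ^ 2) = π := by
  have h1 : ∀ x : ℝ, x ^ 0 * Real.sqrt (4 - x ^ 2) = 2 * Real.sqrt (1 - (x / 2) ^ 2) := by
    intro x
    rw [pow_zero, one_mul, show (4 : ℝ) - x ^ 2 = 4 * (1 - (x/2)^2) by ring,
      Real.sqrt_mul (by norm_num), show Real.sqrt 4 = 2 by
        rw [show (4:ℝ) = 2^2 by norm_num, Real.sqrt_sq (by norm_num)]]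
  simp_rw [h1]
  rw [show (∫ x in (0:ℝ)..2, 2 * Real.sqrt (1 - (x / 2) ^ 2))
      = ∫ x in (0:ℝ)..2, (fun y : ℝ => 2 * Real.sqrt (1 - y ^ 2)) (x / 2) from rfl,
    integral_comp_div (f := fun y : ℝ => 2 * Real.sqrt (1 - y ^ 2)) (c := 2) (by norm_num)]
  norm_num
  have heven : ∫ x in (0:ℝ)..1, Real.sqrt (1 - x ^ 2)
      = ∫ x in (-1:ℝ)..0, Real.sqrt (1 - x ^ 2) := by
    have h := integral_comp_neg (a := (0:ℝ)) (b := 1) (fun y : ℝ => Real.sqrt (1 - y ^ 2))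
    norm_num at h
    exact h
  have hint : ∀ a b : ℝ, IntervalIntegrable (fun x : ℝ => Real.sqrt (1 - x ^ 2)) volume a b :=
    fun a b => (by fun_prop : Continuous fun x : ℝ => Real.sqrt (1 - x ^ 2)).intervalIntegrable _ _
  have hsplit := integral_add_adjacent_intervals (a := (-1:ℝ)) (b := 0) (c := 1)
    (hint _ _) (hint _ _)
  have := integral_sqrt_one_sub_sq
  linarith [hsplit, heven, this]

lemma J1 : ∫ x in (0:ℝ)..2, x ^ 1 * Real.sqrt (4 - x ^ 2) = 8 / 3 := by
  have key := intervalIntegral.integral_eq_sub_of_hasDeriv_right_of_le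
    (f := fun x : ℝ => -(Real.sqrt (4 - x ^ 2)) ^ 3 / 3)
    (f' := fun x : ℝ => x ^ 1 * Real.sqrt (4 - x ^ 2))
    (a := 0) (b := 2) (by norm_num)
    (by fun_prop)
    (fun x hx => ?_) (qc_intable 1)
  · rw [key]
    norm_num
  · obtain ⟨hx0, hx2⟩ := hx
    have hpos : (0:ℝ) < 4 - x ^ 2 := by nlinarith
    have hs : Real.sqrt (4 - x ^ 2) ^ 2 = 4 - x ^ 2 := Real.sq_sqrt hpos.le
    have hsne : Real.sqrt (4 - x ^ 2) ≠ 0 := by positivity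
    have hd : HasDerivAt (fun x : ℝ => Real.sqrt (4 - x ^ 2))
        (-(2 * x) / (2 * Real.sqrt (4 - x ^ 2))) x := by
      have h1 : HasDerivAt (fun x : ℝ => 4 - x ^ 2) (-(2 * x)) x := by
        simpa using ((hasDerivAt_pow 2 x).const_sub 4)
      simpa using h1.sqrt hpos.ne'
    have hd3 : HasDerivAt (fun x : ℝ => -(Real.sqrt (4 - x ^ 2)) ^ 3 / 3)
        (x ^ 1 * Real.sqrt (4 - x ^ 2)) x := by
      have := ((hd.pow 3).neg.div_const 3)
      refine this.congr_deriv ?_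
      norm_num
      field_simp
    exact hd3.hasDerivWithinAt

lemma J_rec (n : ℕ) :
    ((n:ℝ) + 4) * ∫ x in (0:ℝ)..2, x ^ (n + 2) * Real.sqrt (4 - x ^ 2)
      = 4 * ((n:ℝ) + 1) * ∫ x in (0:ℝ)..2, x ^ n * Real.sqrt (4 - x ^ 2) := by
  have key := intervalIntegral.integral_eq_sub_of_hasDeriv_right_of_le
    (f := fun x : ℝ => x ^ (n + 1) * Real.sqrt (4 - x ^ 2) ^ 3)
    (f' := fun x : ℝ => 4 * ((n:ℝ) + 1) * (x ^ n * Real.sqrt (4 - x ^ 2))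
      - ((n:ℝ) + 4) * (x ^ (n + 2) * Real.sqrt (4 - x ^ 2)))
    (a := 0) (b := 2) (by norm_num)
    (by fun_prop)
    (fun x hx => ?_)
    (((qc_intable n).const_mul _).sub ((qc_intable (n + 2)).const_mul _))
  · have h2 : Real.sqrt (4 - (2:ℝ) ^ 2) = 0 := by norm_num
    simp only [h2] at key
    norm_num at key
    rw [intervalIntegral.integral_sub ((qc_intable n).const_mul _)
      ((qc_intable (n + 2)).const_mul _), intervalIntegral.integral_const_mul,
      intervalIntegral.integral_const_mul] at key
    linarith
  · obtain ⟨hx0, hx2⟩ := hx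
    have hpos : (0:ℝ) < 4 - x ^ 2 := by nlinarith
    set s := Real.sqrt (4 - x ^ 2) with hsdef
    have hs : s ^ 2 = 4 - x ^ 2 := Real.sq_sqrt hpos.le
    have hsne : s ≠ 0 := by positivity
    have hd : HasDerivAt (fun x : ℝ => Real.sqrt (4 - x ^ 2))
        (-(2 * x) / (2 * s)) x := by
      have h1 : HasDerivAt (fun x : ℝ => 4 - x ^ 2) (-(2 * x)) x := by
        simpa using ((hasDerivAt_pow 2 x).const_sub 4)
      simpa using h1.sqrt hpos.ne'
    have hD : HasDerivAt (fun x : ℝ => x ^ (n + 1) * Real.sqrt (4 - x ^ 2) ^ 3)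
        (((n:ℝ) + 1) * x ^ n * s ^ 3
          + x ^ (n + 1) * (3 * s ^ 2 * (-(2 * x) / (2 * s)))) x := by
      have := (hasDerivAt_pow (n + 1) x).mul (hd.pow 3)
      refine this.congr_deriv ?_
      push_cast
      simp only [Pi.pow_apply, ← hsdef]
    have heq : ((n:ℝ) + 1) * x ^ n * s ^ 3
          + x ^ (n + 1) * (3 * s ^ 2 * (-(2 * x) / (2 * s)))
        = 4 * ((n:ℝ) + 1) * (x ^ n * s) - ((n:ℝ) + 4) * (x ^ (n + 2) * s) := by
      have h3 : x ^ (n + 1) * (3 * s ^ 2 * (-(2 * x) / (2 * s)))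
          = -3 * x ^ (n + 2) * s := by
        field_simp
        ring
      rw [h3]
      linear_combination (((n:ℝ) + 1) * x ^ n * s) * hs
    rw [heq] at hD
    exact hD.hasDerivWithinAt

end helpers

/-- **Moments of the quarter-circular distribution.** For every `n ≥ 0`,
`∫_0^2 xⁿ·(1/π)·√(4−x²) dx = 2ⁿ·Γ((n+1)/2)/(√π·Γ(n/2+2))`, and in particular
the even moments are the Catalan numbers:
`∫_0^2 x^{2m}·(1/π)·√(4−x²) dx = catalan m`. -/
theorem quarter_circular_moments :
    (∀ n : ℕ,
      ∫ x in (0 : ℝ)..(2 : ℝ), x ^ n * (1 / Real.pi * Real.sqrt (4 - x ^ 2)) =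
        2 ^ n * Real.Gamma (((n : ℝ) + 1) / 2) /
          (Real.sqrt Real.pi * Real.Gamma ((n : ℝ) / 2 + 2))) ∧
    (∀ m : ℕ,
      ∫ x in (0 : ℝ)..(2 : ℝ), x ^ (2 * m) * (1 / Real.pi * Real.sqrt (4 - x ^ 2)) =
        (catalan m : ℝ)) := by
  have hπ : (0:ℝ) < π := Real.pi_pos
  have hπ' : (π:ℝ) ≠ 0 := hπ.ne'
  have hsπ : Real.sqrt π ≠ 0 := by positivity
  have hsπ2 : Real.sqrt π * Real.sqrt π = π := Real.mul_self_sqrt hπ.le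
  have I0 : (∫ x in (0:ℝ)..2, x ^ 0 * (1 / π * Real.sqrt (4 - x ^ 2))) = 1 := by
    rw [I_eq, J0]; field_simp
  have I1 : (∫ x in (0:ℝ)..2, x ^ 1 * (1 / π * Real.sqrt (4 - x ^ 2))) = 8 / (3 * π) := by
    rw [I_eq, J1]; field_simp
  have step : ∀ k : ℕ, (∫ x in (0:ℝ)..2, x ^ (k + 2) * (1 / π * Real.sqrt (4 - x ^ 2)))
      = (4 * ((k:ℝ) + 1) / ((k:ℝ) + 4)) *
        ∫ x in (0:ℝ)..2, x ^ k * (1 / π * Real.sqrt (4 - x ^ 2)) := by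
    intro k
    have hJ := J_rec k
    have hk4 : ((k:ℝ) + 4) ≠ 0 := by positivity
    rw [I_eq, I_eq]
    have h : (∫ x in (0:ℝ)..2, x ^ (k + 2) * Real.sqrt (4 - x ^ 2))
        = 4 * ((k:ℝ) + 1) * (∫ x in (0:ℝ)..2, x ^ k * Real.sqrt (4 - x ^ 2)) / ((k:ℝ) + 4) := by
      field_simp
      linarith
    rw [h]; ring
  have main : ∀ n : ℕ,
      (∫ x in (0:ℝ)..2, x ^ n * (1 / π * Real.sqrt (4 - x ^ 2))) =
        2 ^ n * Real.Gamma (((n : ℝ) + 1) / 2) /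
          (Real.sqrt π * Real.Gamma ((n : ℝ) / 2 + 2)) := by
    have hG2 : Real.Gamma 2 = 1 := by
      rw [show (2:ℝ) = 1 + 1 by norm_num, Real.Gamma_add_one one_ne_zero, Real.Gamma_one]
      norm_num
    have base0 : (∫ x in (0:ℝ)..2, x ^ 0 * (1 / π * Real.sqrt (4 - x ^ 2))) =
        2 ^ (0:ℕ) * Real.Gamma ((((0:ℕ) : ℝ) + 1) / 2) /
          (Real.sqrt π * Real.Gamma (((0:ℕ) : ℝ) / 2 + 2)) := by
      rw [I0]
      norm_num
      rw [Real.Gamma_one_half_eq, div_self hsπ]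
    have base1 : (∫ x in (0:ℝ)..2, x ^ 1 * (1 / π * Real.sqrt (4 - x ^ 2))) =
        2 ^ (1:ℕ) * Real.Gamma ((((1:ℕ) : ℝ) + 1) / 2) /
          (Real.sqrt π * Real.Gamma (((1:ℕ) : ℝ) / 2 + 2)) := by
      rw [I1]
      norm_num
      rw [show (5:ℝ) / 2 = (1 / 2 + 1) + 1 by ring,
        Real.Gamma_add_one (by norm_num), Real.Gamma_add_one (by norm_num),
        Real.Gamma_one_half_eq]
      rw [div_eq_div_iff (by positivity) (by positivity)]
      nlinarith [hsπ2]
    have pair : ∀ n : ℕ,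
        ((∫ x in (0:ℝ)..2, x ^ n * (1 / π * Real.sqrt (4 - x ^ 2))) =
          2 ^ n * Real.Gamma (((n : ℝ) + 1) / 2) /
            (Real.sqrt π * Real.Gamma ((n : ℝ) / 2 + 2))) ∧
        ((∫ x in (0:ℝ)..2, x ^ (n + 1) * (1 / π * Real.sqrt (4 - x ^ 2))) =
          2 ^ (n + 1) * Real.Gamma (((((n + 1 : ℕ)) : ℝ) + 1) / 2) /
            (Real.sqrt π * Real.Gamma (((n + 1 : ℕ) : ℝ) / 2 + 2))) := by
      intro n
      induction n with
      | zero => exact ⟨base0, base1⟩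
      | succ k ih =>
          refine ⟨ih.2, ?_⟩
          show (∫ x in (0:ℝ)..2, x ^ (k + 2) * (1 / π * Real.sqrt (4 - x ^ 2))) =
            2 ^ (k + 2) * Real.Gamma ((((k + 2 : ℕ) : ℝ) + 1) / 2) /
              (Real.sqrt π * Real.Gamma (((k + 2 : ℕ) : ℝ) / 2 + 2))
          rw [step k, ih.1]
          have e1 : (((k + 2 : ℕ) : ℝ) + 1) / 2 = ((k : ℝ) + 1) / 2 + 1 := by push_cast; ring
          have e2 : ((k + 2 : ℕ) : ℝ) / 2 + 2 = ((k : ℝ) / 2 + 2) + 1 := by push_cast; ring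
          rw [e1, e2, Real.Gamma_add_one (by positivity), Real.Gamma_add_one (by positivity)]
          have hB : 0 < Real.Gamma ((k:ℝ) / 2 + 2) := Real.Gamma_pos_of_pos (by positivity)
          have hk4 : ((k:ℝ) + 4) ≠ 0 := by positivity
          field_simp
          ring
    intro n
    exact (pair n).1
  refine ⟨main, ?_⟩
  intro m
  induction m with
  | zero => simpa using I0
  | succ m ih =>
      rw [show 2 * (m + 1) = 2 * m + 2 by ring, step (2 * m), ih]
      have hc : ((m:ℝ) + 2) * (catalan (m + 1) : ℝ)
          = 2 * (2 * (m:ℝ) + 1) * (catalan m : ℝ) := by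
        exact_mod_cast congrArg (Nat.cast (R := ℝ)) (cat_rec m)
      have h1 : (2 * (m:ℝ) + 4) ≠ 0 := by positivity
      push_cast
      field_simp
      linear_combination (-2) * hc
end

section
/- Let λ > 0, α > 0 and set x₋ := α(1−√λ)² and x₊ := α(1+√λ)². Then for every integer n ≥ 1, ∫_{x₋}^{x₊} xⁿ · √((x₊ − x)(x − x₋)) / (2παx) dx = αⁿ · Σ_{k=1}^{n} N(n,k) · λᵏ, where N(n,k) = (1/n)·binom(n,k)·binom(n,k−1) are the Narayana numbers. (These are the moments of the free Poisson / Marchenko–Pastur distribution with rate λ and jump size α.) -/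
open MeasureTheory intervalIntegral Complex Finset Nat

lemma exp_int_orth (k : ℤ) :
    ∫ θ in (-Real.pi)..Real.pi, Complex.exp (k * Complex.I * θ) =
      if k = 0 then (2 * Real.pi : ℂ) else 0 := by
  rcases eq_or_ne k 0 with hk | hk
  · subst hk; simp [two_mul]
  · rw [if_neg hk]
    have hc : (k : ℂ) * Complex.I ≠ 0 := by
      simp [Complex.I_ne_zero, Int.cast_injective.ne_iff, hk]
    rw [integral_exp_mul_complex hc]
    have : Complex.exp ((k:ℂ) * Complex.I * (Real.pi:ℂ)) =
        Complex.exp ((k:ℂ) * Complex.I * ((-Real.pi : ℝ):ℂ)) := by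
      have h1 : (k:ℂ) * Complex.I * (Real.pi:ℂ) =
          (k:ℂ) * Complex.I * ((-Real.pi : ℝ):ℂ) + (k:ℤ) * (2 * Real.pi * Complex.I) := by
        push_cast; ring
      rw [h1, Complex.exp_add, Complex.exp_int_mul_two_pi_mul_I, mul_one]
    rw [this, sub_self, zero_div]

lemma binom_exp (s : ℝ) (a : ℕ) (w : ℂ) :
    (1 + (s:ℂ) * Complex.exp w) ^ a =
      ∑ j ∈ range (a + 1), ((a.choose j : ℂ) * (s:ℂ) ^ j) * Complex.exp ((j:ℂ) * w) := by
  rw [add_comm, add_pow]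
  refine Finset.sum_congr rfl fun j hj => ?_
  rw [mul_pow, one_pow, ← Complex.exp_nat_mul]
  ring

lemma keyA (s : ℝ) (a b : ℕ) :
    ∫ θ in (-Real.pi)..Real.pi,
        (1 + (s:ℂ) * Complex.exp (Complex.I * θ)) ^ a *
          (1 + (s:ℂ) * Complex.exp (-(Complex.I * θ))) ^ b =
      (2 * Real.pi : ℂ) *
        ∑ j ∈ range (a + 1), ((a.choose j : ℂ) * (b.choose j : ℂ)) * ((s:ℂ) ^ 2) ^ j := by
  have hint : ∫ θ in (-Real.pi)..Real.pi,
      (1 + (s:ℂ) * Complex.exp (Complex.I * θ)) ^ a *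
        (1 + (s:ℂ) * Complex.exp (-(Complex.I * θ))) ^ b =
      ∫ θ in (-Real.pi)..Real.pi, ∑ p ∈ range (a+1) ×ˢ range (b+1),
        (((a.choose p.1 : ℂ) * (b.choose p.2 : ℂ) * (s:ℂ) ^ (p.1 + p.2)) *
          Complex.exp (((p.1 - p.2 : ℤ) : ℂ) * Complex.I * θ)) := by
    refine intervalIntegral.integral_congr fun θ _ => ?_
    rw [binom_exp s a (Complex.I * θ), binom_exp s b (-(Complex.I * θ)),
      Finset.sum_mul_sum, Finset.sum_product]
    refine Finset.sum_congr rfl fun j hj => Finset.sum_congr rfl fun l hl => ?_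
    have hz : (((j - l : ℤ) : ℂ)) * Complex.I * θ =
        ((j:ℂ)) * (Complex.I * θ) + (l:ℂ) * (-(Complex.I * θ)) := by push_cast; ring
    rw [hz, Complex.exp_add]; push_cast; ring
  rw [hint, intervalIntegral.integral_finset_sum]
  · have : ∀ p ∈ range (a+1) ×ˢ range (b+1),
        (∫ θ in (-Real.pi)..Real.pi,
          (((a.choose p.1 : ℂ) * (b.choose p.2 : ℂ) * (s:ℂ) ^ (p.1 + p.2)) *
            Complex.exp (((p.1 - p.2 : ℤ) : ℂ) * Complex.I * θ))) =
        ((a.choose p.1 : ℂ) * (b.choose p.2 : ℂ) * (s:ℂ) ^ (p.1 + p.2)) *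
          (if ((p.1 - p.2 : ℤ)) = 0 then (2 * Real.pi : ℂ) else 0) := by
      intro p _
      rw [intervalIntegral.integral_const_mul]
      rw [exp_int_orth]
    rw [Finset.sum_congr rfl this]
    rw [Finset.sum_product]
    have diag : ∀ j ∈ range (a+1),
        (∑ l ∈ range (b+1),
          ((a.choose j : ℂ) * (b.choose l : ℂ) * (s:ℂ) ^ (j + l)) *
            (if ((j - l : ℤ)) = 0 then (2 * Real.pi : ℂ) else 0)) =
        (2 * Real.pi : ℂ) * (((a.choose j : ℂ) * (b.choose j : ℂ)) * ((s:ℂ)^2)^j) := by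
      intro j _
      have : ∀ l ∈ range (b+1),
          ((a.choose j : ℂ) * (b.choose l : ℂ) * (s:ℂ) ^ (j + l)) *
            (if ((j - l : ℤ)) = 0 then (2 * Real.pi : ℂ) else 0) =
          if j = l then ((a.choose j : ℂ) * (b.choose l : ℂ) * (s:ℂ) ^ (j + l)) *
            (2 * Real.pi : ℂ) else 0 := by
        intro l _
        by_cases h : j = l
        · subst h; simp
        · rw [if_neg h, if_neg, mul_zero]
          simpa [sub_eq_zero] using h
      rw [Finset.sum_congr rfl this, Finset.sum_ite_eq]
      by_cases hb : j ∈ range (b+1)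
      · rw [if_pos hb, ← pow_mul, two_mul]; ring
      · rw [if_neg hb]
        have : b.choose j = 0 := Nat.choose_eq_zero_of_lt (by simpa using hb)
        rw [this]; push_cast; ring
    rw [Finset.sum_congr rfl diag, ← Finset.mul_sum]
  · intro p _
    apply Continuous.intervalIntegrable
    continuity

lemma sum_ext (s : ℝ) (u v N M : ℕ) (hu : u < N) (h : N ≤ M) :
    ∑ j ∈ range N, ((u.choose j : ℂ) * (v.choose j : ℂ)) * ((s:ℂ) ^ 2) ^ j =
    ∑ j ∈ range M, ((u.choose j : ℂ) * (v.choose j : ℂ)) * ((s:ℂ) ^ 2) ^ j := by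
  refine Finset.sum_subset (Finset.range_subset_range.2 h) fun j hj hj' => ?_
  have : u < j := lt_of_lt_of_le hu (by simpa using hj')
  rw [Nat.choose_eq_zero_of_lt this]
  simp

lemma keyB (s : ℝ) (m : ℕ) :
    ∫ θ in (-Real.pi)..Real.pi,
      ((1 + (s:ℂ) * Complex.exp (Complex.I * θ)) *
          (1 + (s:ℂ) * Complex.exp (-(Complex.I * θ)))) ^ m *
        ((1 + (s:ℂ) * Complex.exp (Complex.I * θ)) -
          (1 + (s:ℂ) * Complex.exp (-(Complex.I * θ)))) ^ 2 =
      (2 * Real.pi : ℂ) * ∑ j ∈ range (m + 3),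
        (2 * ((m+2).choose j : ℂ) * ((m).choose j : ℂ)
          - 2 * ((m+1).choose j : ℂ) * ((m+1).choose j : ℂ)) * ((s:ℂ) ^ 2) ^ j := by
  have hcong : ∀ θ ∈ Set.uIcc (-Real.pi) Real.pi,
      ((1 + (s:ℂ) * Complex.exp (Complex.I * θ)) *
          (1 + (s:ℂ) * Complex.exp (-(Complex.I * θ)))) ^ m *
        ((1 + (s:ℂ) * Complex.exp (Complex.I * θ)) -
          (1 + (s:ℂ) * Complex.exp (-(Complex.I * θ)))) ^ 2 =
      ((1 + (s:ℂ) * Complex.exp (Complex.I * θ)) ^ (m+2) *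
          (1 + (s:ℂ) * Complex.exp (-(Complex.I * θ))) ^ m +
        (1 + (s:ℂ) * Complex.exp (Complex.I * θ)) ^ m *
          (1 + (s:ℂ) * Complex.exp (-(Complex.I * θ))) ^ (m+2)) -
      (2:ℂ) * ((1 + (s:ℂ) * Complex.exp (Complex.I * θ)) ^ (m+1) *
          (1 + (s:ℂ) * Complex.exp (-(Complex.I * θ))) ^ (m+1)) := by
    intro θ _; rw [mul_pow]; ring
  rw [intervalIntegral.integral_congr hcong]
  have c1 : Continuous fun θ : ℝ =>
      (1 + (s:ℂ) * Complex.exp (Complex.I * θ)) := by continuity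
  have c2 : Continuous fun θ : ℝ =>
      (1 + (s:ℂ) * Complex.exp (-(Complex.I * θ))) := by continuity
  have i1 : ∀ a b : ℕ, IntervalIntegrable (fun θ : ℝ =>
      (1 + (s:ℂ) * Complex.exp (Complex.I * θ)) ^ a *
        (1 + (s:ℂ) * Complex.exp (-(Complex.I * θ))) ^ b) volume (-Real.pi) Real.pi :=
    fun a b => ((c1.pow a).mul (c2.pow b)).intervalIntegrable _ _
  rw [intervalIntegral.integral_sub ((i1 (m+2) m).add (i1 m (m+2)))
      (((i1 (m+1) (m+1))).const_mul 2),
    intervalIntegral.integral_add (i1 (m+2) m) (i1 m (m+2)),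
    intervalIntegral.integral_const_mul, keyA, keyA, keyA,
    sum_ext s m (m+2) (m+1) (m+3) (by omega) (by omega),
    sum_ext s (m+1) (m+1) (m+2) (m+3) (by omega) (by omega)]
  have hsum : (∑ j ∈ range (m + 3),
        (2 * ((m+2).choose j : ℂ) * ((m).choose j : ℂ)
          - 2 * ((m+1).choose j : ℂ) * ((m+1).choose j : ℂ)) * ((s:ℂ) ^ 2) ^ j) =
      (∑ j ∈ range (m + 2 + 1), ((m+2).choose j : ℂ) * ((m).choose j : ℂ) * ((s:ℂ) ^ 2) ^ j) +
      (∑ j ∈ range (m + 3), ((m).choose j : ℂ) * ((m+2).choose j : ℂ) * ((s:ℂ) ^ 2) ^ j) -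
      2 * ∑ j ∈ range (m + 3), ((m+1).choose j : ℂ) * ((m+1).choose j : ℂ) * ((s:ℂ) ^ 2) ^ j := by
    have h23 : m + 2 + 1 = m + 3 := rfl
    rw [h23, Finset.mul_sum, ← Finset.sum_add_distrib, ← Finset.sum_sub_distrib]
    refine Finset.sum_congr rfl fun j _ => by ring
  rw [hsum]; ring

lemma narayana_coeff (m j : ℕ) (h1 : 1 ≤ j) (h2 : j ≤ m + 1) :
    (((m+1).choose j : ℝ)) * ((m+1).choose j : ℝ) - ((m+2).choose j : ℝ) * ((m).choose j : ℝ)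
      = ((m+1).choose j : ℝ) * ((m+1).choose (j-1) : ℝ) / ((m:ℝ)+1) := by
  obtain ⟨e, rfl⟩ : ∃ e, j = e + 1 := ⟨j - 1, by omega⟩
  by_cases hj : e + 1 = m + 1
  · have he : e = m := by omega
    subst he
    rw [Nat.choose_self, Nat.choose_succ_self, Nat.add_sub_cancel, Nat.choose_succ_self_right]
    push_cast
    have : (e:ℝ) + 1 ≠ 0 := by positivity
    field_simp
    rw [Nat.choose_succ_self_right]; push_cast; ring
  · obtain ⟨f, rfl⟩ : ∃ f, m = e + 1 + f := ⟨m - (e+1), by omega⟩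
    have key : ∀ a b c : ℕ, a = b + c → ((a).choose b : ℝ) = a ! / (b ! * c !) := by
      intro a b c h
      subst h
      rw [Nat.cast_choose ℝ (by omega)]
      congr
      omega
    have c1 : ((e+1+f+1).choose (e+1) : ℝ) = (e+1+f+1)! / ((e+1)! * (f+1)!) :=
      key _ _ (f+1) (by omega)
    have c2 : ((e+1+f+2).choose (e+1) : ℝ) = (e+1+f+2)! / ((e+1)! * (f+2)!) :=
      key _ _ (f+2) (by omega)
    have c3 : ((e+1+f).choose (e+1) : ℝ) = (e+1+f)! / ((e+1)! * f !) :=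
      key _ _ f (by omega)
    have c4 : ((e+1+f+1).choose (e+1-1) : ℝ) = (e+1+f+1)! / (e ! * (f+2)!) := by
      have h : e + 1 - 1 = e := by omega
      rw [h]; exact key _ _ (f+2) (by omega)
    rw [c1, c2, c3, c4]
    have f1 : ((e+1+f+2)! : ℝ) = (e+f+3) * (e+1+f+1)! := by
      have h : e+1+f+2 = (e+1+f+1) + 1 := by omega
      rw [h, Nat.factorial_succ]; push_cast; ring
    have f2 : ((e+1+f+1)! : ℝ) = (e+f+2) * (e+1+f)! := by
      have h : e+1+f+1 = (e+1+f) + 1 := by omega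
      rw [h, Nat.factorial_succ]; push_cast; ring
    have f3 : ((e+1)! : ℝ) = (e+1) * e ! := by
      rw [Nat.factorial_succ]; push_cast; ring
    have f4 : ((f+2)! : ℝ) = (f+2) * (f+1)! := by
      rw [Nat.factorial_succ]; push_cast; ring
    have f5 : ((f+1)! : ℝ) = (f+1) * f ! := by
      rw [Nat.factorial_succ]; push_cast; ring
    rw [f1, f2, f3, f4, f5]
    have pe : (e ! : ℝ) ≠ 0 := by positivity
    have pf : (f ! : ℝ) ≠ 0 := by positivity
    have pef : ((e+1+f)! : ℝ) ≠ 0 := by positivity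
    have q1 : (e:ℝ) + 1 ≠ 0 := by positivity
    have q2 : (f:ℝ) + 1 ≠ 0 := by positivity
    have q3 : (f:ℝ) + 2 ≠ 0 := by positivity
    have q4 : (e:ℝ) + (f:ℝ) + 2 ≠ 0 := by positivity
    have q5 : ((e:ℝ)+1+(f:ℝ)) + 1 ≠ 0 := by positivity
    push_cast
    field_simp
    ring

lemma sum_transform (m : ℕ) (lam : ℝ) :
    ∑ j ∈ range (m+3),
        ((((m+1).choose j : ℝ)) * ((m+1).choose j : ℝ)
          - ((m+2).choose j : ℝ) * ((m).choose j : ℝ)) * lam ^ j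
    = ∑ k ∈ Finset.Icc 1 (m+1),
        (((m+1).choose k : ℝ) * ((m+1).choose (k-1) : ℝ) / ((m:ℝ)+1)) * lam ^ k := by
  have hsub : Finset.Icc 1 (m+1) ⊆ range (m+3) := by
    intro x hx
    simp only [Finset.mem_Icc] at hx
    simp only [Finset.mem_range]
    omega
  have hz : ∀ x ∈ range (m+3), x ∉ Finset.Icc 1 (m+1) →
      ((((m+1).choose x : ℝ)) * ((m+1).choose x : ℝ)
        - ((m+2).choose x : ℝ) * ((m).choose x : ℝ)) * lam ^ x = 0 := by
    intro x hx hx'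
    simp only [Finset.mem_range] at hx
    simp only [Finset.mem_Icc, not_and_or, not_le] at hx'
    rcases hx' with h | h
    · interval_cases x
      simp
    · have hx2 : x = m + 2 := by omega
      subst hx2
      rw [Nat.choose_eq_zero_of_lt (show m+1 < m+2 by omega), Nat.choose_eq_zero_of_lt (show m < m+2 by omega)]
      push_cast
      ring
  rw [← Finset.sum_subset hsub hz]
  refine Finset.sum_congr rfl fun j hj => ?_
  simp only [Finset.mem_Icc] at hj
  rw [narayana_coeff m j hj.1 hj.2]

lemma subst_cos (c r : ℝ) (F : ℝ → ℝ) (hF : Continuous F) :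
    ∫ x in (c - r)..(c + r), F x
      = ∫ θ in (0:ℝ)..Real.pi, (r * Real.sin θ) * F (c + r * Real.cos θ) := by
  have h : ∀ θ ∈ Set.uIcc Real.pi (0:ℝ),
      HasDerivAt (fun θ : ℝ => c + r * Real.cos θ) (-(r * Real.sin θ)) θ := by
    intro θ _
    have := ((Real.hasDerivAt_cos θ).const_mul r).const_add c
    simpa [mul_neg] using this
  have h' : ContinuousOn (fun θ : ℝ => -(r * Real.sin θ)) (Set.uIcc Real.pi 0) := by
    fun_prop
  have key := intervalIntegral.integral_comp_smul_deriv h h' hF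
  have e1 : c + r * Real.cos Real.pi = c - r := by rw [Real.cos_pi]; ring
  have e2 : c + r * Real.cos 0 = c + r := by rw [Real.cos_zero]; ring
  rw [e1, e2] at key
  rw [← key, intervalIntegral.integral_symm]
  rw [← intervalIntegral.integral_neg]
  refine intervalIntegral.integral_congr fun θ _ => ?_
  simp only [smul_eq_mul, neg_mul, neg_neg, Function.comp]

lemma even_ext (g : ℝ → ℝ) (hg : Continuous g) (he : ∀ θ, g (-θ) = g θ) :
    ∫ θ in (-Real.pi)..Real.pi, g θ = 2 * ∫ θ in (0:ℝ)..Real.pi, g θ := by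
  have h1 : ∫ θ in (-Real.pi)..(0:ℝ), g θ = ∫ θ in (0:ℝ)..Real.pi, g θ := by
    have := intervalIntegral.integral_comp_neg (a := (0:ℝ)) (b := Real.pi) (f := g)
    rw [neg_zero] at this
    rw [← this]
    exact intervalIntegral.integral_congr fun θ _ => he θ
  have h2 := intervalIntegral.integral_add_adjacent_intervals
    (hg.intervalIntegrable _ _ : IntervalIntegrable g volume (-Real.pi) 0)
    (hg.intervalIntegrable _ _ : IntervalIntegrable g volume 0 Real.pi)
  rw [← h2, h1]
  ring

/-- **Moments of the free Poisson (Marchenko–Pastur) distribution.** For rate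
`λ > 0` and jump size `α > 0`, with edges `x₋ = α(1−√λ)²`, `x₊ = α(1+√λ)²`,
the `n`-th moment (`n ≥ 1`) of the density `√((x₊−x)(x−x₋))/(2παx)` on
`[x₋, x₊]` equals `αⁿ · Σ_{k=1}^n N(n,k)·λᵏ`, where
`N(n,k) = (1/n)·binom(n,k)·binom(n,k−1)` are the Narayana numbers. -/
theorem free_poisson_moments (lam alpha : ℝ) (hlam : 0 < lam) (halpha : 0 < alpha)
    (n : ℕ) (hn : 1 ≤ n) :
    ∫ x in (alpha * (1 - Real.sqrt lam) ^ 2)..(alpha * (1 + Real.sqrt lam) ^ 2),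
        x ^ n * Real.sqrt ((alpha * (1 + Real.sqrt lam) ^ 2 - x) *
          (x - alpha * (1 - Real.sqrt lam) ^ 2)) / (2 * Real.pi * alpha * x) =
      alpha ^ n * ∑ k ∈ Finset.Icc 1 n,
        ((n.choose k : ℝ) * (n.choose (k - 1) : ℝ) / (n : ℝ)) * lam ^ k := by
  obtain ⟨m, rfl⟩ : ∃ m, n = m + 1 := ⟨n - 1, by omega⟩
  set s := Real.sqrt lam with hs
  have hs0 : 0 ≤ s := Real.sqrt_nonneg lam
  have hs2 : s ^ 2 = lam := Real.sq_sqrt hlam.le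
  set c := alpha * (1 + lam) with hc
  set r := 2 * alpha * s with hrdef
  have hr0 : 0 ≤ r := by positivity
  have hxm : alpha * (1 - s) ^ 2 = c - r := by rw [hc, hrdef, ← hs2]; ring
  have hxp : alpha * (1 + s) ^ 2 = c + r := by rw [hc, hrdef, ← hs2]; ring
  rw [hxm, hxp]
  -- Step 1: remove the 1/x
  set F : ℝ → ℝ := fun x => x ^ m * Real.sqrt ((c + r - x) * (x - (c - r))) with hF
  have hFc : Continuous F := by
    apply Continuous.mul (continuous_pow m)
    exact (Continuous.mul (by continuity) (by continuity)).sqrt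
  have step1 : (∫ x in (c - r)..(c + r),
      x ^ (m+1) * Real.sqrt ((c + r - x) * (x - (c - r))) / (2 * Real.pi * alpha * x))
      = (∫ x in (c - r)..(c + r), F x) * (2 * Real.pi * alpha)⁻¹ := by
    rw [← intervalIntegral.integral_mul_const]
    refine intervalIntegral.integral_congr_ae ?_
    have h0 : ∀ᵐ (x : ℝ), x ≠ 0 := by
      refine (MeasureTheory.ae_iff).2 ?_
      simpa [Set.setOf_eq_eq_singleton] using (measure_singleton (0:ℝ))
    filter_upwards [h0] with x hx _
    rw [hF]
    have h2pa : (2 * Real.pi * alpha) ≠ 0 := by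
      have := Real.pi_ne_zero; positivity
    field_simp
    ring
  set g : ℝ → ℝ := fun θ => (c + r * Real.cos θ) ^ m * (r * Real.sin θ) ^ 2 with hg
  have hgc : Continuous g := by rw [hg]; continuity
  have step2 : (∫ x in (c - r)..(c + r), F x) = ∫ θ in (0:ℝ)..Real.pi, g θ := by
    rw [subst_cos c r F hFc]
    refine intervalIntegral.integral_congr fun θ hθ => ?_
    rw [Set.uIcc_of_le Real.pi_pos.le] at hθ
    have hsin : 0 ≤ Real.sin θ := Real.sin_nonneg_of_nonneg_of_le_pi hθ.1 hθ.2
    have hq : (c + r - (c + r * Real.cos θ)) * ((c + r * Real.cos θ) - (c - r))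
        = (r * Real.sin θ) ^ 2 := by
      have h := Real.sin_sq_add_cos_sq θ
      linear_combination (-(r^2)) * h
    rw [hF, hg]
    simp only []
    rw [hq, Real.sqrt_sq (by positivity)]
    ring
  have step3 : (∫ θ in (0:ℝ)..Real.pi, g θ)
      = (1/2) * ∫ θ in (-Real.pi)..Real.pi, g θ := by
    rw [even_ext g hgc]
    · ring
    · intro θ
      rw [hg]
      simp only [Real.cos_neg, Real.sin_neg]
      ring
  -- Step 4: complex evaluation
  have hpt : ∀ θ : ℝ, ((g θ : ℝ) : ℂ) = -(alpha:ℂ)^(m+2) *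
      (((1 + (s:ℂ) * Complex.exp (Complex.I * θ)) *
          (1 + (s:ℂ) * Complex.exp (-(Complex.I * θ)))) ^ m *
        ((1 + (s:ℂ) * Complex.exp (Complex.I * θ)) -
          (1 + (s:ℂ) * Complex.exp (-(Complex.I * θ)))) ^ 2) := by
    intro θ
    have hE1 : Complex.exp (Complex.I * θ) = Complex.cos θ + Complex.sin θ * Complex.I := by
      rw [mul_comm, Complex.exp_mul_I]
    have hE2 : Complex.exp (-(Complex.I * θ))
        = Complex.cos θ - Complex.sin θ * Complex.I := by
      rw [show -(Complex.I * (θ:ℂ)) = (-(θ:ℂ)) * Complex.I by ring, Complex.exp_mul_I,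
        Complex.cos_neg, Complex.sin_neg]
      ring
    have hbase : (alpha:ℂ) * ((1 + (s:ℂ) * Complex.exp (Complex.I * θ)) *
        (1 + (s:ℂ) * Complex.exp (-(Complex.I * θ))))
        = (c:ℂ) + (r:ℂ) * Complex.cos θ := by
      rw [hE1, hE2, hc, hrdef, ← hs2]
      push_cast
      linear_combination ((alpha:ℂ) * (s:ℂ)^2) * (Complex.sin_sq_add_cos_sq (θ:ℂ)) + (-(alpha:ℂ) * (s:ℂ)^2 * (Complex.sin (θ:ℂ))^2) * Complex.I_sq
    have hdiff : ((1 + (s:ℂ) * Complex.exp (Complex.I * θ)) -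
        (1 + (s:ℂ) * Complex.exp (-(Complex.I * θ)))) ^ 2
        = -(4:ℂ) * (s:ℂ)^2 * (Complex.sin θ)^2 := by
      rw [hE1, hE2]
      linear_combination ((4:ℂ) * (s:ℂ)^2 * (Complex.sin (θ:ℂ))^2) * Complex.I_sq
    have hrc : (r:ℂ) = 2 * (alpha:ℂ) * (s:ℂ) := by rw [hrdef]; push_cast; ring
    have hgval : ((g θ : ℝ) : ℂ)
        = ((c:ℂ) + (r:ℂ) * Complex.cos θ) ^ m * ((r:ℂ) * Complex.sin θ) ^ 2 := by
      rw [hg]; push_cast; ring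
    have hpow : ((c:ℂ) + (r:ℂ) * Complex.cos θ) ^ m
        = (alpha:ℂ)^m * ((1 + (s:ℂ) * Complex.exp (Complex.I * θ)) *
            (1 + (s:ℂ) * Complex.exp (-(Complex.I * θ)))) ^ m := by
      rw [← mul_pow, hbase]
    rw [hgval, hpow, hdiff, hrc]
    ring
  have step4 : (∫ θ in (-Real.pi)..Real.pi, g θ)
      = 4 * Real.pi * alpha^(m+2) * ∑ j ∈ range (m+3),
        ((((m+1).choose j : ℝ)) * ((m+1).choose j : ℝ)
          - ((m+2).choose j : ℝ) * ((m).choose j : ℝ)) * lam ^ j := by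
    apply Complex.ofReal_injective
    rw [← intervalIntegral.integral_ofReal]
    rw [intervalIntegral.integral_congr (fun θ _ => hpt θ),
      intervalIntegral.integral_const_mul, keyB s m]
    have hsl : ((s:ℂ))^2 = (lam:ℂ) := by
      rw [← hs2]; push_cast; ring
    rw [hsl]
    have hcast : (∑ j ∈ range (m + 3),
        (2 * ((m+2).choose j : ℂ) * ((m).choose j : ℂ)
          - 2 * ((m+1).choose j : ℂ) * ((m+1).choose j : ℂ)) * ((lam:ℂ)) ^ j)
        = (((-2 : ℝ) * ∑ j ∈ range (m+3),
            ((((m+1).choose j : ℝ)) * ((m+1).choose j : ℝ)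
              - ((m+2).choose j : ℝ) * ((m).choose j : ℝ)) * lam ^ j : ℝ) : ℂ) := by
      push_cast
      rw [Finset.mul_sum]
      exact Finset.sum_congr rfl fun j _ => by ring
    rw [hcast]
    push_cast
    ring
  rw [step1, step2, step3, step4, sum_transform m lam]
  have hc1 : ((m + 1 : ℕ) : ℝ) = (m : ℝ) + 1 := by push_cast; ring
  rw [hc1]
  have hpi : Real.pi ≠ 0 := Real.pi_ne_zero
  have ha : alpha ≠ 0 := halpha.ne'
  have harith : ∀ S : ℝ,
      1/2 * (4 * Real.pi * alpha^(m+2) * S) * (2 * Real.pi * alpha)⁻¹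
        = alpha^(m+1) * S := by
    intro S
    field_simp
    ring
  exact harith _
end

section
/- Let f : ℝ → ℝ be a continuous function with compact support and define G(z) := ∫_ℝ f(t)/(z − t) dt for Im z > 0. Then for every x ∈ ℝ, lim_{ε→0⁺} −(1/π)·Im G(x + iε) = f(x). (Stieltjes inversion: the density of a compactly supported measure with continuous density is recovered from the boundary values of its Cauchy transform.) -/
open MeasureTheory Filter

lemma stieltjes_key (f : ℝ → ℝ) (hf : Continuous f)
    (hsupp : HasCompactSupport f) (x : ℝ) {ε : ℝ} (hε : 0 < ε) :
    -(1 / Real.pi) *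
        (∫ t : ℝ, ((f t : ℂ)) / (((x : ℂ) + ε * Complex.I) - (t : ℂ))).im
      = (1 / Real.pi) * ∫ s : ℝ, f (x + ε * s) * (1 + s ^ 2)⁻¹ := by
  set z : ℂ := (x : ℂ) + ε * Complex.I with hz
  have hzim : z.im = ε := by simp [hz]
  -- the integrand is continuous with compact support, hence integrable
  have hden : ∀ t : ℝ, z - (t : ℂ) ≠ 0 := by
    intro t h
    have : (z - (t : ℂ)).im = 0 := by rw [h]; simp
    simp [hzim] at this
    exact hε.ne' this
  have hcont : Continuous fun t : ℝ => ((f t : ℂ)) / (z - (t : ℂ)) := by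
    apply Continuous.div
    · exact Complex.continuous_ofReal.comp hf
    · exact continuous_const.sub Complex.continuous_ofReal
    · exact hden
  have hcs : HasCompactSupport fun t : ℝ => ((f t : ℂ)) / (z - (t : ℂ)) := by
    have h1 : HasCompactSupport fun t : ℝ => ((f t : ℂ)) :=
      hsupp.comp_left (g := Complex.ofReal) Complex.ofReal_zero
    simpa [div_eq_mul_inv, Pi.mul_def] using
      h1.mul_right (f' := fun t : ℝ => (z - (t : ℂ))⁻¹)
  have hint : Integrable fun t : ℝ => ((f t : ℂ)) / (z - (t : ℂ)) :=
    hcont.integrable_of_hasCompactSupport hcs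
  have him0 : (∫ t : ℝ, ((f t : ℂ)) / (z - (t : ℂ))).im
      = ∫ t : ℝ, (((f t : ℂ)) / (z - (t : ℂ))).im := (integral_im hint).symm
  rw [him0]
  -- compute imaginary part pointwise
  have him : ∀ t : ℝ, (((f t : ℂ)) / (z - (t : ℂ))).im
      = -(f t * ε / ((x - t) ^ 2 + ε ^ 2)) := by
    intro t
    rw [Complex.div_im]
    simp [hz, Complex.normSq_apply]
    ring
  simp_rw [him, integral_neg]
  simp only [mul_neg, neg_mul, neg_neg]
  congr 1
  -- change of variables t = x + ε s
  have h1 : (∫ s : ℝ, f (x + ε * s) * (1 + s ^ 2)⁻¹)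
      = ∫ s : ℝ, ε * (f (x + ε * s) * ε / ((x - (x + ε * s)) ^ 2 + ε ^ 2)) := by
    congr 1; ext s
    have h2 : (x - (x + ε * s)) ^ 2 + ε ^ 2 = ε ^ 2 * (1 + s ^ 2) := by ring
    rw [h2]
    field_simp
  rw [h1]
  rw [integral_const_mul]
  have h3 : (∫ s : ℝ, f (x + ε * s) * ε / ((x - (x + ε * s)) ^ 2 + ε ^ 2))
      = |ε⁻¹| • ∫ t : ℝ, f (x + t) * ε / ((x - (x + t)) ^ 2 + ε ^ 2) :=
    Measure.integral_comp_mul_left (fun u : ℝ => f (x + u) * ε / ((x - (x + u)) ^ 2 + ε ^ 2)) ε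
  rw [h3]
  rw [integral_add_left_eq_self (fun t : ℝ => f t * ε / ((x - t) ^ 2 + ε ^ 2)) x]
  rw [abs_of_pos (inv_pos.mpr hε), smul_eq_mul, ← mul_assoc,
    mul_inv_cancel₀ hε.ne', one_mul]

/-- **Stieltjes inversion.** Let `f : ℝ → ℝ` be continuous with compact support
and let `G(z) = ∫ f(t)/(z−t) dt` be the Cauchy transform of the measure with
density `f`. Then for every `x ∈ ℝ`,
`−(1/π)·Im G(x + iε) → f(x)` as `ε → 0⁺`. -/
theorem stieltjes_inversion (f : ℝ → ℝ) (hf : Continuous f)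
    (hsupp : HasCompactSupport f) (x : ℝ) :
    Tendsto
      (fun ε : ℝ =>
        -(1 / Real.pi) *
          (∫ t : ℝ, ((f t : ℂ)) / (((x : ℂ) + ε * Complex.I) - (t : ℂ))).im)
      (nhdsWithin 0 (Set.Ioi 0)) (nhds (f x)) := by
  obtain ⟨C, hC⟩ := hsupp.exists_bound_of_continuous hf
  have hC0 : 0 ≤ C := le_trans (abs_nonneg _) (hC x)
  have hbound : Integrable fun s : ℝ => C * (1 + s ^ 2)⁻¹ :=
    (integrable_inv_one_add_sq).const_mul C
  have hmain : Tendsto (fun ε : ℝ => ∫ s : ℝ, f (x + ε * s) * (1 + s ^ 2)⁻¹)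
      (nhdsWithin 0 (Set.Ioi 0)) (nhds (Real.pi * f x)) := by
    have := tendsto_integral_filter_of_dominated_convergence
      (μ := (volume : Measure ℝ)) (F := fun (ε : ℝ) (s : ℝ) => f (x + ε * s) * (1 + s ^ 2)⁻¹)
      (f := fun s : ℝ => f x * (1 + s ^ 2)⁻¹)
      (bound := fun s : ℝ => C * (1 + s ^ 2)⁻¹)
      (Filter.Eventually.of_forall (fun ε =>
        ((hf.comp (continuous_const.add (continuous_const.mul continuous_id))).mul
          ((continuous_const.add (continuous_pow 2)).inv₀
            (fun s => (by positivity : (1:ℝ) + s ^ 2 ≠ 0)))).aestronglyMeasurable))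
      (Filter.Eventually.of_forall (fun ε => Filter.Eventually.of_forall (fun s => by
        have h1 : 0 < 1 + s ^ 2 := by positivity
        rw [norm_mul, Real.norm_eq_abs, Real.norm_eq_abs, abs_of_pos (inv_pos.mpr h1)]
        exact mul_le_mul_of_nonneg_right (hC _) (inv_nonneg.mpr h1.le))))
      hbound
      (Filter.Eventually.of_forall (fun s => by
        have : Tendsto (fun ε : ℝ => f (x + ε * s)) (nhdsWithin 0 (Set.Ioi 0)) (nhds (f x)) := by
          have hc : Tendsto (fun ε : ℝ => x + ε * s) (nhds 0) (nhds x) := by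
            have hcc : Continuous fun ε : ℝ => x + ε * s := by continuity
            simpa using hcc.tendsto 0
          exact (hf.tendsto x).comp (hc.mono_left nhdsWithin_le_nhds)
        exact this.mul tendsto_const_nhds))
    convert this using 2
    rw [integral_const_mul, integral_univ_inv_one_add_sq, mul_comm]
  have heq : ∀ᶠ (ε : ℝ) in nhdsWithin (0:ℝ) (Set.Ioi 0),
      -(1 / Real.pi) *
          (∫ t : ℝ, ((f t : ℂ)) / (((x : ℂ) + ε * Complex.I) - (t : ℂ))).im
        = (1 / Real.pi) * ∫ s : ℝ, f (x + ε * s) * (1 + s ^ 2)⁻¹ :=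
    eventually_nhdsWithin_of_forall (fun ε hε => stieltjes_key f hf hsupp x hε)
  have : Tendsto (fun ε : ℝ => (1 / Real.pi) * ∫ s : ℝ, f (x + ε * s) * (1 + s ^ 2)⁻¹)
      (nhdsWithin 0 (Set.Ioi 0)) (nhds ((1 / Real.pi) * (Real.pi * f x))) :=
    hmain.const_mul _
  have hval : (1 / Real.pi) * (Real.pi * f x) = f x := by
    field_simp
  rw [hval] at this
  exact this.congr' (heq.mono fun _ h => h.symm)
end
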